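/- arXiv:1901.01598 — 10 statements merged into one kernel-verified Lean document; each statement's English description precedes it below -/
import Mathlib

section
/- Suppose the learning rate stagnates, i.e. there exists a real τ > 0 such that 1 - f(l) ≥ τ for all l ∈ ℕ. Then for all integers k ≥ 1 and T ≥ k, the attacker's winning probability satisfies w(k,T) ≥ 1 - k·(1 - τ·p)^⌊T/k⌋. -/
/-- **Stagnating learning rate (Theorem 1).**
If the defender's learning rate stagnates, i.e. `1 - f l ≥ τ` for some `τ > 0`,
then the attacker's winning probability `w(k,T) = W 0 0 T` satisfies
`w(k,T) ≥ 1 - k * (1 - τ*p)^⌊T/k⌋` for all integers `k ≥ 1`, `T ≥ k`. -/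
theorem stagnating_learning_rate
    (p h γ : ℝ) (hp : 0 < p) (hh : 0 ≤ h) (hph : p + h ≤ 1)
    (hγ0 : 0 < γ) (hγ1 : γ < 1)
    (f : ℕ → ℝ) (hf0 : ∀ l, 0 ≤ f l) (hf1 : ∀ l, f l ≤ 1)
    (m1 m2 m3 m4 : ℕ → ℝ)
    (hm1 : ∀ l, m1 l = f l * (1 - γ) + (1 - f l) * (1 - γ) * (1 - p - h))
    (hm2 : ∀ l, m2 l = (1 - f l) * (1 - γ) * p)
    (hm3 : ∀ l, m3 l = (1 - f l) * γ * p)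
    (hm4 : ∀ l, m4 l = (1 - f l) * (1 - γ) * h + f l * γ + (1 - f l) * γ * (1 - p))
    (k : ℕ) (hk : 1 ≤ k)
    (W : ℕ → ℕ → ℕ → ℝ)
    (hWwin : ∀ i l t, k ≤ i → W i l t = 1)
    (hWzero : ∀ i l, i < k → W i l 0 = 0)
    (hWrec : ∀ i l t, i < k →
      W i l (t + 1) = m1 l * W i l t + m2 l * W (i + 1) l t
        + m3 l * W (i + 1) (l + 1) t + m4 l * W i (l + 1) t)
    (τ : ℝ) (hτ : 0 < τ) (hstag : ∀ l, τ ≤ 1 - f l)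
    (T : ℕ) (hT : k ≤ T) :
    1 - (k : ℝ) * (1 - τ * p) ^ (T / k) ≤ W 0 0 T := by
  set q : ℝ := 1 - τ * p with hq
  set M : ℕ := T / k with hMdef
  have hp1 : p ≤ 1 := by linarith
  have hγle : (0:ℝ) ≤ 1 - γ := by linarith
  have hfl : ∀ l, (0:ℝ) ≤ 1 - f l := fun l => by linarith [hf1 l]
  have hτ1 : τ ≤ 1 := by linarith [hstag 0, hf0 0]
  have hq0 : 0 ≤ q := by nlinarith
  have hq1 : q ≤ 1 := by nlinarith
  have hph' : (0:ℝ) ≤ 1 - p - h := by linarith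
  have hm1nn : ∀ l, 0 ≤ m1 l := fun l => by
    rw [hm1 l]
    have a := mul_nonneg (hf0 l) hγle
    have b := mul_nonneg (mul_nonneg (hfl l) hγle) hph'
    linarith
  have hm2nn : ∀ l, 0 ≤ m2 l := fun l => by
    rw [hm2 l]
    exact mul_nonneg (mul_nonneg (hfl l) hγle) hp.le
  have hm3nn : ∀ l, 0 ≤ m3 l := fun l => by
    rw [hm3 l]
    exact mul_nonneg (mul_nonneg (hfl l) hγ0.le) hp.le
  have hm4nn : ∀ l, 0 ≤ m4 l := fun l => by
    rw [hm4 l]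
    have a := mul_nonneg (mul_nonneg (hfl l) hγle) hh
    have b := mul_nonneg (hf0 l) hγ0.le
    have c := mul_nonneg (mul_nonneg (hfl l) hγ0.le) (by linarith : (0:ℝ) ≤ 1 - p)
    linarith
  have hsum : ∀ l, m1 l + m2 l + m3 l + m4 l = 1 := fun l => by
    rw [hm1 l, hm2 l, hm3 l, hm4 l]; ring
  have hm23 : ∀ l, m2 l + m3 l = (1 - f l) * p := fun l => by
    rw [hm2 l, hm3 l]; ring
  have hmq : ∀ l, m1 l + m4 l ≤ q := fun l => by
    have h1 := hsum l
    have h2 := hm23 l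
    have h3 : τ * p ≤ (1 - f l) * p :=
      mul_le_mul_of_nonneg_right (hstag l) hp.le
    rw [hq]; linarith
  -- W is nonnegative
  have hWnn : ∀ t i l, 0 ≤ W i l t := by
    intro t
    induction t with
    | zero =>
      intro i l
      rcases lt_or_ge i k with hik | hik
      · rw [hWzero i l hik]
      · rw [hWwin i l 0 hik]; norm_num
    | succ t ih =>
      intro i l
      rcases lt_or_ge i k with hik | hik
      · rw [hWrec i l t hik]
        have a := mul_nonneg (hm1nn l) (ih i l)
        have b := mul_nonneg (hm2nn l) (ih (i+1) l)
        have c := mul_nonneg (hm3nn l) (ih (i+1) (l+1))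
        have d := mul_nonneg (hm4nn l) (ih i (l+1))
        linarith
      · rw [hWwin i (l) (t+1) hik]; norm_num
  have hM1 : 1 ≤ M := (Nat.one_le_div_iff (by omega : 0 < k)).mpr hT
  -- key induction
  have key : ∀ t i l, i < k → (k - 1 - i) * M ≤ t →
      1 - ((k - 1 - i : ℕ) : ℝ) * q ^ M - q ^ (t - (k - 1 - i) * M) ≤ W i l t := by
    intro t
    induction t with
    | zero =>
      intro i l hik hle
      have hc : k - 1 - i = 0 := by
        by_contra hc
        have : 1 ≤ k - 1 - i := by omega
        have := Nat.mul_le_mul this (le_refl M)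
        omega
      rw [hc, hWzero i l hik]
      simp
    | succ t ih =>
      intro i l hik hle
      set c : ℕ := k - 1 - i with hcdef
      rcases le_or_gt (c * M) t with hA | hB
      · -- main case
        have hQmnn : (0:ℝ) ≤ q ^ M := pow_nonneg hq0 M
        have hQtnn : (0:ℝ) ≤ q ^ (t - c * M) := pow_nonneg hq0 _
        set C : ℝ := ((c : ℕ) : ℝ) with hCdef
        set Qm : ℝ := q ^ M with hQm
        set Qt : ℝ := q ^ (t - c * M) with hQt
        have hB1a : 1 - C * Qm - Qt ≤ W i l t := ih i l hik hA
        have hB1b : 1 - C * Qm - Qt ≤ W i (l+1) t := ih i (l+1) hik hA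
        have hB2 : ∀ l', 1 - C * Qm ≤ W (i+1) l' t := by
          intro l'
          rcases Nat.eq_zero_or_pos c with hc0 | hc1
          · rw [hWwin (i+1) l' t (by omega)]
            simp [hCdef, hc0]
          · have hik' : i + 1 < k := by omega
            have hc' : k - 1 - (i + 1) = c - 1 := by omega
            have hle' : (c - 1) * M ≤ t :=
              le_trans (Nat.mul_le_mul_right M (by omega)) hA
            have hIH := ih (i+1) l' hik' (by rw [hc']; exact hle')
            rw [hc'] at hIH
            have hsum' : (c - 1) * M + M = c * M := by
              have hcc : c - 1 + 1 = c := by omega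
              calc (c - 1) * M + M = (c - 1 + 1) * M := (Nat.succ_mul _ _).symm
                _ = c * M := by rw [hcc]
            have hMle : M ≤ t - (c - 1) * M :=
              Nat.le_sub_of_add_le (by rw [add_comm, hsum']; exact hA)
            have hpow : q ^ (t - (c - 1) * M) ≤ q ^ M :=
              pow_le_pow_of_le_one hq0 hq1 hMle
            have hcast : ((c - 1 : ℕ) : ℝ) = C - 1 := by
              rw [hCdef, Nat.cast_sub hc1, Nat.cast_one]
            rw [hcast] at hIH
            linarith
        have hE := hWrec i l t hik
        have hexp : t + 1 - c * M = (t - c * M) + 1 := by omega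
        rw [hexp, pow_succ]
        have T1 := mul_le_mul_of_nonneg_left hB1a (hm1nn l)
        have T2 := mul_le_mul_of_nonneg_left (hB2 l) (hm2nn l)
        have T3 := mul_le_mul_of_nonneg_left (hB2 (l+1)) (hm3nn l)
        have T4 := mul_le_mul_of_nonneg_left hB1b (hm4nn l)
        have T5 : (m1 l + m4 l) * Qt ≤ q * Qt :=
          mul_le_mul_of_nonneg_right (hmq l) hQtnn
        have T6 : (m1 l + m2 l + m3 l + m4 l) * (C * Qm) = C * Qm := by
          rw [hsum l]; ring
        rw [hE]
        have hs := hsum l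
        nlinarith [T1, T2, T3, T4, T5, T6, hs]
      · -- boundary case: t + 1 = c * M
        have hexp : t + 1 - c * M = 0 := by omega
        rw [hexp, pow_zero]
        have hCnn : (0:ℝ) ≤ ((c : ℕ) : ℝ) := Nat.cast_nonneg c
        have hQmnn : (0:ℝ) ≤ q ^ M := pow_nonneg hq0 M
        have := hWnn (t+1) i l
        nlinarith
  -- conclude
  have hk0 : 0 < k := by omega
  have hkM : k * M ≤ T := by
    rw [hMdef, mul_comm]; exact Nat.div_mul_le_self T k
  have hsum' : (k - 1) * M + M = k * M := by
    cases k with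
    | zero => omega
    | succ n => simp [Nat.succ_mul]
  have hle1 : (k - 1) * M ≤ T := by omega
  have hfin := key T 0 0 hk0 (by simpa using hle1)
  simp only [Nat.sub_zero] at hfin
  have hMle : M ≤ T - (k - 1) * M :=
    Nat.le_sub_of_add_le (by rw [add_comm, hsum']; exact hkM)
  have hpow : q ^ (T - (k - 1) * M) ≤ q ^ M :=
    pow_le_pow_of_le_one hq0 hq1 hMle
  have hcast : ((k - 1 : ℕ) : ℝ) = (k : ℝ) - 1 := by
    rw [Nat.cast_sub hk, Nat.cast_one]
  rw [hcast] at hfin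
  linarith
end

section
/- Let q be a real with 0 ≤ q < 1 and let k ≥ 1 and T ≥ k be integers. Then the sum over all tuples (f_0,…,f_{k-1}) ∈ ℕ^k with f_0 + ⋯ + f_{k-1} ≤ T - k of q^{f_0+⋯+f_{k-1}}·(1-q)^k is at least (1 - q^⌊T/k⌋)^k, which in turn is at least 1 - k·q^⌊T/k⌋. -/
/-- **Key estimate for the stagnating learning rate theorem.**
For `0 ≤ q < 1` and integers `k ≥ 1`, `T ≥ k`, the sum over all tuples
`(f_0, …, f_{k-1}) ∈ ℕ^k` with `f_0 + ⋯ + f_{k-1} ≤ T - k` of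
`q^(f_0+⋯+f_{k-1}) * (1-q)^k` is at least `(1 - q^⌊T/k⌋)^k`,
which in turn is at least `1 - k * q^⌊T/k⌋`. -/
theorem reduced_chain_reach_probability
    (q : ℝ) (hq0 : 0 ≤ q) (hq1 : q < 1) (k T : ℕ) (hk : 1 ≤ k) (hT : k ≤ T) :
    (1 - q ^ (T / k)) ^ k ≤
      ∑ S ∈ Finset.range (T - k + 1), ∑ f ∈ Finset.Nat.antidiagonalTuple k S,
        q ^ (∑ i, f i) * (1 - q) ^ k ∧
    1 - (k : ℝ) * q ^ (T / k) ≤ (1 - q ^ (T / k)) ^ k := by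
  set m := T / k with hm
  have hm1 : 1 ≤ m := (Nat.one_le_div_iff (by omega)).mpr hT
  have hqm0 : 0 ≤ q ^ m := pow_nonneg hq0 m
  have hqm1 : q ^ m ≤ 1 := pow_le_one₀ hq0 hq1.le
  constructor
  · -- the big sum part
    have hdisj : (↑(Finset.range (T - k + 1)) : Set ℕ).PairwiseDisjoint
        (fun S => Finset.Nat.antidiagonalTuple k S) := by
      intro a _ b _ hab
      refine Finset.disjoint_left.mpr fun f hfa hfb => hab ?_
      rw [Finset.Nat.mem_antidiagonalTuple] at hfa hfb
      omega
    rw [← Finset.sum_biUnion hdisj]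
    have hsub : Fintype.piFinset (fun _ : Fin k => Finset.range m) ⊆
        (Finset.range (T - k + 1)).biUnion (fun S => Finset.Nat.antidiagonalTuple k S) := by
      intro f hf
      simp only [Fintype.mem_piFinset, Finset.mem_range] at hf
      refine Finset.mem_biUnion.mpr ⟨∑ i, f i, ?_, ?_⟩
      · have h2 : ∑ i, f i ≤ k * (m - 1) := by
          calc ∑ i, f i ≤ ∑ _i : Fin k, (m - 1) :=
                Finset.sum_le_sum fun i _ => Nat.le_sub_one_of_lt (hf i)
          _ = k * (m - 1) := by simp [Finset.sum_const, mul_comm]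
        have h3 : m * k ≤ T := Nat.div_mul_le_self T k
        have h5 : k * (m - 1) ≤ T - k := by
          have h4 : k * (m - 1) + k ≤ T := by
            calc k * (m - 1) + k = k * (m - 1 + 1) := by ring
            _ = k * m := by rw [Nat.sub_add_cancel hm1]
            _ = m * k := mul_comm _ _
            _ ≤ T := h3
          omega
        simp only [Finset.mem_range]
        omega
      · rw [Finset.Nat.mem_antidiagonalTuple]
    have hle : ∑ f ∈ Fintype.piFinset (fun _ : Fin k => Finset.range m),
        q ^ (∑ i, f i) * (1 - q) ^ k ≤
        ∑ f ∈ (Finset.range (T - k + 1)).biUnion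
          (fun S => Finset.Nat.antidiagonalTuple k S),
          q ^ (∑ i, f i) * (1 - q) ^ k := by
      refine Finset.sum_le_sum_of_subset_of_nonneg hsub fun f _ _ => ?_
      exact mul_nonneg (pow_nonneg hq0 _) (pow_nonneg (by linarith) _)
    refine le_trans (le_of_eq ?_) hle
    have key : ∑ f ∈ Fintype.piFinset (fun _ : Fin k => Finset.range m),
        q ^ (∑ i, f i) * (1 - q) ^ k
        = ∏ _i : Fin k, ∑ j ∈ Finset.range m, q ^ j * (1 - q) := by
      rw [Finset.prod_univ_sum]
      refine Finset.sum_congr rfl fun f _ => ?_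
      rw [Finset.prod_mul_distrib]
      simp [Finset.prod_pow_eq_pow_sum]
    have hgeom : ∑ j ∈ Finset.range m, q ^ j * (1 - q) = 1 - q ^ m := by
      have := geom_sum_mul q m
      rw [← Finset.sum_mul]
      nlinarith [this]
    rw [key, hgeom, Finset.prod_const, Finset.card_univ, Fintype.card_fin]
  · have h := one_add_mul_le_pow (a := -(q ^ m)) (by linarith) k
    calc 1 - (k : ℝ) * q ^ m = 1 + (k : ℝ) * (-(q ^ m)) := by ring
    _ ≤ (1 + -(q ^ m)) ^ k := h
    _ = (1 - q ^ m) ^ k := by ring_nf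
end

section
/- For all integers k ≥ 1 and T ≥ 1, the winning probability satisfies the closed form: w(k,T) = Σ_{L=0}^{T-1} Σ_{B=0}^{min(L,k-1)} [(m2(L)+m3(L))/(1-m1(L))] · Σ_{b=(b_1,…,b_L)∈{0,1}^L with b_1+⋯+b_L=B} Σ_{g=(g_0,…,g_L) with every g_l ≥ 1 and (g_0-1)+⋯+(g_L-1)=(k-1)-B} [∏_{l=0}^{L-1} ( b_{l+1}·m3(l)/(1-m1(l)) + (1-b_{l+1})·m4(l)/(1-m1(l)) )] · [∏_{l=0}^{L} ( m2(l)/(1-m1(l)) )^{g_l-1}] · Σ_{T'=0}^{(T-1)-((k-1)+L-B)} Σ_{t=(t_0,…,t_L)∈ℕ^{L+1} with t_0+⋯+t_L=T'} ∏_{l=0}^{L} C(t_l+g_l-1, t_l)·m1(l)^{t_l}·(1-m1(l))^{g_l}, where C(·,·) denotes the binomial coefficient. -/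
/-!
Write `j = k - i` for the number of increments of `i` still needed. The closed form, with `k`
replaced by `j` and started at level `l`, sums over the paths of the chain that win within `T`
steps: a path visits the levels `l, …, l + L`, stays in `g_r` states at level `l + r`, moving
between them by `g_r - 1` horizontal `m2`-moves, leaves each level by a diagonal (`m3`, `b_r = 1`)
or vertical (`m4`, `b_r = 0`) move, and ends with a winning `m2`- or `m3`-move. Given the moves,
the self-loop counts at level `l + r` are negative binomial with parameters `g_r` and `m1 (l + r)`.
Splitting this sum by the first step (a self-loop, a horizontal move, or, when the current state
is the last one visited at level `l`, the move that leaves it) shows that it obeys the first-step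
recurrence of `W`, with the same initial values, so it equals `W` by induction on `T`.
-/

open Finset Finset.Nat

namespace Finset.Nat

theorem sum_antidiagonalTuple_succ {M : Type*} [AddCommMonoid M] (n N : ℕ)
    (f : (Fin (n + 1) → ℕ) → M) :
    ∑ t ∈ antidiagonalTuple (n + 1) N, f t =
      ∑ p ∈ antidiagonal N, ∑ v ∈ antidiagonalTuple n p.2, f (Fin.cons p.1 v) := by
  rw [sum_sigma']
  refine sum_nbij' (fun t => ⟨(t 0, ∑ i, Fin.tail t i), Fin.tail t⟩)
    (fun x => Fin.cons x.1.1 x.2) ?_ ?_ (fun t _ => Fin.cons_self_tail t) ?_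
    (fun t _ => by rw [Fin.cons_self_tail])
  · intro t ht
    simp only [Finset.mem_sigma, HasAntidiagonal.mem_antidiagonal,
      mem_antidiagonalTuple] at *
    simp [← ht, Fin.sum_univ_succ, Fin.tail]
  · rintro ⟨⟨a, b⟩, v⟩ hx
    simp only [Finset.mem_sigma, HasAntidiagonal.mem_antidiagonal,
      mem_antidiagonalTuple] at *
    rw [Fin.sum_cons, hx.2, hx.1]
  · rintro ⟨⟨a, b⟩, v⟩ hx
    simp only [Finset.mem_sigma, mem_antidiagonalTuple] at hx
    simp [hx.2]

theorem sum_filter_antidiagonalTuple_succ {M : Type*} [AddCommMonoid M] (P : ℕ → Prop)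
    [DecidablePred P] (n N : ℕ) (f : (Fin (n + 1) → ℕ) → M) :
    ∑ t ∈ (antidiagonalTuple (n + 1) N).filter (fun t => ∀ r, P (t r)), f t =
      ∑ p ∈ antidiagonal N, if P p.1 then
        ∑ v ∈ (antidiagonalTuple n p.2).filter (fun v => ∀ r, P (v r)), f (Fin.cons p.1 v)
      else 0 := by
  rw [sum_filter, sum_antidiagonalTuple_succ]
  refine sum_congr rfl fun p _ => ?_
  simp only [Fin.forall_fin_succ, Fin.cons_zero, Fin.cons_succ, sum_filter]
  split_ifs with hp <;> simp [hp]

end Finset.Nat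

namespace WinningProbability

noncomputable section

def positiveTuples (n N : ℕ) : Finset (Fin n → ℕ) :=
  (antidiagonalTuple n N).filter fun g => ∀ r, 1 ≤ g r

def binaryTuples (L B : ℕ) : Finset (Fin L → ℕ) :=
  (antidiagonalTuple L B).filter fun b => ∀ r, b r ≤ 1

theorem positiveTuples_eq_empty {n N : ℕ} (h : N < n) : positiveTuples n N = ∅ := by
  refine eq_empty_of_forall_notMem fun g hg => ?_
  rw [positiveTuples, mem_filter, mem_antidiagonalTuple] at hg
  have : n ≤ ∑ r, g r := by simpa using card_nsmul_le_sum univ g 1 fun r _ => hg.2 r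
  omega

theorem binaryTuples_eq_empty {L B : ℕ} (h : L < B) : binaryTuples L B = ∅ := by
  refine eq_empty_of_forall_notMem fun b hb => ?_
  rw [binaryTuples, mem_filter, mem_antidiagonalTuple] at hb
  have : ∑ r, b r ≤ L := by simpa using sum_le_card_nsmul univ b 1 fun r _ => hb.2 r
  omega

theorem positiveTuples_zero_zero : positiveTuples 0 0 = {![]} := by
  simp [positiveTuples]

theorem positiveTuples_zero_succ (N : ℕ) : positiveTuples 0 (N + 1) = ∅ := by
  simp [positiveTuples]

theorem binaryTuples_zero_zero : binaryTuples 0 0 = {![]} := by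
  simp [binaryTuples]

theorem sum_positiveTuples_succ_succ {M : Type*} [AddCommMonoid M] (n N : ℕ)
    (f : (Fin (n + 1) → ℕ) → M) :
    ∑ g ∈ positiveTuples (n + 1) (N + 1), f g =
      ∑ v ∈ positiveTuples n N, f (Fin.cons 1 v) +
        ∑ g ∈ positiveTuples (n + 1) N, f (Fin.cons (g 0 + 1) (Fin.tail g)) := by
  simp only [positiveTuples, sum_filter_antidiagonalTuple_succ (fun x => 1 ≤ x),
    sum_antidiagonal_succ, sum_antidiagonal_eq_sum_range_succ_mk, sum_range_succ',
    Fin.cons_zero, Fin.tail_cons]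
  simp [add_comm]

theorem sum_binaryTuples_succ_zero {M : Type*} [AddCommMonoid M] (L : ℕ)
    (f : (Fin (L + 1) → ℕ) → M) :
    ∑ b ∈ binaryTuples (L + 1) 0, f b = ∑ v ∈ binaryTuples L 0, f (Fin.cons 0 v) := by
  simp [binaryTuples, sum_filter_antidiagonalTuple_succ (fun x => x ≤ 1)]

theorem sum_binaryTuples_succ_succ {M : Type*} [AddCommMonoid M] (L B : ℕ)
    (f : (Fin (L + 1) → ℕ) → M) :
    ∑ b ∈ binaryTuples (L + 1) (B + 1), f b =
      ∑ v ∈ binaryTuples L (B + 1), f (Fin.cons 0 v) +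
        ∑ v ∈ binaryTuples L B, f (Fin.cons 1 v) := by
  simp only [binaryTuples, sum_filter_antidiagonalTuple_succ (fun x => x ≤ 1),
    sum_antidiagonal_eq_sum_range_succ_mk, sum_range_succ']
  simp [add_comm]

/-- Probability that `g` visits to a state with self-loop probability `a` produce `t` self-loops
in total; for `g = 0` the truncated subtraction makes it the point mass at `t = 0`. -/
def negBinomial (a : ℝ) (g t : ℕ) : ℝ := ((t + g - 1).choose t : ℝ) * a ^ t * (1 - a) ^ g

theorem negBinomial_zero_left (a : ℝ) (t : ℕ) : negBinomial a 0 t = if t = 0 then 1 else 0 := by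
  cases t <;> simp [negBinomial]

theorem negBinomial_succ_zero (a : ℝ) (g : ℕ) :
    negBinomial a (g + 1) 0 = (1 - a) * negBinomial a g 0 := by
  simp [negBinomial, pow_succ]
  ring

theorem negBinomial_succ_succ (a : ℝ) (g t : ℕ) :
    negBinomial a (g + 1) (t + 1) =
      a * negBinomial a (g + 1) t + (1 - a) * negBinomial a g (t + 1) := by
  rcases g with _ | g
  · simp [negBinomial]
    ring
  · simp only [negBinomial, show t + 1 + (g + 1 + 1) - 1 = t + g + 1 + 1 by omega,
      show t + (g + 1 + 1) - 1 = t + g + 1 by omega, show t + 1 + (g + 1) - 1 = t + g + 1 by omega,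
      Nat.choose_succ_succ (t + g + 1) t, Nat.cast_add]
    ring

theorem prod_univ_succ_add {M : Type*} [CommMonoid M] {n : ℕ} (F : ℕ → Fin (n + 1) → M)
    (l : ℕ) :
    ∏ r : Fin (n + 1), F (l + r) r = F l 0 * ∏ r : Fin n, F (l + 1 + r) r.succ := by
  rw [Fin.prod_univ_succ]
  simp [add_assoc, add_comm 1]

variable (m1 m2 m3 m4 : ℕ → ℝ)

def holdingProb (l : ℕ) {n : ℕ} (g : Fin n → ℕ) (s : ℕ) : ℝ :=
  ∑ t ∈ antidiagonalTuple n s, ∏ r : Fin n, negBinomial (m1 (l + r)) (g r) (t r)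

def holdingProbLT (l : ℕ) {n : ℕ} (g : Fin n → ℕ) (M : ℕ) : ℝ :=
  ∑ s ∈ range M, holdingProb m1 l g s

theorem holdingProb_cons (l a : ℕ) {n : ℕ} (v : Fin n → ℕ) (s : ℕ) :
    holdingProb m1 l (Fin.cons a v : Fin (n + 1) → ℕ) s =
      ∑ p ∈ antidiagonal s, negBinomial (m1 l) a p.1 * holdingProb m1 (l + 1) v p.2 := by
  simp only [holdingProb, sum_antidiagonalTuple_succ, mul_sum]
  refine sum_congr rfl fun p _ => sum_congr rfl fun t _ => ?_
  rw [prod_univ_succ_add (fun x r => negBinomial (m1 x) ((Fin.cons a v : Fin (n + 1) → ℕ) r)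
    ((Fin.cons p.1 t : Fin (n + 1) → ℕ) r)) l]
  simp

theorem holdingProb_cons_zero (l : ℕ) {n : ℕ} (v : Fin n → ℕ) (s : ℕ) :
    holdingProb m1 l (Fin.cons 0 v : Fin (n + 1) → ℕ) s = holdingProb m1 (l + 1) v s := by
  simp [holdingProb_cons, negBinomial_zero_left, sum_antidiagonal_eq_sum_range_succ_mk]

theorem holdingProb_cons_succ_zero (l a : ℕ) {n : ℕ} (v : Fin n → ℕ) :
    holdingProb m1 l (Fin.cons (a + 1) v : Fin (n + 1) → ℕ) 0 =
      (1 - m1 l) * holdingProb m1 l (Fin.cons a v : Fin (n + 1) → ℕ) 0 := by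
  simp [holdingProb_cons, negBinomial_succ_zero, mul_assoc]

theorem holdingProb_cons_succ_succ (l a : ℕ) {n : ℕ} (v : Fin n → ℕ) (s : ℕ) :
    holdingProb m1 l (Fin.cons (a + 1) v : Fin (n + 1) → ℕ) (s + 1) =
      m1 l * holdingProb m1 l (Fin.cons (a + 1) v : Fin (n + 1) → ℕ) s +
        (1 - m1 l) * holdingProb m1 l (Fin.cons a v : Fin (n + 1) → ℕ) (s + 1) := by
  simp only [holdingProb_cons, sum_antidiagonal_succ, negBinomial_succ_zero,
    negBinomial_succ_succ, mul_add, add_mul, sum_add_distrib, mul_sum, mul_assoc]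
  ring

theorem holdingProbLT_cons_succ (l a : ℕ) {n : ℕ} (v : Fin n → ℕ) (M : ℕ) :
    holdingProbLT m1 l (Fin.cons (a + 1) v : Fin (n + 1) → ℕ) (M + 1) =
      m1 l * holdingProbLT m1 l (Fin.cons (a + 1) v : Fin (n + 1) → ℕ) M +
        (1 - m1 l) * holdingProbLT m1 l (Fin.cons a v : Fin (n + 1) → ℕ) (M + 1) := by
  simp only [holdingProbLT, sum_range_succ', holdingProb_cons_succ_succ, holdingProb_cons_succ_zero,
    sum_add_distrib, mul_add, mul_sum]
  ring

theorem holdingProbLT_cons_zero (l : ℕ) {n : ℕ} (v : Fin n → ℕ) (M : ℕ) :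
    holdingProbLT m1 l (Fin.cons 0 v : Fin (n + 1) → ℕ) M = holdingProbLT m1 (l + 1) v M := by
  simp [holdingProbLT, holdingProb_cons_zero]

def jumpProb (m : ℕ → ℝ) (l : ℕ) : ℝ := m l / (1 - m1 l)

theorem one_sub_mul_jumpProb {l : ℕ} (h : 1 - m1 l ≠ 0) (m : ℕ → ℝ) :
    (1 - m1 l) * jumpProb m1 m l = m l :=
  mul_div_cancel₀ _ h

def horizontalWeight (l : ℕ) {n : ℕ} (g : Fin n → ℕ) : ℝ :=
  ∏ r : Fin n, jumpProb m1 m2 (l + r) ^ (g r - 1)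

def levelChangeWeight (l : ℕ) {L : ℕ} (b : Fin L → ℕ) : ℝ :=
  ∏ r : Fin L, ((b r : ℝ) * jumpProb m1 m3 (l + r) + (1 - (b r : ℝ)) * jumpProb m1 m4 (l + r))

theorem horizontalWeight_cons (l a : ℕ) {n : ℕ} (v : Fin n → ℕ) :
    horizontalWeight m1 m2 l (Fin.cons a v : Fin (n + 1) → ℕ) =
      jumpProb m1 m2 l ^ (a - 1) * horizontalWeight m1 m2 (l + 1) v := by
  rw [horizontalWeight, prod_univ_succ_add
    (fun x r => jumpProb m1 m2 x ^ ((Fin.cons a v : Fin (n + 1) → ℕ) r - 1)) l]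
  simp [horizontalWeight]

theorem levelChangeWeight_cons (l x : ℕ) {L : ℕ} (v : Fin L → ℕ) :
    levelChangeWeight m1 m3 m4 l (Fin.cons x v : Fin (L + 1) → ℕ) =
      ((x : ℝ) * jumpProb m1 m3 l + (1 - (x : ℝ)) * jumpProb m1 m4 l) *
        levelChangeWeight m1 m3 m4 (l + 1) v := by
  rw [levelChangeWeight, prod_univ_succ_add (fun y r =>
    (((Fin.cons x v : Fin (L + 1) → ℕ) r : ℝ) * jumpProb m1 m3 y +
      (1 - ((Fin.cons x v : Fin (L + 1) → ℕ) r : ℝ)) * jumpProb m1 m4 y)) l]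
  simp [levelChangeWeight]

def levelChangeSum (l L B : ℕ) : ℝ := ∑ b ∈ binaryTuples L B, levelChangeWeight m1 m3 m4 l b

theorem levelChangeSum_zero_left (l B : ℕ) :
    levelChangeSum m1 m3 m4 l 0 B = if B = 0 then 1 else 0 := by
  rcases B with _ | B
  · simp [levelChangeSum, binaryTuples_zero_zero, levelChangeWeight]
  · simp [levelChangeSum, binaryTuples_eq_empty]

theorem levelChangeSum_eq_zero_of_lt (l : ℕ) {L B : ℕ} (h : L < B) :
    levelChangeSum m1 m3 m4 l L B = 0 := by
  simp [levelChangeSum, binaryTuples_eq_empty h]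

theorem levelChangeSum_succ_zero (l L : ℕ) :
    levelChangeSum m1 m3 m4 l (L + 1) 0 =
      jumpProb m1 m4 l * levelChangeSum m1 m3 m4 (l + 1) L 0 := by
  simp [levelChangeSum, sum_binaryTuples_succ_zero, levelChangeWeight_cons, mul_sum]

theorem levelChangeSum_succ_succ (l L B : ℕ) :
    levelChangeSum m1 m3 m4 l (L + 1) (B + 1) =
      jumpProb m1 m4 l * levelChangeSum m1 m3 m4 (l + 1) L (B + 1) +
        jumpProb m1 m3 l * levelChangeSum m1 m3 m4 (l + 1) L B := by
  simp [levelChangeSum, sum_binaryTuples_succ_succ, levelChangeWeight_cons, mul_sum]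

theorem sum_levelChangeSum_succ_mul (l L J : ℕ) (x : ℕ → ℝ) :
    ∑ B ∈ range (J + 1), levelChangeSum m1 m3 m4 l (L + 1) B * x B =
      jumpProb m1 m4 l * ∑ B ∈ range (J + 1), levelChangeSum m1 m3 m4 (l + 1) L B * x B +
        jumpProb m1 m3 l * ∑ B ∈ range J, levelChangeSum m1 m3 m4 (l + 1) L B * x (B + 1) := by
  induction J with
  | zero => simp [levelChangeSum_succ_zero, mul_assoc]
  | succ J ih =>
    rw [sum_range_succ (fun B => levelChangeSum m1 m3 m4 l (L + 1) B * x B), ih,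
      sum_range_succ (fun B => levelChangeSum m1 m3 m4 (l + 1) L B * x B) (J + 1),
      sum_range_succ (fun B => levelChangeSum m1 m3 m4 (l + 1) L B * x (B + 1)) J,
      levelChangeSum_succ_succ]
    ring

/-- The `N` states of the runs are left by `N` moves, so at most `T - N` self-loops fit into
`T` steps. -/
def runsWeight (l n N T : ℕ) : ℝ :=
  ∑ g ∈ positiveTuples n N, horizontalWeight m1 m2 l g * holdingProbLT m1 l g (T + 1 - N)

theorem runsWeight_eq_zero_of_lt (l n : ℕ) {N T : ℕ} (h : T < N) :
    runsWeight m1 m2 l n N T = 0 := by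
  simp [runsWeight, holdingProbLT, show T + 1 - N = 0 by omega]

theorem runsWeight_eq_zero_of_lt_levels (l T : ℕ) {n N : ℕ} (h : N < n) :
    runsWeight m1 m2 l n N T = 0 := by
  simp [runsWeight, positiveTuples_eq_empty h]

theorem runsWeight_zero_left (l N T : ℕ) : runsWeight m1 m2 l 0 N T = if N = 0 then 1 else 0 := by
  rcases N with _ | N
  · simp [runsWeight, positiveTuples_zero_zero, horizontalWeight, holdingProbLT, holdingProb,
      sum_range_succ']
  · simp [runsWeight, positiveTuples_zero_succ]

theorem runsWeight_succ {l : ℕ} (h : 1 - m1 l ≠ 0) (n N T : ℕ) :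
    runsWeight m1 m2 l (n + 1) (N + 1) (T + 1) =
      m1 l * runsWeight m1 m2 l (n + 1) (N + 1) T + m2 l * runsWeight m1 m2 l (n + 1) N T +
        (1 - m1 l) * runsWeight m1 m2 (l + 1) n N T := by
  rcases lt_or_ge T N with hTN | hNT
  · simp [runsWeight_eq_zero_of_lt, hTN, hTN.trans (Nat.lt_succ_self N)]
  obtain ⟨M, rfl⟩ := Nat.exists_eq_add_of_le hNT
  simp only [runsWeight, show N + M + 1 + 1 - (N + 1) = M + 1 by omega,
    show N + M + 1 - (N + 1) = M by omega, show N + M + 1 - N = M + 1 by omega]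
  rw [sum_positiveTuples_succ_succ, sum_positiveTuples_succ_succ
    (f := fun g => horizontalWeight m1 m2 l g * holdingProbLT m1 l g M)]
  have hone : ∀ v ∈ positiveTuples n N,
      horizontalWeight m1 m2 l (Fin.cons 1 v : Fin (n + 1) → ℕ) *
          holdingProbLT m1 l (Fin.cons 1 v : Fin (n + 1) → ℕ) (M + 1) =
        m1 l * (horizontalWeight m1 m2 l (Fin.cons 1 v : Fin (n + 1) → ℕ) *
            holdingProbLT m1 l (Fin.cons 1 v : Fin (n + 1) → ℕ) M) +
          (1 - m1 l) * (horizontalWeight m1 m2 (l + 1) v * holdingProbLT m1 (l + 1) v (M + 1)) := by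
    intro v _
    rw [holdingProbLT_cons_succ, holdingProbLT_cons_zero, horizontalWeight_cons]
    ring
  have hbump : ∀ g ∈ positiveTuples (n + 1) N,
      horizontalWeight m1 m2 l (Fin.cons (g 0 + 1) (Fin.tail g) : Fin (n + 1) → ℕ) *
          holdingProbLT m1 l (Fin.cons (g 0 + 1) (Fin.tail g) : Fin (n + 1) → ℕ) (M + 1) =
        m1 l * (horizontalWeight m1 m2 l (Fin.cons (g 0 + 1) (Fin.tail g) : Fin (n + 1) → ℕ) *
            holdingProbLT m1 l (Fin.cons (g 0 + 1) (Fin.tail g) : Fin (n + 1) → ℕ) M) +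
          m2 l * (horizontalWeight m1 m2 l g * holdingProbLT m1 l g (M + 1)) := by
    intro g hg
    obtain ⟨a, v, rfl⟩ : ∃ a v, g = (Fin.cons (a + 1) v : Fin (n + 1) → ℕ) :=
      ⟨g 0 - 1, Fin.tail g, by
        rw [Nat.sub_add_cancel ((mem_filter.1 hg).2 0), Fin.cons_self_tail]⟩
    simp only [Fin.cons_zero, Fin.tail_cons]
    rw [holdingProbLT_cons_succ, horizontalWeight_cons, horizontalWeight_cons,
      Nat.add_sub_cancel, Nat.add_sub_cancel, pow_succ, ← one_sub_mul_jumpProb m1 h m2]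
    ring
  rw [sum_congr rfl hone, sum_congr rfl hbump]
  simp only [sum_add_distrib, ← mul_sum]
  ring

/-- `j` increments of the first coordinate are still needed; a path whose last level is `l + L`
and which makes `B` diagonal moves visits `j + L - B` states. -/
def closedForm (j l T : ℕ) : ℝ :=
  ∑ L ∈ range T, jumpProb m1 (m2 + m3) (l + L) *
    ∑ B ∈ range j, levelChangeSum m1 m3 m4 l L B * runsWeight m1 m2 l (L + 1) (j + L - B) T

theorem closedForm_eq_sum_of_le {T n : ℕ} (h : T ≤ n) (j l : ℕ) :
    closedForm m1 m2 m3 m4 j l T =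
      ∑ L ∈ range n, jumpProb m1 (m2 + m3) (l + L) * ∑ B ∈ range j,
        levelChangeSum m1 m3 m4 l L B * runsWeight m1 m2 l (L + 1) (j + L - B) T := by
  refine sum_subset (range_subset_range.2 h) fun L _ hLT => ?_
  rw [mem_range, not_lt] at hLT
  refine mul_eq_zero_of_right _ (sum_eq_zero fun B hB => ?_)
  rw [mem_range] at hB
  rw [runsWeight_eq_zero_of_lt _ _ _ _ (by omega), mul_zero]

theorem sum_horizontal_eq_closedForm (j l T : ℕ) :
    ∑ L ∈ range (T + 1), jumpProb m1 (m2 + m3) (l + L) * ∑ B ∈ range (j + 1),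
        levelChangeSum m1 m3 m4 l L B * runsWeight m1 m2 l (L + 1) (j + L - B) T =
      closedForm m1 m2 m3 m4 j l T := by
  rw [closedForm_eq_sum_of_le m1 m2 m3 m4 T.le_succ]
  refine sum_congr rfl fun L _ => ?_
  rw [sum_range_succ, runsWeight_eq_zero_of_lt_levels _ _ _ _ (by omega), mul_zero, add_zero]

theorem one_sub_mul_sum_exit_eq {l : ℕ} (h : 1 - m1 l ≠ 0) (j T : ℕ) :
    (1 - m1 l) * ∑ L ∈ range (T + 1), jumpProb m1 (m2 + m3) (l + L) * ∑ B ∈ range (j + 1),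
        levelChangeSum m1 m3 m4 l L B * runsWeight m1 m2 (l + 1) L (j + L - B) T =
      (if j = 0 then m2 l + m3 l else 0) + m3 l * closedForm m1 m2 m3 m4 j (l + 1) T +
        m4 l * closedForm m1 m2 m3 m4 (j + 1) (l + 1) T := by
  have hwin : ∑ B ∈ range (j + 1),
      levelChangeSum m1 m3 m4 l 0 B * runsWeight m1 m2 (l + 1) 0 (j + 0 - B) T =
        if j = 0 then 1 else 0 := by
    rw [sum_range_succ']
    simp [levelChangeSum_zero_left, runsWeight_zero_left]
  have hlevel : ∀ L, ∑ B ∈ range (j + 1),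
      levelChangeSum m1 m3 m4 l (L + 1) B * runsWeight m1 m2 (l + 1) (L + 1) (j + (L + 1) - B) T =
        jumpProb m1 m4 l * ∑ B ∈ range (j + 1),
          levelChangeSum m1 m3 m4 (l + 1) L B * runsWeight m1 m2 (l + 1) (L + 1) (j + 1 + L - B) T +
        jumpProb m1 m3 l * ∑ B ∈ range j,
          levelChangeSum m1 m3 m4 (l + 1) L B * runsWeight m1 m2 (l + 1) (L + 1) (j + L - B) T := by
    intro L
    rw [sum_levelChangeSum_succ_mul]
    simp only [show j + (L + 1) = j + 1 + L by omega,
      show ∀ B, j + 1 + L - (B + 1) = j + L - B from fun B => by omega]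
  have hsum : ∑ L ∈ range T, jumpProb m1 (m2 + m3) (l + (L + 1)) * ∑ B ∈ range (j + 1),
      levelChangeSum m1 m3 m4 l (L + 1) B * runsWeight m1 m2 (l + 1) (L + 1) (j + (L + 1) - B) T =
        jumpProb m1 m4 l * closedForm m1 m2 m3 m4 (j + 1) (l + 1) T +
          jumpProb m1 m3 l * closedForm m1 m2 m3 m4 j (l + 1) T := by
    rw [closedForm, closedForm, mul_sum, mul_sum, ← sum_add_distrib]
    refine sum_congr rfl fun L _ => ?_
    rw [hlevel, show l + (L + 1) = l + 1 + L by omega]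
    ring
  rw [sum_range_succ', hwin, hsum, add_zero, mul_add, mul_add, ← mul_assoc, ← mul_assoc,
    one_sub_mul_jumpProb m1 h, one_sub_mul_jumpProb m1 h, mul_ite, mul_ite, mul_one, mul_zero,
    mul_zero, one_sub_mul_jumpProb m1 h, Pi.add_apply]
  ring

/-- The term for `j = 0` accounts for `W = 1` once the first coordinate reaches `k`, where the
closed form `closedForm 0` vanishes. -/
theorem closedForm_succ_succ {l : ℕ} (h : 1 - m1 l ≠ 0) (j T : ℕ) :
    closedForm m1 m2 m3 m4 (j + 1) l (T + 1) =
      m1 l * closedForm m1 m2 m3 m4 (j + 1) l T + m2 l * closedForm m1 m2 m3 m4 j l T +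
        m3 l * closedForm m1 m2 m3 m4 j (l + 1) T +
          m4 l * closedForm m1 m2 m3 m4 (j + 1) (l + 1) T + if j = 0 then m2 l + m3 l else 0 := by
  have hsplit : ∀ L, ∀ B ∈ range (j + 1),
      levelChangeSum m1 m3 m4 l L B * runsWeight m1 m2 l (L + 1) (j + 1 + L - B) (T + 1) =
        m1 l * (levelChangeSum m1 m3 m4 l L B * runsWeight m1 m2 l (L + 1) (j + 1 + L - B) T) +
          m2 l * (levelChangeSum m1 m3 m4 l L B * runsWeight m1 m2 l (L + 1) (j + L - B) T) +
          (1 - m1 l) *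
            (levelChangeSum m1 m3 m4 l L B * runsWeight m1 m2 (l + 1) L (j + L - B) T) := by
    intro L B hB
    rw [mem_range] at hB
    rw [show j + 1 + L - B = j + L - B + 1 by omega, runsWeight_succ m1 m2 h]
    ring
  rw [closedForm]
  simp only [sum_congr rfl (hsplit _), sum_add_distrib, mul_add, ← mul_sum,
    mul_left_comm (jumpProb m1 (m2 + m3) _)]
  rw [← closedForm_eq_sum_of_le m1 m2 m3 m4 T.le_succ, sum_horizontal_eq_closedForm,
    one_sub_mul_sum_exit_eq m1 m2 m3 m4 h]
  ring

theorem closedForm_eq_sum_range_min (j l T : ℕ) :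
    closedForm m1 m2 m3 m4 (j + 1) l T =
      ∑ L ∈ range T, jumpProb m1 (m2 + m3) (l + L) * ∑ B ∈ range (min L j + 1),
        levelChangeSum m1 m3 m4 l L B * runsWeight m1 m2 l (L + 1) (j + 1 + L - B) T := by
  refine sum_congr rfl fun L _ => congr_arg _ (sum_subset (range_subset_range.2 (by omega)) ?_).symm
  intro B hB hB'
  rw [mem_range] at hB hB'
  rw [levelChangeSum_eq_zero_of_lt _ _ _ _ (by omega), zero_mul]

theorem eq_closedForm_of_recurrence (h1 : ∀ l, 1 - m1 l ≠ 0) (k : ℕ)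
    (W : ℕ → ℕ → ℕ → ℝ)
    (hWwin : ∀ i l t, k ≤ i → W i l t = 1)
    (hWzero : ∀ i l, i < k → W i l 0 = 0)
    (hWrec : ∀ i l t, i < k →
      W i l (t + 1) = m1 l * W i l t + m2 l * W (i + 1) l t
        + m3 l * W (i + 1) (l + 1) t + m4 l * W i (l + 1) t) :
    ∀ T i l, i < k → W i l T = closedForm m1 m2 m3 m4 (k - i) l T := by
  intro T
  induction T with
  | zero => intro i l hi; simp [hWzero i l hi, closedForm]
  | succ T ih =>
    intro i l hi
    have hnext : ∀ l', W (i + 1) l' T =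
        closedForm m1 m2 m3 m4 (k - (i + 1)) l' T + if k - (i + 1) = 0 then 1 else 0 := by
      intro l'
      rcases (Nat.succ_le_of_lt hi).lt_or_eq with hlt | heq
      · rw [ih _ _ hlt, if_neg (by omega), add_zero]
      · rw [hWwin _ _ _ heq.ge, ← heq]
        simp [closedForm]
    obtain ⟨j, hj⟩ : ∃ j, k - i = j + 1 := ⟨k - i - 1, by omega⟩
    rw [hWrec i l T hi, ih i l hi, ih i (l + 1) hi, hnext, hnext, hj, show k - (i + 1) = j by omega,
      closedForm_succ_succ m1 m2 m3 m4 (h1 l)]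
    split_ifs <;> ring

end

end WinningProbability

open WinningProbability

theorem closed_form_winning_probability_general
    (p h γ : ℝ) (hp : 0 < p) (hh : 0 ≤ h)
    (hγ0 : 0 < γ) (hγ1 : γ < 1)
    (f : ℕ → ℝ) (hf1 : ∀ l, f l ≤ 1)
    (m1 m2 m3 m4 : ℕ → ℝ)
    (hm1 : ∀ l, m1 l = f l * (1 - γ) + (1 - f l) * (1 - γ) * (1 - p - h))
    (k : ℕ) (hk : 1 ≤ k)
    (W : ℕ → ℕ → ℕ → ℝ)
    (hWwin : ∀ i l t, k ≤ i → W i l t = 1)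
    (hWzero : ∀ i l, i < k → W i l 0 = 0)
    (hWrec : ∀ i l t, i < k →
      W i l (t + 1) = m1 l * W i l t + m2 l * W (i + 1) l t
        + m3 l * W (i + 1) (l + 1) t + m4 l * W i (l + 1) t)
    (T : ℕ) :
    W 0 0 T =
      ∑ L ∈ Finset.range T, ∑ B ∈ Finset.range (min L (k - 1) + 1),
        ((m2 L + m3 L) / (1 - m1 L)) *
        ∑ b ∈ (Finset.Nat.antidiagonalTuple L B).filter (fun b => ∀ l, b l ≤ 1),
          ∑ g ∈ (Finset.Nat.antidiagonalTuple (L + 1) ((k - 1) - B + (L + 1))).filter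
              (fun g => ∀ l, 1 ≤ g l),
            (∏ l : Fin L, ((b l : ℝ) * (m3 l.1 / (1 - m1 l.1))
                + (1 - (b l : ℝ)) * (m4 l.1 / (1 - m1 l.1)))) *
            (∏ l : Fin (L + 1), (m2 l.1 / (1 - m1 l.1)) ^ (g l - 1)) *
            (∑ T' ∈ Finset.range (T - ((k - 1) + L - B)),
              ∑ t ∈ Finset.Nat.antidiagonalTuple (L + 1) T',
                ∏ l : Fin (L + 1),
                  (Nat.choose (t l + g l - 1) (t l) : ℝ) * m1 l.1 ^ (t l)
                    * (1 - m1 l.1) ^ (g l)) := by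
  have h1 : ∀ l, 1 - m1 l ≠ 0 := fun l => by
    -- `1 - m1 l = γ + (1 - γ) * (p + h) * (1 - f l)`
    have := mul_nonneg (mul_nonneg (sub_nonneg.2 hγ1.le) (add_nonneg hp.le hh))
      (sub_nonneg.2 (hf1 l))
    rw [hm1]
    linarith
  obtain ⟨j, rfl⟩ : ∃ j, k = j + 1 := ⟨k - 1, by omega⟩
  rw [eq_closedForm_of_recurrence m1 m2 m3 m4 h1 (j + 1) W hWwin hWzero hWrec T 0 0 (by omega),
    Nat.sub_zero, closedForm_eq_sum_range_min, Nat.add_sub_cancel]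
  refine sum_congr rfl fun L _ => ?_
  rw [mul_sum]
  refine sum_congr rfl fun B hB => ?_
  rw [mem_range] at hB
  rw [levelChangeSum, runsWeight, sum_mul_sum, show j + 1 + L - B = j - B + (L + 1) by omega,
    show T + 1 - (j - B + (L + 1)) = T - (j + L - B) by omega]
  simp only [jumpProb, Pi.add_apply, zero_add, levelChangeWeight, horizontalWeight, holdingProbLT,
    holdingProb, negBinomial, binaryTuples, positiveTuples, mul_assoc]

/-- **Closed form winning probability (Theorem 2).**
The winning probability `w(k,T) = W 0 0 T` equals the closed-form sum over all
paths (levels `L`, number of diagonal transitions `B`, diagonal/vertical pattern `b`,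
horizontal run lengths `g` with `g_l ≥ 1`, and self-loop counts `t`). -/
theorem closed_form_winning_probability
    (p h γ : ℝ) (hp : 0 < p) (hh : 0 ≤ h) (hph : p + h ≤ 1)
    (hγ0 : 0 < γ) (hγ1 : γ < 1)
    (f : ℕ → ℝ) (hf0 : ∀ l, 0 ≤ f l) (hf1 : ∀ l, f l ≤ 1)
    (m1 m2 m3 m4 : ℕ → ℝ)
    (hm1 : ∀ l, m1 l = f l * (1 - γ) + (1 - f l) * (1 - γ) * (1 - p - h))
    (hm2 : ∀ l, m2 l = (1 - f l) * (1 - γ) * p)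
    (hm3 : ∀ l, m3 l = (1 - f l) * γ * p)
    (hm4 : ∀ l, m4 l = (1 - f l) * (1 - γ) * h + f l * γ + (1 - f l) * γ * (1 - p))
    (k : ℕ) (hk : 1 ≤ k)
    (W : ℕ → ℕ → ℕ → ℝ)
    (hWwin : ∀ i l t, k ≤ i → W i l t = 1)
    (hWzero : ∀ i l, i < k → W i l 0 = 0)
    (hWrec : ∀ i l t, i < k →
      W i l (t + 1) = m1 l * W i l t + m2 l * W (i + 1) l t
        + m3 l * W (i + 1) (l + 1) t + m4 l * W i (l + 1) t)
    (T : ℕ) (hT : 1 ≤ T) :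
    W 0 0 T =
      ∑ L ∈ Finset.range T, ∑ B ∈ Finset.range (min L (k - 1) + 1),
        ((m2 L + m3 L) / (1 - m1 L)) *
        ∑ b ∈ (Finset.Nat.antidiagonalTuple L B).filter (fun b => ∀ l, b l ≤ 1),
          ∑ g ∈ (Finset.Nat.antidiagonalTuple (L + 1) ((k - 1) - B + (L + 1))).filter
              (fun g => ∀ l, 1 ≤ g l),
            (∏ l : Fin L, ((b l : ℝ) * (m3 l.1 / (1 - m1 l.1))
                + (1 - (b l : ℝ)) * (m4 l.1 / (1 - m1 l.1)))) *
            (∏ l : Fin (L + 1), (m2 l.1 / (1 - m1 l.1)) ^ (g l - 1)) *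
            (∑ T' ∈ Finset.range (T - ((k - 1) + L - B)),
              ∑ t ∈ Finset.Nat.antidiagonalTuple (L + 1) T',
                ∏ l : Fin (L + 1),
                  (Nat.choose (t l + g l - 1) (t l) : ℝ) * m1 l.1 ^ (t l)
                    * (1 - m1 l.1) ^ (g l)) :=
  closed_form_winning_probability_general p h γ hp hh hγ0 hγ1 f hf1 m1 m2 m3 m4 hm1 k hk W hWwin
    hWzero hWrec T
end

section
/- For all integers k ≥ 1 and T ≥ 1, the winning probability is bounded above by the self-loop-free value: w(k,T) ≤ w̄(k,T). -/
/-! Auxiliary: value function of the self-loop-free chain with a budget on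
remaining level increments. `Vaux k γ α i l b` is the probability of reaching
column `k` from column `i`, level `l`, when at most `b` further level
increments are allowed before the chain is killed (while below column `k`). -/
def Vaux (k : ℕ) (γ : ℝ) (α : ℕ → ℝ) : ℕ → ℕ → ℕ → ℝ
  | i, l, b =>
    if k ≤ i then 1
    else match b with
      | 0 => 0
      | b + 1 =>
        (1 - γ) * α l * Vaux k γ α (i+1) l (b+1)
        + γ * α l * Vaux k γ α (i+1) (l+1) b
        + (1 - α l) * Vaux k γ α i (l+1) b
  termination_by i l b => (b, k - i)
  decreasing_by
  · exact Prod.Lex.right _ (by omega)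
  · exact Prod.Lex.left _ _ (by omega)
  · exact Prod.Lex.left _ _ (by omega)

lemma Vaux_of_le {k : ℕ} {γ : ℝ} {α : ℕ → ℝ} {i l b : ℕ} (h : k ≤ i) :
    Vaux k γ α i l b = 1 := by
  rw [Vaux.eq_def]; simp [h]

lemma Vaux_zero {k : ℕ} {γ : ℝ} {α : ℕ → ℝ} {i l : ℕ} (h : i < k) :
    Vaux k γ α i l 0 = 0 := by
  rw [Vaux.eq_def]; simp [Nat.not_le.mpr h]

lemma Vaux_succ {k : ℕ} {γ : ℝ} {α : ℕ → ℝ} {i l b : ℕ} (h : i < k) :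
    Vaux k γ α i l (b+1) =
      (1 - γ) * α l * Vaux k γ α (i+1) l (b+1)
      + γ * α l * Vaux k γ α (i+1) (l+1) b
      + (1 - α l) * Vaux k γ α i (l+1) b := by
  rw [Vaux.eq_def]; simp [Nat.not_le.mpr h]

section
variable {k : ℕ} {γ : ℝ} {α : ℕ → ℝ}
variable (hγ0 : 0 ≤ γ) (hγ1 : γ ≤ 1) (hα0 : ∀ l, 0 ≤ α l) (hα1 : ∀ l, α l ≤ 1)
include hγ0 hγ1 hα0 hα1

lemma Vaux_nonneg : ∀ b i l, 0 ≤ Vaux k γ α i l b := by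
  intro b
  induction b with
  | zero =>
    intro i l
    rcases le_or_gt k i with h | h
    · rw [Vaux_of_le h]; norm_num
    · rw [Vaux_zero h]
  | succ b ih =>
    suffices H : ∀ d i l, k - i ≤ d → 0 ≤ Vaux k γ α i l (b+1) by
      intro i l; exact H (k - i) i l le_rfl
    intro d
    induction d with
    | zero =>
      intro i l hd
      rw [Vaux_of_le (by omega)]; norm_num
    | succ d ihd =>
      intro i l hd
      rcases le_or_gt k i with h | h
      · rw [Vaux_of_le h]; norm_num
      · rw [Vaux_succ h]
        have h1 := ihd (i+1) l (by omega)
        have h2 := ih (i+1) (l+1)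
        have h3 := ih i (l+1)
        have c1 : (0:ℝ) ≤ (1 - γ) * α l := mul_nonneg (by linarith) (hα0 l)
        have c2 : (0:ℝ) ≤ γ * α l := mul_nonneg hγ0 (hα0 l)
        have c3 : (0:ℝ) ≤ 1 - α l := by linarith [hα1 l]
        positivity

lemma Vaux_mono : ∀ b i l, Vaux k γ α i l b ≤ Vaux k γ α i l (b+1) := by
  intro b
  induction b with
  | zero =>
    intro i l
    rcases le_or_gt k i with h | h
    · rw [Vaux_of_le h, Vaux_of_le h]
    · rw [Vaux_zero h]; exact Vaux_nonneg hγ0 hγ1 hα0 hα1 1 i l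
  | succ b ih =>
    suffices H : ∀ d i l, k - i ≤ d → Vaux k γ α i l (b+1) ≤ Vaux k γ α i l (b+2) by
      intro i l; exact H (k - i) i l le_rfl
    intro d
    induction d with
    | zero =>
      intro i l hd
      rw [Vaux_of_le (by omega), Vaux_of_le (by omega)]
    | succ d ihd =>
      intro i l hd
      rcases le_or_gt k i with h | h
      · rw [Vaux_of_le h, Vaux_of_le h]
      · rw [Vaux_succ h, Vaux_succ h]
        have h1 := ihd (i+1) l (by omega)
        have h2 := ih (i+1) (l+1)
        have h3 := ih i (l+1)
        have c1 : (0:ℝ) ≤ (1 - γ) * α l := mul_nonneg (by linarith) (hα0 l)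
        have c2 : (0:ℝ) ≤ γ * α l := mul_nonneg hγ0 (hα0 l)
        have c3 : (0:ℝ) ≤ 1 - α l := by linarith [hα1 l]
        have := mul_le_mul_of_nonneg_left h1 c1
        have := mul_le_mul_of_nonneg_left h2 c2
        have := mul_le_mul_of_nonneg_left h3 c3
        linarith

end

/-- `Baux k γ α T c i = Vaux k γ α c i (T - i)`: value at column `c`, level `i`,
with the absolute level cap `T`. -/
noncomputable def Baux (k : ℕ) (γ : ℝ) (α : ℕ → ℝ) (T c i : ℕ) : ℝ :=
  Vaux k γ α c i (T - i)

/-- Probability of winning given a right move from `(c, i)`. -/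
noncomputable def Gaux (k : ℕ) (γ : ℝ) (α : ℕ → ℝ) (T c i : ℕ) : ℝ :=
  α i * ((1 - γ) * Baux k γ α T (c+1) i + γ * Baux k γ α T (c+1) (i+1))

lemma unrollB {k : ℕ} {γ : ℝ} {α : ℕ → ℝ} {T c i : ℕ} (hc : c < k) (hi : i < T) :
    Baux k γ α T c i = Gaux k γ α T c i + (1 - α i) * Baux k γ α T c (i+1) := by
  unfold Baux Gaux
  obtain ⟨b, hb⟩ : ∃ b, T - i = b + 1 := ⟨T - i - 1, by omega⟩
  have hb2 : T - (i+1) = b := by omega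
  rw [hb, hb2, Vaux_succ hc]
  unfold Baux
  rw [hb, hb2]
  ring

/-- **Upper bound (Theorem 3, upper part).** The winning probability `w(k,T) = W 0 0 T`
is bounded above by the self-loop-free value `w̄(k,T) = ∑_{i<T} α i * pr (k-1) i`. -/
theorem winning_probability_le_selfloop_free
    (p h γ : ℝ) (hp : 0 < p) (hh : 0 ≤ h) (hph : p + h ≤ 1)
    (hγ0 : 0 < γ) (hγ1 : γ < 1)
    (f : ℕ → ℝ) (hf0 : ∀ l, 0 ≤ f l) (hf1 : ∀ l, f l ≤ 1)
    (m1 m2 m3 m4 : ℕ → ℝ)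
    (hm1 : ∀ l, m1 l = f l * (1 - γ) + (1 - f l) * (1 - γ) * (1 - p - h))
    (hm2 : ∀ l, m2 l = (1 - f l) * (1 - γ) * p)
    (hm3 : ∀ l, m3 l = (1 - f l) * γ * p)
    (hm4 : ∀ l, m4 l = (1 - f l) * (1 - γ) * h + f l * γ + (1 - f l) * γ * (1 - p))
    (k : ℕ) (hk : 1 ≤ k)
    (W : ℕ → ℕ → ℕ → ℝ)
    (hWwin : ∀ i l t, k ≤ i → W i l t = 1)
    (hWzero : ∀ i l, i < k → W i l 0 = 0)
    (hWrec : ∀ i l t, i < k →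
      W i l (t + 1) = m1 l * W i l t + m2 l * W (i + 1) l t
        + m3 l * W (i + 1) (l + 1) t + m4 l * W i (l + 1) t)
    (α : ℕ → ℝ)
    (hα : ∀ l, α l = p * (1 - f l) / (γ + (1 - γ) * (p + h) * (1 - f l)))
    (pr : ℕ → ℕ → ℝ)
    (hpr00 : pr 0 0 = 1)
    (hpr0 : ∀ i, pr 0 (i + 1) = (1 - α i) * pr 0 i)
    (hprj0 : ∀ j, pr (j + 1) 0 = ((1 - γ) * α 0) ^ (j + 1))
    (hprrec : ∀ j i, pr (j + 1) (i + 1) =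
      (1 - γ) * α (i + 1) * pr j (i + 1) + γ * α i * pr j i + (1 - α i) * pr (j + 1) i)
    (T : ℕ) (hT : 1 ≤ T) :
    W 0 0 T ≤ ∑ i ∈ Finset.range T, α i * pr (k - 1) i := by
  have hγ0' : (0:ℝ) ≤ γ := le_of_lt hγ0
  have hγ1' : γ ≤ 1 := le_of_lt hγ1
  have hf' : ∀ l, (0:ℝ) ≤ 1 - f l := fun l => by linarith [hf1 l]
  have hD : ∀ l, 0 < γ + (1 - γ) * (p + h) * (1 - f l) := by
    intro l
    have := mul_nonneg (mul_nonneg (by linarith : (0:ℝ) ≤ 1 - γ)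
      (by linarith : (0:ℝ) ≤ p + h)) (hf' l)
    linarith
  have hα0 : ∀ l, 0 ≤ α l := fun l => by
    rw [hα l]; exact div_nonneg (mul_nonneg hp.le (hf' l)) (hD l).le
  have hα1 : ∀ l, α l ≤ 1 := by
    intro l
    rw [hα l, div_le_one (hD l)]
    have h1 : (0:ℝ) ≤ (1 - f l) * ((1 - γ) * h) :=
      mul_nonneg (hf' l) (mul_nonneg (by linarith) hh)
    have hp1 : p ≤ 1 := by linarith
    have hfl1 : 1 - f l ≤ 1 := by linarith [hf0 l]
    have hpf : p * (1 - f l) ≤ 1 := by nlinarith [hf' l]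
    have h2 : (0:ℝ) ≤ γ * (1 - p * (1 - f l)) := mul_nonneg hγ0' (by linarith)
    nlinarith
  have hαD : ∀ l, α l * (γ + (1 - γ) * (p + h) * (1 - f l)) = p * (1 - f l) := by
    intro l
    rw [hα l]
    exact div_mul_cancel₀ _ (hD l).ne'
  have hm2' : ∀ l, m2 l = (1 - m1 l) * ((1 - γ) * α l) := by
    intro l
    rw [hm2 l, hm1 l]
    linear_combination (-(1 - γ)) * hαD l
  have hm3' : ∀ l, m3 l = (1 - m1 l) * (γ * α l) := by
    intro l
    rw [hm3 l, hm1 l]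
    linear_combination (-γ) * hαD l
  have hm4' : ∀ l, m4 l = (1 - m1 l) * (1 - α l) := by
    intro l
    rw [hm4 l, hm1 l]
    linear_combination hαD l
  have hm1nn : ∀ l, 0 ≤ m1 l := by
    intro l
    rw [hm1 l]
    have := mul_nonneg (hf0 l) (by linarith : (0:ℝ) ≤ 1 - γ)
    have := mul_nonneg (mul_nonneg (hf' l) (by linarith : (0:ℝ) ≤ 1 - γ))
      (by linarith : (0:ℝ) ≤ 1 - p - h)
    linarith
  have hm2nn : ∀ l, 0 ≤ m2 l := by
    intro l
    rw [hm2 l]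
    have := mul_nonneg (mul_nonneg (hf' l) (by linarith : (0:ℝ) ≤ 1 - γ)) hp.le
    linarith
  have hm3nn : ∀ l, 0 ≤ m3 l := by
    intro l
    rw [hm3 l]
    have := mul_nonneg (mul_nonneg (hf' l) hγ0') hp.le
    linarith
  have hm4nn : ∀ l, 0 ≤ m4 l := by
    intro l
    rw [hm4 l]
    have := mul_nonneg (mul_nonneg (hf' l) (by linarith : (0:ℝ) ≤ 1 - γ)) hh
    have := mul_nonneg (hf0 l) hγ0'
    have := mul_nonneg (mul_nonneg (hf' l) hγ0') (by linarith : (0:ℝ) ≤ 1 - p)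
    linarith
  -- fixed point equation for Vaux
  have hfix : ∀ i l b, i < k →
      Vaux k γ α i l (b+1) = m1 l * Vaux k γ α i l (b+1) + m2 l * Vaux k γ α (i+1) l (b+1)
        + m3 l * Vaux k γ α (i+1) (l+1) b + m4 l * Vaux k γ α i (l+1) b := by
    intro i l b hik
    have e := Vaux_succ (k := k) (γ := γ) (α := α) (i := i) (l := l) (b := b) hik
    rw [hm2' l, hm3' l, hm4' l]
    linear_combination (1 - m1 l) * e
  -- W ≤ Vaux
  have hWV : ∀ t i l, W i l t ≤ Vaux k γ α i l t := by
    intro t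
    induction t with
    | zero =>
      intro i l
      rcases le_or_gt k i with hik | hik
      · rw [hWwin i l 0 hik, Vaux_of_le hik]
      · rw [hWzero i l hik, Vaux_zero hik]
    | succ t ih =>
      intro i l
      rcases le_or_gt k i with hik | hik
      · rw [hWwin _ _ _ hik, Vaux_of_le hik]
      · rw [hWrec i l t hik, hfix i l t hik]
        have a1 : W i l t ≤ Vaux k γ α i l (t+1) :=
          (ih i l).trans (Vaux_mono hγ0' hγ1' hα0 hα1 t i l)
        have a2 : W (i+1) l t ≤ Vaux k γ α (i+1) l (t+1) :=
          (ih (i+1) l).trans (Vaux_mono hγ0' hγ1' hα0 hα1 t (i+1) l)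
        have a3 := ih (i+1) (l+1)
        have a4 := ih i (l+1)
        have b1 := mul_le_mul_of_nonneg_left a1 (hm1nn l)
        have b2 := mul_le_mul_of_nonneg_left a2 (hm2nn l)
        have b3 := mul_le_mul_of_nonneg_left a3 (hm3nn l)
        have b4 := mul_le_mul_of_nonneg_left a4 (hm4nn l)
        linarith
  -- pr on column 0
  have hpow : ∀ j, pr j 0 = ((1 - γ) * α 0) ^ j := by
    intro j
    cases j with
    | zero => simpa using hpr00
    | succ j => exact hprj0 j
  -- forward unrolling in column 0
  have hstepA : ∀ n, n ≤ T →
      Baux k γ α T 0 0 = (∑ i ∈ Finset.range n, pr 0 i * Gaux k γ α T 0 i)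
        + pr 0 n * Baux k γ α T 0 n := by
    intro n
    induction n with
    | zero => intro _; simp [hpr00]
    | succ n ih =>
      intro hn
      have h1 := ih (by omega)
      have h2 := unrollB (k := k) (γ := γ) (α := α) (T := T)
        (show (0:ℕ) < k by omega) (show n < T by omega)
      rw [Finset.sum_range_succ, hpr0 n, h1, h2]
      ring
  have hB0T : Baux k γ α T 0 T = 0 := by
    unfold Baux; rw [Nat.sub_self]; exact Vaux_zero (by omega)
  have hA0 : Vaux k γ α 0 0 T = ∑ i ∈ Finset.range T, pr 0 i * Gaux k γ α T 0 i := by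
    have h1 := hstepA T le_rfl
    rw [hB0T, mul_zero, add_zero] at h1
    have h2 : Baux k γ α T 0 0 = Vaux k γ α 0 0 T := by unfold Baux; rw [Nat.sub_zero]
    rw [← h2, h1]
  -- column advance identity
  have hstepB : ∀ c, c + 2 ≤ k →
      (∑ i ∈ Finset.range T, pr c i * Gaux k γ α T c i)
        = ∑ i ∈ Finset.range T, pr (c+1) i * Gaux k γ α T (c+1) i := by
    intro c hc
    have hBT : Baux k γ α T (c+1) T = 0 := by
      unfold Baux; rw [Nat.sub_self]; exact Vaux_zero (by omega)
    have ptw : ∀ i, i < T → pr (c+1) i * Gaux k γ α T (c+1) i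
        = (pr (c+1) i * Baux k γ α T (c+1) i - pr (c+1) (i+1) * Baux k γ α T (c+1) (i+1))
          + ((1-γ) * α (i+1) * pr c (i+1) * Baux k γ α T (c+1) (i+1)
             + γ * α i * pr c i * Baux k γ α T (c+1) (i+1)) := by
      intro i hi
      have hu := unrollB (k := k) (γ := γ) (α := α) (T := T)
        (show c+1 < k by omega) hi
      have hr := hprrec c i
      linear_combination (- pr (c+1) i) * hu + (Baux k γ α T (c+1) (i+1)) * hr
    have e1 : ∑ i ∈ Finset.range T, pr (c+1) i * Gaux k γ α T (c+1) i
        = (∑ i ∈ Finset.range T,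
            (pr (c+1) i * Baux k γ α T (c+1) i - pr (c+1) (i+1) * Baux k γ α T (c+1) (i+1)))
          + ∑ i ∈ Finset.range T,
            ((1-γ) * α (i+1) * pr c (i+1) * Baux k γ α T (c+1) (i+1)
             + γ * α i * pr c i * Baux k γ α T (c+1) (i+1)) := by
      rw [← Finset.sum_add_distrib]
      exact Finset.sum_congr rfl (fun i hi => ptw i (Finset.mem_range.mp hi))
    rw [e1, Finset.sum_range_sub' (fun i => pr (c+1) i * Baux k γ α T (c+1) i) T]
    have hφ : ∑ i ∈ Finset.range T, (1-γ) * α (i+1) * pr c (i+1) * Baux k γ α T (c+1) (i+1)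
        = (∑ i ∈ Finset.range T, (1-γ) * α i * pr c i * Baux k γ α T (c+1) i)
          + (1-γ) * α T * pr c T * Baux k γ α T (c+1) T
          - (1-γ) * α 0 * pr c 0 * Baux k γ α T (c+1) 0 := by
      have h1 := Finset.sum_range_succ' (fun i => (1-γ) * α i * pr c i * Baux k γ α T (c+1) i) T
      have h2 := Finset.sum_range_succ (fun i => (1-γ) * α i * pr c i * Baux k γ α T (c+1) i) T
      linarith
    rw [Finset.sum_add_distrib, hφ, hBT]
    have hA0B0 : pr (c+1) 0 = (1-γ) * α 0 * pr c 0 := by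
      rw [hpow (c+1), hpow c]; ring
    have hgoal : ∑ i ∈ Finset.range T, pr c i * Gaux k γ α T c i
        = (∑ i ∈ Finset.range T, (1-γ) * α i * pr c i * Baux k γ α T (c+1) i)
          + ∑ i ∈ Finset.range T, γ * α i * pr c i * Baux k γ α T (c+1) (i+1) := by
      rw [← Finset.sum_add_distrib]
      apply Finset.sum_congr rfl
      intro i _
      unfold Gaux
      ring
    rw [hgoal]
    have hA0B0' : pr (c+1) 0 * Baux k γ α T (c+1) 0
        = (1-γ) * α 0 * pr c 0 * Baux k γ α T (c+1) 0 := by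
      rw [hA0B0]
    linarith
  -- G at column k-1 equals α
  have hkG : ∀ i, Gaux k γ α T (k-1) i = α i := by
    intro i
    unfold Gaux Baux
    rw [show k - 1 + 1 = k by omega, Vaux_of_le le_rfl, Vaux_of_le le_rfl]
    ring
  -- chain of columns
  have hchain : ∀ j c, c + j + 1 = k →
      (∑ i ∈ Finset.range T, pr c i * Gaux k γ α T c i)
        = ∑ i ∈ Finset.range T, α i * pr (k-1) i := by
    intro j
    induction j with
    | zero =>
      intro c hc
      have hc' : c = k - 1 := by omega
      subst hc'
      exact Finset.sum_congr rfl (fun i _ => by rw [hkG i]; ring)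
    | succ j ihj =>
      intro c hc
      rw [hstepB c (by omega)]
      exact ihj (c+1) (by omega)
  calc W 0 0 T ≤ Vaux k γ α 0 0 T := hWV T 0 0
    _ = ∑ i ∈ Finset.range T, pr 0 i * Gaux k γ α T 0 i := hA0
    _ = ∑ i ∈ Finset.range T, α i * pr (k-1) i := hchain (k-1) 0 (by omega)
end

section
/- For all integers k ≥ 1, c ≥ 1 and T ≥ 1, setting v = c·k, the winning probability is bounded below by w(k,T) ≥ w̄(k, ⌊T/v⌋)·(1 - (k + T/v)·(1-γ)^c). -/
noncomputable def Pf (a : ℕ → ℝ) (g : ℝ) : ℕ → ℕ → ℕ → ℝ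
  | _, 0, 0 => 1
  | l, 0, i+1 => (1 - a l) * Pf a g (l+1) 0 i
  | l, j+1, 0 => (1 - g) * a l * Pf a g l j 0
  | l, j+1, i+1 => (1 - g) * a l * Pf a g l j (i+1) + g * a l * Pf a g (l+1) j i
      + (1 - a l) * Pf a g (l+1) (j+1) i
  termination_by l j i => (j, i)

theorem Pf_fs (a : ℕ → ℝ) (g : ℝ) (l j i : ℕ) : Pf a g l (j+1) (i+1) =
    (1 - g) * a l * Pf a g l j (i+1) + g * a l * Pf a g (l+1) j i
      + (1 - a l) * Pf a g (l+1) (j+1) i := by rw [Pf]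

theorem Pf_rs (a : ℕ → ℝ) (g : ℝ) (l i : ℕ) : Pf a g l 0 (i+1) = (1 - a l) * Pf a g (l+1) 0 i := by
  rw [Pf]

@[simp] theorem Pf_col (a : ℕ → ℝ) (g : ℝ) (l j : ℕ) : Pf a g l j 0 = ((1 - g) * a l) ^ j := by
  induction j with
  | zero => simp [Pf]
  | succ j ih => rw [Pf, ih]; ring

theorem Pf_row_last (a : ℕ → ℝ) (g : ℝ) : ∀ i l, Pf a g l 0 (i+1) = (1 - a (l+i)) * Pf a g l 0 i := by
  intro i
  induction i with
  | zero => intro l; simp [Pf]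
  | succ i ih =>
    intro l
    have h3 := ih (l+1)
    rw [show l+1+i = l+(i+1) from by omega] at h3
    rw [Pf_rs a g l (i+1), Pf_rs a g l i, h3]; ring

theorem Pf_last (a : ℕ → ℝ) (g : ℝ) : ∀ j i l, Pf a g l (j+1) (i+1) =
    (1 - g) * a (l+i+1) * Pf a g l j (i+1) + g * a (l+i) * Pf a g l j i
      + (1 - a (l+i)) * Pf a g l (j+1) i := by
  intro j
  induction j with
  | zero =>
    intro i
    induction i with
    | zero =>
      intro l
      simp only [add_zero, zero_add]
      rw [Pf_fs a g l 0 0, Pf_rs a g l 0]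
      simp [Pf]; ring
    | succ i ihi =>
      intro l
      have E0 := Pf_fs a g l 0 (i+1)
      have E1 := Pf_row_last a g (i+1) l
      have E2 := Pf_row_last a g i (l+1)
      have E3 := ihi (l+1)
      have E4 := Pf_rs a g l (i+1)
      have E5 := Pf_rs a g l i
      have E6 := Pf_fs a g l 0 i
      simp only [show l+1+i = l+i+1 from by omega, show l+1+i+1 = l+i+1+1 from by omega,
        show l+(i+1) = l+i+1 from by omega, show l+(i+1)+1 = l+i+1+1 from by omega,
        zero_add] at E1 E2 E3 ⊢
      linear_combination E0 + (1-g)*a l*E1 + g*a l*E2 + (1-a l)*E3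
        - (1-g)*a (l+i+1+1)*E4 - g*a (l+i+1)*E5 - (1-a (l+i+1))*E6
  | succ j ihj =>
    intro i
    induction i with
    | zero =>
      intro l
      have E0 := Pf_fs a g l (j+1) 0
      have E1 := ihj 0 l
      have E4 := Pf_fs a g l j 0
      simp only [add_zero, zero_add, Pf_col] at E0 E1 E4 ⊢
      linear_combination E0 + (1-g)*a l*E1 - (1-g)*a (l+1)*E4
    | succ i ihi =>
      intro l
      have E0 := Pf_fs a g l (j+1) (i+1)
      have E1 := ihj (i+1) l
      have E2 := ihj i (l+1)
      have E3 := ihi (l+1)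
      have E4 := Pf_fs a g l j (i+1)
      have E5 := Pf_fs a g l j i
      have E6 := Pf_fs a g l (j+1) i
      simp only [show l+1+i = l+i+1 from by omega, show l+1+i+1 = l+i+1+1 from by omega,
        show l+(i+1) = l+i+1 from by omega, show l+(i+1)+1 = l+i+1+1 from by omega] at E1 E2 E3 ⊢
      linear_combination E0 + (1-g)*a l*E1 + g*a l*E2 + (1-a l)*E3
        - (1-g)*a (l+i+1+1)*E4 - g*a (l+i+1)*E5 - (1-a (l+i+1))*E6

noncomputable def Vf (a : ℕ → ℝ) (g : ℝ) : ℕ → ℕ → ℕ → ℝ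
  | 0, _, _ => 1
  | _+1, _, 0 => 0
  | j+1, l, n+1 => (1 - g) * a l * Vf a g j l (n+1) + g * a l * Vf a g j (l+1) n
      + (1 - a l) * Vf a g (j+1) (l+1) n
  termination_by j l n => (j, n)

theorem Vf_zero (a : ℕ → ℝ) (g : ℝ) (l n : ℕ) : Vf a g 0 l n = 1 := by rw [Vf]
theorem Vf_base (a : ℕ → ℝ) (g : ℝ) (j l : ℕ) : Vf a g (j+1) l 0 = 0 := by rw [Vf]
theorem Vf_succ (a : ℕ → ℝ) (g : ℝ) (j l n : ℕ) : Vf a g (j+1) l (n+1) =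
    (1 - g) * a l * Vf a g j l (n+1) + g * a l * Vf a g j (l+1) n
      + (1 - a l) * Vf a g (j+1) (l+1) n := by rw [Vf]

theorem Vf_nonneg (a : ℕ → ℝ) (g : ℝ) (ha0 : ∀ l, 0 ≤ a l) (ha1 : ∀ l, a l ≤ 1)
    (hg0 : 0 ≤ g) (hg1 : g ≤ 1) : ∀ j n l, 0 ≤ Vf a g j l n := by
  intro j
  induction j with
  | zero => intro n l; rw [Vf_zero]; norm_num
  | succ j ihj =>
    intro n
    induction n with
    | zero => intro l; rw [Vf_base]
    | succ n ihn =>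
      intro l
      rw [Vf_succ]
      have hg' : (0:ℝ) ≤ 1 - g := by linarith
      have ha' : (0:ℝ) ≤ 1 - a l := by linarith [ha1 l]
      have t1 : (0:ℝ) ≤ (1-g) * a l * Vf a g j l (n+1) :=
        mul_nonneg (mul_nonneg hg' (ha0 l)) (ihj (n+1) l)
      have t2 : (0:ℝ) ≤ g * a l * Vf a g j (l+1) n :=
        mul_nonneg (mul_nonneg hg0 (ha0 l)) (ihj n (l+1))
      have t3 : (0:ℝ) ≤ (1 - a l) * Vf a g (j+1) (l+1) n := mul_nonneg ha' (ihn (l+1))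
      linarith

theorem Vf_sum (a : ℕ → ℝ) (g : ℝ) : ∀ j n l,
    Vf a g (j+1) l n = ∑ i ∈ Finset.range n, a (l+i) * Pf a g l j i := by
  intro j
  induction j with
  | zero =>
    intro n
    induction n with
    | zero => intro l; rw [Vf_base, Finset.sum_range_zero]
    | succ n ihn =>
      intro l
      rw [Vf_succ, Vf_zero, Vf_zero, ihn (l+1), Finset.sum_range_succ']
      have key : ∀ i, a (l+(i+1)) * Pf a g l 0 (i+1)
          = (1 - a l) * (a (l+1+i) * Pf a g (l+1) 0 i) := by
        intro i
        rw [Pf_rs, show l+(i+1) = l+1+i from by omega]; ring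
      rw [Finset.sum_congr rfl (fun i _ => key i), ← Finset.mul_sum]
      have h00 : Pf a g l 0 0 = 1 := by rw [Pf]
      rw [add_zero, h00]
      ring
  | succ j ihj =>
    intro n
    induction n with
    | zero => intro l; rw [Vf_base, Finset.sum_range_zero]
    | succ n ihn =>
      intro l
      rw [Vf_succ, ihj (n+1) l, ihj n (l+1), ihn (l+1),
        Finset.sum_range_succ', Finset.sum_range_succ']
      have key : ∀ i, a (l+(i+1)) * Pf a g l (j+1) (i+1)
          = (1-g)*a l*(a (l+(i+1)) * Pf a g l j (i+1))
            + g*a l*(a (l+1+i) * Pf a g (l+1) j i)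
            + (1-a l)*(a (l+1+i) * Pf a g (l+1) (j+1) i) := by
        intro i
        rw [Pf_fs, show l+(i+1) = l+1+i from by omega]; ring
      have hsum : ∑ i ∈ Finset.range n, a (l+(i+1)) * Pf a g l (j+1) (i+1)
          = (1-g)*a l * (∑ i ∈ Finset.range n, a (l+(i+1)) * Pf a g l j (i+1))
            + g*a l * (∑ i ∈ Finset.range n, a (l+1+i) * Pf a g (l+1) j i)
            + (1-a l) * (∑ i ∈ Finset.range n, a (l+1+i) * Pf a g (l+1) (j+1) i) := by
        rw [Finset.sum_congr rfl (fun i _ => key i), Finset.sum_add_distrib,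
          Finset.sum_add_distrib, ← Finset.mul_sum, ← Finset.mul_sum, ← Finset.mul_sum]
      rw [add_zero]
      rw [Pf_col a g l (j+1), Pf_col a g l j]
      simp only [show ∀ x:ℕ, l+(x+1) = l+x+1 from fun x => rfl,
        show ∀ x:ℕ, l+1+x = l+x+1 from fun x => by omega] at hsum ⊢
      simp only [Nat.add_zero] at hsum ⊢
      linear_combination -hsum

theorem Pf_nonneg (a : ℕ → ℝ) (g : ℝ) (ha0 : ∀ l, 0 ≤ a l) (ha1 : ∀ l, a l ≤ 1)
    (hg0 : 0 ≤ g) (hg1 : g ≤ 1) : ∀ j i l, 0 ≤ Pf a g l j i := by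
  intro j
  induction j with
  | zero =>
    intro i
    induction i with
    | zero => intro l; rw [Pf_col]; exact pow_nonneg (mul_nonneg (by linarith) (ha0 l)) _
    | succ i ihi =>
      intro l
      rw [Pf_rs]
      exact mul_nonneg (by linarith [ha1 l]) (ihi (l+1))
  | succ j ihj =>
    intro i
    induction i with
    | zero => intro l; rw [Pf_col]; exact pow_nonneg (mul_nonneg (by linarith) (ha0 l)) _
    | succ i ihi =>
      intro l
      rw [Pf_fs]
      have t1 : (0:ℝ) ≤ (1-g) * a l * Pf a g l j (i+1) :=
        mul_nonneg (mul_nonneg (by linarith) (ha0 l)) (ihj (i+1) l)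
      have t2 : (0:ℝ) ≤ g * a l * Pf a g (l+1) j i :=
        mul_nonneg (mul_nonneg hg0 (ha0 l)) (ihj i (l+1))
      have t3 : (0:ℝ) ≤ (1 - a l) * Pf a g (l+1) (j+1) i :=
        mul_nonneg (by linarith [ha1 l]) (ihi (l+1))
      linarith

theorem Pf_row_last' (a : ℕ → ℝ) (g : ℝ) : ∀ i l, Pf a g l 0 (i+1) = (1 - a (l+i)) * Pf a g l 0 i :=
  Pf_row_last a g

theorem Pf_last' (a : ℕ → ℝ) (g : ℝ) : ∀ j i l, Pf a g l (j+1) (i+1) =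
    (1 - g) * a (l+i+1) * Pf a g l j (i+1) + g * a (l+i) * Pf a g l j i
      + (1 - a (l+i)) * Pf a g l (j+1) i := Pf_last a g


set_option maxHeartbeats 1000000 in
/-- **Lower bound (Theorem 3, lower part).** For `v = c*k` (an integer multiple of `k`),
the winning probability `w(k,T) = W 0 0 T` is bounded below by
`w̄(k, ⌊T/v⌋) * (1 - (k + T/v) * (1-γ)^c)`, where `w̄(k,T') = ∑_{i<T'} α i * pr (k-1) i`. -/
theorem winning_probability_lower_bound
    (p h γ : ℝ) (hp : 0 < p) (hh : 0 ≤ h) (hph : p + h ≤ 1)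
    (hγ0 : 0 < γ) (hγ1 : γ < 1)
    (f : ℕ → ℝ) (hf0 : ∀ l, 0 ≤ f l) (hf1 : ∀ l, f l ≤ 1)
    (m1 m2 m3 m4 : ℕ → ℝ)
    (hm1 : ∀ l, m1 l = f l * (1 - γ) + (1 - f l) * (1 - γ) * (1 - p - h))
    (hm2 : ∀ l, m2 l = (1 - f l) * (1 - γ) * p)
    (hm3 : ∀ l, m3 l = (1 - f l) * γ * p)
    (hm4 : ∀ l, m4 l = (1 - f l) * (1 - γ) * h + f l * γ + (1 - f l) * γ * (1 - p))
    (k : ℕ) (hk : 1 ≤ k)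
    (W : ℕ → ℕ → ℕ → ℝ)
    (hWwin : ∀ i l t, k ≤ i → W i l t = 1)
    (hWzero : ∀ i l, i < k → W i l 0 = 0)
    (hWrec : ∀ i l t, i < k →
      W i l (t + 1) = m1 l * W i l t + m2 l * W (i + 1) l t
        + m3 l * W (i + 1) (l + 1) t + m4 l * W i (l + 1) t)
    (α : ℕ → ℝ)
    (hα : ∀ l, α l = p * (1 - f l) / (γ + (1 - γ) * (p + h) * (1 - f l)))
    (pr : ℕ → ℕ → ℝ)
    (hpr00 : pr 0 0 = 1)
    (hpr0 : ∀ i, pr 0 (i + 1) = (1 - α i) * pr 0 i)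
    (hprj0 : ∀ j, pr (j + 1) 0 = ((1 - γ) * α 0) ^ (j + 1))
    (hprrec : ∀ j i, pr (j + 1) (i + 1) =
      (1 - γ) * α (i + 1) * pr j (i + 1) + γ * α i * pr j i + (1 - α i) * pr (j + 1) i)
    (c T : ℕ) (hc : 1 ≤ c) (hT : 1 ≤ T) :
    (∑ i ∈ Finset.range (T / (c * k)), α i * pr (k - 1) i) *
        (1 - ((k : ℝ) + (T : ℝ) / ((c : ℝ) * (k : ℝ))) * (1 - γ) ^ c)
      ≤ W 0 0 T := by
  -- basic positivity facts
  have hγ' : (0:ℝ) ≤ 1 - γ := by linarith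
  have hd : ∀ l, (0:ℝ) < γ + (1 - γ) * (p + h) * (1 - f l) := by
    intro l
    have : (0:ℝ) ≤ (1 - γ) * (p + h) * (1 - f l) :=
      mul_nonneg (mul_nonneg hγ' (by linarith)) (by linarith [hf1 l])
    linarith
  have hα0 : ∀ l, 0 ≤ α l := by
    intro l
    rw [hα]
    exact div_nonneg (mul_nonneg hp.le (by linarith [hf1 l])) (hd l).le
  have hα1 : ∀ l, α l ≤ 1 := by
    intro l
    rw [hα, div_le_one (hd l)]
    have h1 : p * (1 - f l) ≤ 1 := by
      have := hf0 l; have := hf1 l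
      nlinarith
    have h2 : (1 - γ) * p * (1 - f l) ≤ (1 - γ) * (p + h) * (1 - f l) :=
      mul_le_mul_of_nonneg_right (mul_le_mul_of_nonneg_left (by linarith) hγ') (by linarith [hf1 l])
    nlinarith [hf0 l, hf1 l]
  have hαd : ∀ l, α l * (γ + (1 - γ) * (p + h) * (1 - f l)) = p * (1 - f l) := by
    intro l
    rw [hα]
    exact div_mul_cancel₀ _ (hd l).ne'
  have hdm : ∀ l, 1 - m1 l = γ + (1 - γ) * (p + h) * (1 - f l) := by
    intro l; rw [hm1]; ring
  have hm1nn : ∀ l, 0 ≤ m1 l := by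
    intro l
    rw [hm1]
    have t1 : (0:ℝ) ≤ f l * (1 - γ) := mul_nonneg (hf0 l) hγ'
    have t2 : (0:ℝ) ≤ (1 - f l) * (1 - γ) * (1 - p - h) :=
      mul_nonneg (mul_nonneg (by linarith [hf1 l]) hγ') (by linarith)
    linarith
  have hm1le : ∀ l, m1 l ≤ 1 - γ := by
    intro l
    rw [hm1]
    have key : (1 - γ) - (f l * (1 - γ) + (1 - f l) * (1 - γ) * (1 - p - h))
        = (1 - γ) * (1 - f l) * (p + h) := by ring
    have t1 : (0:ℝ) ≤ (1 - γ) * (1 - f l) * (p + h) :=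
      mul_nonneg (mul_nonneg hγ' (by linarith [hf1 l])) (by linarith)
    linarith
  have hm2nn : ∀ l, 0 ≤ m2 l := by
    intro l; rw [hm2]
    exact mul_nonneg (mul_nonneg (by linarith [hf1 l]) hγ') hp.le
  have hm3nn : ∀ l, 0 ≤ m3 l := by
    intro l; rw [hm3]
    exact mul_nonneg (mul_nonneg (by linarith [hf1 l]) hγ0.le) hp.le
  have hm4nn : ∀ l, 0 ≤ m4 l := by
    intro l; rw [hm4]
    have t1 : (0:ℝ) ≤ (1 - f l) * (1 - γ) * h :=
      mul_nonneg (mul_nonneg (by linarith [hf1 l]) hγ') hh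
    have t2 : (0:ℝ) ≤ f l * γ := mul_nonneg (hf0 l) hγ0.le
    have t3 : (0:ℝ) ≤ (1 - f l) * γ * (1 - p) :=
      mul_nonneg (mul_nonneg (by linarith [hf1 l]) hγ0.le) (by linarith)
    linarith
  -- nonnegativity of W
  have Wnonneg : ∀ t i l, 0 ≤ W i l t := by
    intro t
    induction t with
    | zero =>
      intro i l
      by_cases hik : k ≤ i
      · rw [hWwin i l 0 hik]; norm_num
      · rw [hWzero i l (lt_of_not_ge hik)]
    | succ t iht =>
      intro i l
      by_cases hik : k ≤ i
      · rw [hWwin i l (t+1) hik]; norm_num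
      · rw [hWrec i l t (lt_of_not_ge hik)]
        have t1 := mul_nonneg (hm1nn l) (iht i l)
        have t2 := mul_nonneg (hm2nn l) (iht (i+1) l)
        have t3 := mul_nonneg (hm3nn l) (iht (i+1) (l+1))
        have t4 := mul_nonneg (hm4nn l) (iht i (l+1))
        linarith
  -- monotonicity of W in time
  have Wmono1 : ∀ t i l, W i l t ≤ W i l (t+1) := by
    intro t
    induction t with
    | zero =>
      intro i l
      by_cases hik : k ≤ i
      · rw [hWwin i l 0 hik, hWwin i l 1 hik]
      · rw [hWzero i l (lt_of_not_ge hik)]; exact Wnonneg 1 i l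
    | succ t iht =>
      intro i l
      by_cases hik : k ≤ i
      · rw [hWwin i l (t+1) hik, hWwin i l (t+2) hik]
      · rw [hWrec i l t (lt_of_not_ge hik), hWrec i l (t+1) (lt_of_not_ge hik)]
        have t1 := mul_le_mul_of_nonneg_left (iht i l) (hm1nn l)
        have t2 := mul_le_mul_of_nonneg_left (iht (i+1) l) (hm2nn l)
        have t3 := mul_le_mul_of_nonneg_left (iht (i+1) (l+1)) (hm3nn l)
        have t4 := mul_le_mul_of_nonneg_left (iht i (l+1)) (hm4nn l)
        linarith
  have Wmono : ∀ t t' i l, t ≤ t' → W i l t ≤ W i l t' := by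
    have key : ∀ t d i l, W i l t ≤ W i l (t + d) := by
      intro t d
      induction d with
      | zero => intro i l; exact le_refl _
      | succ d ihd => intro i l; exact le_trans (ihd i l) (Wmono1 (t+d) i l)
    intro t t' i l htt
    have := key t (t' - t) i l
    rwa [show t + (t' - t) = t' from by omega] at this
  -- the peeling lemma: worst case of one holding period
  have peel : ∀ cc, 1 ≤ cc → ∀ t, cc ≤ t → ∀ i l, i < k →
      (∑ s ∈ Finset.range cc, m1 l ^ s) *
        (m2 l * W (i+1) l (t - cc) + m3 l * W (i+1) (l+1) (t - cc) + m4 l * W i (l+1) (t - cc))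
        ≤ W i l t := by
    intro cc
    induction cc with
    | zero => omega
    | succ cc ihcc =>
      intro _ t htc i l hik
      rcases Nat.eq_zero_or_pos cc with hcc | hcc
      · subst hcc
        have ht1 : t = (t - 1) + 1 := by omega
        rw [ht1, hWrec i l (t-1) hik]
        have e : (t - 1 + 1) - 1 = t - 1 := by omega
        rw [e, Finset.sum_range_one, pow_zero]
        have := mul_nonneg (hm1nn l) (Wnonneg (t-1) i l)
        linarith
      · have h1 : cc ≤ t - 1 := by omega
        have ht1 : t = (t - 1) + 1 := by omega
        have ih := ihcc hcc (t-1) h1 i l hik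
        have e : t - 1 - cc = t - (cc + 1) := by omega
        rw [e] at ih
        have hu : t - (cc+1) ≤ t - 1 := by omega
        have w2 := mul_le_mul_of_nonneg_left (Wmono (t - (cc+1)) (t-1) (i+1) l hu) (hm2nn l)
        have w3 := mul_le_mul_of_nonneg_left (Wmono (t - (cc+1)) (t-1) (i+1) (l+1) hu) (hm3nn l)
        have w4 := mul_le_mul_of_nonneg_left (Wmono (t - (cc+1)) (t-1) i (l+1) hu) (hm4nn l)
        have hrec := hWrec i l (t-1) hik
        rw [← ht1] at hrec
        have expand : (∑ s ∈ Finset.range (cc+1), m1 l ^ s) *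
            (m2 l * W (i+1) l (t - (cc+1)) + m3 l * W (i+1) (l+1) (t - (cc+1))
              + m4 l * W i (l+1) (t - (cc+1)))
            = m1 l * ((∑ s ∈ Finset.range cc, m1 l ^ s) *
                (m2 l * W (i+1) l (t - (cc+1)) + m3 l * W (i+1) (l+1) (t - (cc+1))
                  + m4 l * W i (l+1) (t - (cc+1))))
              + (m2 l * W (i+1) l (t - (cc+1)) + m3 l * W (i+1) (l+1) (t - (cc+1))
                  + m4 l * W i (l+1) (t - (cc+1))) := by
          rw [geom_sum_succ]
          ring
        rw [expand]
        have step := mul_le_mul_of_nonneg_left ih (hm1nn l)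
        linarith
  -- main induction
  obtain ⟨k', rfl⟩ : ∃ k', k = k' + 1 := ⟨k - 1, by omega⟩
  set x : ℝ := (1 - γ) ^ c with hxdef
  have hx0 : 0 ≤ x := pow_nonneg hγ' c
  have hm1c : ∀ l, m1 l ^ c ≤ x := fun l => pow_le_pow_left₀ (hm1nn l) (hm1le l) c
  have hVnn : ∀ j n l, 0 ≤ Vf α γ j l n := Vf_nonneg α γ hα0 hα1 hγ0.le hγ1.le
  have main : ∀ t j n l, j ≤ k' + 1 → c * (j + n - 1) ≤ t →
      Vf α γ j l n * (1 - ((j + n - 1 : ℕ) : ℝ) * x) ≤ W (k' + 1 - j) l t := by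
    intro t
    induction t using Nat.strong_induction_on with
    | _ t ih =>
      intro j n l hjk hbud
      match j, n with
      | 0, n =>
        rw [Vf_zero, hWwin (k'+1-0) l t (by omega), one_mul]
        have : (0:ℝ) ≤ ((0 + n - 1 : ℕ) : ℝ) * x := mul_nonneg (Nat.cast_nonneg _) hx0
        linarith
      | j+1, 0 =>
        rw [Vf_base, zero_mul]
        exact Wnonneg t _ l
      | j+1, n+1 =>
        have hbud' : c * (j + n + 1) ≤ t := by
          have : j + 1 + (n + 1) - 1 = j + n + 1 := by omega
          rwa [this] at hbud
        have hct : c ≤ t := by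
          calc c = c * 1 := by omega
            _ ≤ c * (j + n + 1) := Nat.mul_le_mul_left c (by omega)
            _ ≤ t := hbud'
        have htc : t - c < t := by omega
        have hcjn : c * (j + n) ≤ t - c := by
          have : c * (j + n + 1) = c * (j + n) + c := by ring
          omega
        -- the three IH instances
        have IH1 : Vf α γ j l (n+1) * (1 - ((j + n : ℕ) : ℝ) * x) ≤ W (k'+1-j) l (t-c) := by
          have := ih (t-c) htc j (n+1) l (by omega) (by rw [show j + (n+1) - 1 = j + n from by omega]; exact hcjn)
          rwa [show j + (n+1) - 1 = j + n from by omega] at this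
        have IH2 : Vf α γ j (l+1) n * (1 - ((j + n : ℕ) : ℝ) * x) ≤ W (k'+1-j) (l+1) (t-c) := by
          have h0 := ih (t-c) htc j n (l+1) (by omega)
            (le_trans (Nat.mul_le_mul_left c (by omega)) hcjn)
          have hle : Vf α γ j (l+1) n * (1 - ((j + n : ℕ) : ℝ) * x)
              ≤ Vf α γ j (l+1) n * (1 - ((j + n - 1 : ℕ) : ℝ) * x) := by
            apply mul_le_mul_of_nonneg_left _ (hVnn j n (l+1))
            have : ((j + n - 1 : ℕ) : ℝ) ≤ ((j + n : ℕ) : ℝ) := Nat.cast_le.mpr (by omega)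
            nlinarith
          exact le_trans hle h0
        have IH3 : Vf α γ (j+1) (l+1) n * (1 - ((j + n : ℕ) : ℝ) * x) ≤ W (k'+1-(j+1)) (l+1) (t-c) := by
          have := ih (t-c) htc (j+1) n (l+1) hjk (by rw [show j + 1 + n - 1 = j + n from by omega]; exact hcjn)
          rwa [show j + 1 + n - 1 = j + n from by omega] at this
        -- peel
        have hik : k' + 1 - (j+1) < k' + 1 := by omega
        have hpeel := peel c hc t hct (k' + 1 - (j+1)) l hik
        have hkj : k' + 1 - (j+1) + 1 = k' + 1 - j := by omega
        rw [hkj] at hpeel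
        -- abbreviations
        set A := Vf α γ j l (n+1) with hA
        set B := Vf α γ j (l+1) n with hB
        set C := Vf α γ (j+1) (l+1) n with hC
        set V := Vf α γ (j+1) l (n+1) with hV
        set M : ℝ := ((j + n : ℕ) : ℝ) with hM
        set S : ℝ := ∑ s ∈ Finset.range c, m1 l ^ s with hS
        have hSnn : 0 ≤ S := Finset.sum_nonneg fun s _ => pow_nonneg (hm1nn l) s
        -- inner inequality
        have i2 := mul_le_mul_of_nonneg_left IH1 (hm2nn l)
        have i3 := mul_le_mul_of_nonneg_left IH2 (hm3nn l)
        have i4 := mul_le_mul_of_nonneg_left IH3 (hm4nn l)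
        have inner : m2 l * (A * (1 - M * x)) + m3 l * (B * (1 - M * x)) + m4 l * (C * (1 - M * x))
            ≤ m2 l * W (k'+1-j) l (t-c) + m3 l * W (k'+1-j) (l+1) (t-c)
              + m4 l * W (k'+1-(j+1)) (l+1) (t-c) := by linarith
        have outer := le_trans (mul_le_mul_of_nonneg_left inner hSnn) hpeel
        -- algebraic identities
        have e1 : S * (1 - m1 l) = 1 - m1 l ^ c := by
          have := geom_sum_mul (m1 l) c
          linarith [this]
        have e2 : m2 l * A + m3 l * B + m4 l * C = (1 - m1 l) * V := by
          rw [hV, Vf_succ, hdm l, hm2, hm3, hm4]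
          linear_combination (-(1-γ) * A - γ * B + C) * hαd l
        have key3 : S * (m2 l * (A * (1 - M * x)) + m3 l * (B * (1 - M * x)) + m4 l * (C * (1 - M * x)))
            = (1 - m1 l ^ c) * ((1 - M * x) * V) := by
          linear_combination (S * (1 - M * x)) * e2 + ((1 - M * x) * V) * e1
        rw [key3] at outer
        -- final comparison
        have hMnn : 0 ≤ M := Nat.cast_nonneg _
        have hycm : 0 ≤ m1 l ^ c := pow_nonneg (hm1nn l) c
        have hfac : 1 - (M + 1) * x ≤ (1 - m1 l ^ c) * (1 - M * x) := by
          have h1 : 0 ≤ M * x * m1 l ^ c := mul_nonneg (mul_nonneg hMnn hx0) hycm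
          nlinarith [hm1c l]
        have hcast : ((j + 1 + (n + 1) - 1 : ℕ) : ℝ) = M + 1 := by
          rw [show j + 1 + (n + 1) - 1 = (j + n) + 1 from by omega, Nat.cast_add,
            Nat.cast_one, hM]
        rw [hcast]
        calc V * (1 - (M + 1) * x) ≤ V * ((1 - m1 l ^ c) * (1 - M * x)) :=
              mul_le_mul_of_nonneg_left hfac (hVnn (j+1) (n+1) l)
          _ = (1 - m1 l ^ c) * ((1 - M * x) * V) := by ring
          _ ≤ W (k' + 1 - (j+1)) l t := outer
  -- final assembly
  have pr_eq : ∀ j i, pr j i = Pf α γ 0 j i := by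
    intro j
    induction j with
    | zero =>
      intro i
      induction i with
      | zero => rw [hpr00]; simp [Pf]
      | succ i ihi =>
        rw [hpr0 i, ihi, Pf_row_last α γ i 0, zero_add]
    | succ j ihj =>
      intro i
      induction i with
      | zero => rw [hprj0 j, Pf_col α γ 0 (j+1)]
      | succ i ihi =>
        rw [hprrec j i, ihj (i+1), ihj i, ihi, Pf_last α γ j i 0, zero_add]
  set T' := T / (c * (k' + 1)) with hT'def
  rcases Nat.eq_zero_or_pos T' with hT0 | hT0
  · rw [hT0, Finset.sum_range_zero, zero_mul]
    exact Wnonneg T 0 0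
  · have hck : c * (k' + 1) ≤ T := by
      by_contra hcon
      push_neg at hcon
      have : T' = 0 := Nat.div_eq_of_lt hcon
      omega
    have hkpos : 0 < k' + 1 := by omega
    -- budget arithmetic: c * (k'+1 + T' - 1) ≤ T
    have h3 : c ≤ T / (k' + 1) := (Nat.le_div_iff_mul_le hkpos).mpr hck
    have h2 : c * T' ≤ T / (k' + 1) := by
      have hdd : T' = T / (k' + 1) / c := by
        rw [hT'def, Nat.div_div_eq_div_mul, Nat.mul_comm]
      rw [hdd, Nat.mul_comm]
      exact Nat.div_mul_le_self _ c
    have hbudT : c * (k' + 1 + T' - 1) ≤ T := by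
      calc c * (k' + 1 + T' - 1) = c * k' + c * T' := by
            rw [show k' + 1 + T' - 1 = k' + T' from by omega, Nat.mul_add]
        _ ≤ (T / (k' + 1)) * k' + T / (k' + 1) :=
            Nat.add_le_add (Nat.mul_le_mul_right k' h3) h2
        _ = (T / (k' + 1)) * (k' + 1) := by rw [Nat.mul_add, Nat.mul_one]
        _ ≤ T := Nat.div_mul_le_self T (k' + 1)
    have hmain := main T (k' + 1) T' 0 (le_refl _) hbudT
    rw [Nat.sub_self] at hmain
    -- identify the sum with Vf
    have hid : ∑ i ∈ Finset.range T', α i * pr (k' + 1 - 1) i = Vf α γ (k' + 1) 0 T' := by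
      rw [Vf_sum α γ k' T' 0, show k' + 1 - 1 = k' from by omega]
      exact Finset.sum_congr rfl fun i _ => by rw [pr_eq k' i, Nat.zero_add]
    rw [hid]
    -- compare the two factors
    have hsum_nn : 0 ≤ Vf α γ (k' + 1) 0 T' := hVnn _ _ _
    have hfle : (1 - (((k' + 1 : ℕ) : ℝ) + (T : ℝ) / ((c : ℝ) * ((k' + 1 : ℕ) : ℝ))) * x)
        ≤ 1 - ((k' + 1 + T' - 1 : ℕ) : ℝ) * x := by
      have hTle : ((T' : ℕ) : ℝ) ≤ (T : ℝ) / ((c : ℝ) * ((k' + 1 : ℕ) : ℝ)) := by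
        have := Nat.cast_div_le (α := ℝ) (m := T) (n := c * (k' + 1))
        rw [hT'def]
        push_cast at this ⊢
        convert this using 2
      have hc1 : ((k' + 1 + T' - 1 : ℕ) : ℝ) = ((k' + 1 : ℕ) : ℝ) + ((T' : ℕ) : ℝ) - 1 := by
        rw [show k' + 1 + T' - 1 = k' + T' from by omega]
        push_cast
        ring
      rw [hc1]
      have : ((k' + 1 : ℕ) : ℝ) + ((T' : ℕ) : ℝ) - 1 ≤ ((k' + 1 : ℕ) : ℝ) + (T : ℝ) / ((c : ℝ) * ((k' + 1 : ℕ) : ℝ)) := by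
        linarith
      nlinarith [hx0]
    calc Vf α γ (k' + 1) 0 T' * (1 - (((k' + 1 : ℕ) : ℝ) + (T : ℝ) / ((c : ℝ) * ((k' + 1 : ℕ) : ℝ))) * x)
        ≤ Vf α γ (k' + 1) 0 T' * (1 - ((k' + 1 + T' - 1 : ℕ) : ℝ) * x) :=
          mul_le_mul_of_nonneg_left hfle hsum_nn
      _ ≤ W 0 0 T := hmain
end

section
/- For all integers k ≥ 1 and T ≥ 1, the dynamic-programming value w̄(k,T) = Σ_{i=0}^{T-1} α(i)·pr(k-1,i) equals the closed-form path sum: w̄(k,T) = Σ_{L=0}^{T-1} Σ_{B=0}^{min(L,k-1)} α(L) · [Σ_{b=(b_1,…,b_L)∈{0,1}^L with b_1+⋯+b_L=B} ∏_{l=0}^{L-1} ( b_{l+1}·γα(l) + (1-b_{l+1})·(1-α(l)) )] · [Σ_{g=(g_0,…,g_L) with every g_l ≥ 1 and (g_0-1)+⋯+(g_L-1)=(k-1)-B} ∏_{l=0}^{L} ((1-γ)α(l))^{g_l-1}]. -/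
namespace SelfLoopDP
open Finset Finset.Nat

lemma tsum_cons (w : ℕ → ℕ → ℝ) (P : ℕ → Prop) [DecidablePred P] (L n : ℕ) :
    ∑ t ∈ (antidiagonalTuple (L+1) n).filter (fun t => ∀ l, P (t l)),
      ∏ l : Fin (L+1), w l.1 (t l)
    = ∑ x ∈ (Finset.range (n+1)).filter P,
        w 0 x * ∑ t ∈ (antidiagonalTuple L (n-x)).filter (fun t => ∀ l, P (t l)),
          ∏ l : Fin L, w (l.1+1) (t l) := by
  simp_rw [Finset.mul_sum]
  rw [Finset.sum_sigma']
  refine Finset.sum_bij' (fun t _ => (⟨t 0, Fin.tail t⟩ : Σ _ : ℕ, (Fin L → ℕ)))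
    (fun p _ => Fin.cons p.1 p.2) ?_ ?_ ?_ ?_ ?_
  · intro t ht
    simp only [Finset.mem_filter, mem_antidiagonalTuple, Finset.mem_sigma,
      Finset.mem_range] at ht ⊢
    obtain ⟨hsum, hP⟩ := ht
    rw [Fin.sum_univ_succ] at hsum
    have ht2 : ∑ i : Fin L, Fin.tail t i = ∑ i : Fin L, t i.succ := rfl
    exact ⟨⟨by omega, hP 0⟩, by rw [ht2]; omega, fun l => hP l.succ⟩
  · rintro ⟨x, t⟩ hp
    simp only [Finset.mem_sigma, Finset.mem_filter, Finset.mem_range,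
      mem_antidiagonalTuple] at hp
    obtain ⟨⟨hx, hPx⟩, hsum, hP⟩ := hp
    simp only [Finset.mem_filter, mem_antidiagonalTuple, Fin.sum_univ_succ,
      Fin.cons_zero, Fin.cons_succ]
    refine ⟨by omega, fun l => ?_⟩
    rcases Fin.eq_zero_or_eq_succ l with h | ⟨m, rfl⟩
    · subst h; simpa using hPx
    · simpa using hP m
  · intro t _
    exact Fin.cons_self_tail t
  · rintro ⟨x, t⟩ _
    simp [Fin.tail_cons]
  · intro t _
    rw [Fin.prod_univ_succ]
    simp [Fin.tail]

lemma tri_swap (n : ℕ) (P : ℕ → Prop) [DecidablePred P] (f : ℕ → ℕ → ℝ) :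
    ∑ x ∈ (Finset.range (n+1)).filter P, ∑ y ∈ (Finset.range (n-x+1)).filter P, f x y
    = ∑ y ∈ (Finset.range (n+1)).filter P, ∑ x ∈ (Finset.range (n-y+1)).filter P, f x y := by
  refine Finset.sum_comm' ?_
  intro x y
  simp only [Finset.mem_filter, Finset.mem_range]
  constructor <;> rintro ⟨⟨h1, h2⟩, h3, h4⟩ <;> exact ⟨⟨by omega, h2⟩, by omega, h4⟩

lemma tsum_snoc (P : ℕ → Prop) [DecidablePred P] :
    ∀ (L : ℕ) (w : ℕ → ℕ → ℝ) (n : ℕ),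
    ∑ t ∈ (antidiagonalTuple (L+1) n).filter (fun t => ∀ l, P (t l)),
      ∏ l : Fin (L+1), w l.1 (t l)
    = ∑ x ∈ (Finset.range (n+1)).filter P,
        w L x * ∑ t ∈ (antidiagonalTuple L (n-x)).filter (fun t => ∀ l, P (t l)),
          ∏ l : Fin L, w l.1 (t l) := by
  intro L
  induction L with
  | zero =>
    intro w n
    rw [tsum_cons]
    refine Finset.sum_congr rfl fun x hx => ?_
    cases hnx : n - x with
    | zero => simp
    | succ m => simp
  | succ L IH =>
    intro w n
    rw [tsum_cons]
    have h1 : ∀ x ∈ (Finset.range (n+1)).filter P,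
        w 0 x * ∑ t ∈ (antidiagonalTuple (L+1) (n-x)).filter (fun t => ∀ l, P (t l)),
          ∏ l : Fin (L+1), w (l.1+1) (t l)
        = ∑ y ∈ (Finset.range (n-x+1)).filter P,
            w (L+1) y * (w 0 x *
              ∑ t ∈ (antidiagonalTuple L (n-x-y)).filter (fun t => ∀ l, P (t l)),
                ∏ l : Fin L, w (l.1+1) (t l)) := by
      intro x hx
      rw [IH (fun i => w (i+1)) (n-x), Finset.mul_sum]
      refine Finset.sum_congr rfl fun y hy => ?_
      ring
    rw [Finset.sum_congr rfl h1, tri_swap]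
    refine Finset.sum_congr rfl fun y hy => ?_
    rw [← Finset.mul_sum]
    congr 1
    rw [tsum_cons]
    refine Finset.sum_congr rfl fun x hx => ?_
    have hs : n - x - y = n - y - x := by omega
    rw [hs]

noncomputable def SB (w : ℕ → ℕ → ℝ) (L B : ℕ) : ℝ :=
  ∑ b ∈ (antidiagonalTuple L B).filter (fun b => ∀ l, b l ≤ 1), ∏ l : Fin L, w l.1 (b l)

noncomputable def SG (w : ℕ → ℕ → ℝ) (L n : ℕ) : ℝ :=
  ∑ g ∈ (antidiagonalTuple L n).filter (fun g => ∀ l, 1 ≤ g l), ∏ l : Fin L, w l.1 (g l)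

lemma SB_snoc (w : ℕ → ℕ → ℝ) (L B : ℕ) :
    SB w (L+1) B = ∑ x ∈ (Finset.range (B+1)).filter (fun x => x ≤ 1),
      w L x * SB w L (B-x) := by
  simpa [SB] using tsum_snoc (fun x => x ≤ 1) L w B

lemma SG_snoc (w : ℕ → ℕ → ℝ) (L n : ℕ) :
    SG w (L+1) n = ∑ x ∈ (Finset.range (n+1)).filter (fun x => 1 ≤ x),
      w L x * SG w L (n-x) := by
  simpa [SG] using tsum_snoc (fun x => 1 ≤ x) L w n

lemma SB_zero_zero (w : ℕ → ℕ → ℝ) : SB w 0 0 = 1 := by simp [SB]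

lemma SB_zero_succ (w : ℕ → ℕ → ℝ) (B : ℕ) : SB w 0 (B+1) = 0 := by simp [SB]

lemma SB_eq_zero (w : ℕ → ℕ → ℝ) {L B : ℕ} (h : L < B) : SB w L B = 0 := by
  refine Finset.sum_eq_zero fun b hb => ?_
  rw [Finset.mem_filter, mem_antidiagonalTuple] at hb
  obtain ⟨hsum, hle⟩ := hb
  have : ∑ l : Fin L, b l ≤ ∑ l : Fin L, 1 := Finset.sum_le_sum fun l _ => hle l
  simp at this
  omega

lemma SG_eq_zero (w : ℕ → ℕ → ℝ) {L n : ℕ} (h : n < L) : SG w L n = 0 := by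
  refine Finset.sum_eq_zero fun g hg => ?_
  rw [Finset.mem_filter, mem_antidiagonalTuple] at hg
  obtain ⟨hsum, hge⟩ := hg
  have : ∑ l : Fin L, 1 ≤ ∑ l : Fin L, g l := Finset.sum_le_sum fun l _ => hge l
  simp at this
  omega

lemma SG_one (w : ℕ → ℕ → ℝ) (n : ℕ) : SG w 1 (n+1) = w 0 (n+1) := by
  simp [SG, Finset.Nat.antidiagonalTuple_one, Finset.filter_singleton]

lemma filter_le_one_zero : (Finset.range 1).filter (fun x => x ≤ 1) = {0} := by decide

lemma filter_le_one_succ (B : ℕ) :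
    (Finset.range (B+2)).filter (fun x => x ≤ 1) = {0, 1} := by
  ext x
  simp only [Finset.mem_filter, Finset.mem_range, Finset.mem_insert, Finset.mem_singleton]
  omega

lemma SB_succ_zero (w : ℕ → ℕ → ℝ) (L : ℕ) : SB w (L+1) 0 = w L 0 * SB w L 0 := by
  rw [SB_snoc, filter_le_one_zero]
  simp

lemma SB_succ_succ (w : ℕ → ℕ → ℝ) (L B : ℕ) :
    SB w (L+1) (B+1) = w L 0 * SB w L (B+1) + w L 1 * SB w L B := by
  rw [SB_snoc, filter_le_one_succ]
  rw [Finset.sum_insert (by simp)]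
  simp

lemma shift_sum (n : ℕ) (F : ℕ → ℝ) :
    ∑ x ∈ (Finset.range (n+1)).filter (fun x => 1 ≤ x), F x
      = ∑ e ∈ Finset.range n, F (e+1) := by
  rw [Finset.sum_filter, Finset.sum_range_succ']
  simp

lemma SG_snoc' (w : ℕ → ℕ → ℝ) (L n : ℕ) :
    SG w (L+1) n = ∑ e ∈ Finset.range n, w L (e+1) * SG w L (n-(e+1)) := by
  rw [SG_snoc, shift_sum]




variable (d : ℕ → ℝ)

local notation "V" => fun (i x : ℕ) => d i ^ (x - 1)

lemma SG_succ_zero (L : ℕ) : SG V (L+2) (L+2) = SG V (L+1) (L+1) := by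
  rw [SG_snoc']
  rw [Finset.sum_eq_single 0]
  · simp
  · intro e he hne
    rw [SG_eq_zero]
    · ring
    · simp only [Finset.mem_range] at he; omega
  · simp

lemma SG_succ_succ (L m : ℕ) :
    SG V (L+2) ((m+1) + (L+2))
      = SG V (L+1) ((m+1)+(L+1)) + d (L+1) * SG V (L+2) (m + (L+2)) := by
  have hN : m + 1 + (L+2) = (m + (L+2)) + 1 := by omega
  have h1 : SG V (L+2) ((m+1) + (L+2))
      = ∑ e ∈ Finset.range ((m+(L+2))+1), V (L+1) (e+1) * SG V (L+1) (((m+(L+2))+1)-(e+1)) := by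
    rw [hN]; exact SG_snoc' ..
  rw [h1, Finset.sum_range_succ']
  have h2 : ∀ e, V (L+1) (e+1+1) * SG V (L+1) (((m+(L+2))+1)-(e+1+1))
      = d (L+1) * (V (L+1) (e+1) * SG V (L+1) ((m+(L+2))-(e+1))) := by
    intro e
    have he1 : e + 1 + 1 - 1 = e + 1 := by omega
    have he2 : e + 1 - 1 = e := by omega
    have he3 : ((m+(L+2))+1)-(e+1+1) = (m+(L+2))-(e+1) := by omega
    simp only [he1, he2, he3]
    rw [pow_succ]
    ring
  have h4 : SG V (L+2) (m+(L+2))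
      = ∑ e ∈ Finset.range (m+(L+2)), V (L+1) (e+1) * SG V (L+1) ((m+(L+2))-(e+1)) :=
    SG_snoc' ..
  rw [Finset.sum_congr rfl (fun e _ => h2 e), ← Finset.mul_sum, ← h4]
  have h5 : m + (L+2) + 1 - (0+1) = m + 1 + (L+1) := by omega
  simp only [h5]
  norm_num
  ring

noncomputable def Cf (w v : ℕ → ℕ → ℝ) (j L : ℕ) : ℝ :=
  ∑ B ∈ Finset.range (j+1), SB w L B * SG v (L+1) ((j - B) + (L+1))

noncomputable def Df (w v : ℕ → ℕ → ℝ) (j L : ℕ) : ℝ :=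
  ∑ B ∈ Finset.range (j+1), SB w L B * SG v (L+2) ((j - B) + (L+2))

variable (w : ℕ → ℕ → ℝ)

lemma D_zero (L : ℕ) : Df w V 0 L = Cf w V 0 L := by
  simp only [Df, Cf, Finset.sum_range_one, Nat.zero_sub, Nat.zero_add]
  rw [SG_succ_zero]

lemma D_rec (j L : ℕ) : Df w V (j+1) L = Cf w V (j+1) L + d (L+1) * Df w V j L := by
  have expand : ∀ B ∈ Finset.range (j+1),
      SB w L B * SG V (L+2) ((j+1-B) + (L+2))
        = SB w L B * SG V (L+1) ((j+1-B)+(L+1))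
          + d (L+1) * (SB w L B * SG V (L+2) ((j-B) + (L+2))) := by
    intro B hB
    rw [Finset.mem_range] at hB
    have hB' : j + 1 - B = (j - B) + 1 := by omega
    rw [hB', SG_succ_succ]
    ring
  rw [Df, Finset.sum_range_succ, Finset.sum_congr rfl expand, Finset.sum_add_distrib,
    ← Finset.mul_sum]
  have hlast : SB w L (j+1) * SG V (L+2) ((j+1-(j+1)) + (L+2))
      = SB w L (j+1) * SG V (L+1) ((j+1-(j+1)) + (L+1)) := by
    simp only [Nat.sub_self, Nat.zero_add]
    rw [SG_succ_zero]
  rw [hlast]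
  conv_rhs => rw [Cf, Finset.sum_range_succ, Df]
  ring

lemma C_base (j : ℕ) : Cf w V j 0 = d 0 ^ j := by
  rw [Cf]
  rw [Finset.sum_eq_single 0]
  · rw [SB_zero_zero, SG_one]
    simp
  · intro B hB hne
    obtain ⟨m, rfl⟩ := Nat.exists_eq_succ_of_ne_zero hne
    rw [SB_zero_succ]
    ring
  · simp

lemma C_step_zero (L : ℕ) : Cf w V 0 (L+1) = w L 0 * Cf w V 0 L := by
  simp only [Cf, Finset.sum_range_one, Nat.zero_sub, Nat.zero_add]
  rw [SB_succ_zero, SG_succ_zero]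
  ring

lemma C_step (j L : ℕ) :
    Cf w V (j+1) (L+1) = w L 0 * Df w V (j+1) L + w L 1 * Df w V j L := by
  have hSB : ∀ B, SB w (L+1) B
      = w L 0 * SB w L B + w L 1 * (if B = 0 then 0 else SB w L (B-1)) := by
    intro B
    cases B with
    | zero => simp [SB_succ_zero]
    | succ m => simp [SB_succ_succ]
  simp only [Cf, hSB, add_mul, Finset.sum_add_distrib]
  have h1 : ∑ B ∈ Finset.range (j+2), w L 0 * SB w L B * SG V (L+2) ((j+1-B)+(L+2))
      = w L 0 * Df w V (j+1) L := by
    rw [Df, Finset.mul_sum]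
    exact Finset.sum_congr rfl fun B _ => by ring
  have h2 : ∑ B ∈ Finset.range (j+2),
      (w L 1 * (if B = 0 then 0 else SB w L (B-1))) * SG V (L+2) ((j+1-B)+(L+2))
      = w L 1 * Df w V j L := by
    rw [Finset.sum_range_succ']
    have e1 : ∀ B, (w L 1 * (if B+1 = 0 then 0 else SB w L (B+1-1))) * SG V (L+2) ((j+1-(B+1))+(L+2))
        = w L 1 * (SB w L B * SG V (L+2) ((j-B)+(L+2))) := by
      intro B
      have hidx : j + 1 - (B+1) = j - B := by omega
      rw [if_neg (Nat.succ_ne_zero B), Nat.add_sub_cancel, hidx]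
      ring
    rw [Finset.sum_congr rfl (fun B _ => e1 B), if_pos rfl, Df, Finset.mul_sum]
    ring
  rw [h1, h2]

lemma C_rec (j L : ℕ) :
    Cf w V (j+1) (L+1)
      = d (L+1) * Cf w V j (L+1) + w L 1 * Cf w V j L + w L 0 * Cf w V (j+1) L := by
  cases j with
  | zero =>
    rw [C_step, C_step_zero, D_rec, D_zero]
    ring
  | succ m =>
    rw [C_step, C_step, D_rec, D_rec]
    ring


lemma C_base' (w v : ℕ → ℕ → ℝ) (d : ℕ → ℝ) (hv : v = fun (i x : ℕ) => d i ^ (x - 1))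
    (j : ℕ) : Cf w v j 0 = d 0 ^ j := by subst hv; exact C_base d w j

lemma C_step_zero' (w v : ℕ → ℕ → ℝ) (d : ℕ → ℝ) (hv : v = fun (i x : ℕ) => d i ^ (x - 1))
    (L : ℕ) : Cf w v 0 (L+1) = w L 0 * Cf w v 0 L := by
  subst hv; exact C_step_zero d w L

lemma C_rec' (w v : ℕ → ℕ → ℝ) (d : ℕ → ℝ) (hv : v = fun (i x : ℕ) => d i ^ (x - 1))
    (j L : ℕ) :
    Cf w v (j+1) (L+1)
      = d (L+1) * Cf w v j (L+1) + w L 1 * Cf w v j L + w L 0 * Cf w v (j+1) L := by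
  subst hv; exact C_rec d w j L

end SelfLoopDP

open SelfLoopDP in
/-- **Correctness of the dynamic-programming algorithm (Algorithm 1).**
The DP value `w̄(k,T) = ∑_{i<T} α i * pr (k-1) i` equals the closed-form sum over
self-loop-free paths reaching column `k` at level `L < T` with `B` diagonal transitions. -/
theorem selfloop_free_dp_eq_closed_form
    (p h γ : ℝ) (hp : 0 < p) (hh : 0 ≤ h) (hph : p + h ≤ 1)
    (hγ0 : 0 < γ) (hγ1 : γ < 1)
    (f : ℕ → ℝ) (hf0 : ∀ l, 0 ≤ f l) (hf1 : ∀ l, f l ≤ 1)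
    (α : ℕ → ℝ)
    (hα : ∀ l, α l = p * (1 - f l) / (γ + (1 - γ) * (p + h) * (1 - f l)))
    (pr : ℕ → ℕ → ℝ)
    (hpr00 : pr 0 0 = 1)
    (hpr0 : ∀ i, pr 0 (i + 1) = (1 - α i) * pr 0 i)
    (hprj0 : ∀ j, pr (j + 1) 0 = ((1 - γ) * α 0) ^ (j + 1))
    (hprrec : ∀ j i, pr (j + 1) (i + 1) =
      (1 - γ) * α (i + 1) * pr j (i + 1) + γ * α i * pr j i + (1 - α i) * pr (j + 1) i)
    (k : ℕ) (hk : 1 ≤ k) (T : ℕ) (hT : 1 ≤ T) :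
    ∑ i ∈ Finset.range T, α i * pr (k - 1) i =
      ∑ L ∈ Finset.range T, ∑ B ∈ Finset.range (min L (k - 1) + 1),
        α L *
        (∑ b ∈ (Finset.Nat.antidiagonalTuple L B).filter (fun b => ∀ l, b l ≤ 1),
          ∏ l : Fin L, ((b l : ℝ) * (γ * α l.1) + (1 - (b l : ℝ)) * (1 - α l.1))) *
        (∑ g ∈ (Finset.Nat.antidiagonalTuple (L + 1) ((k - 1) - B + (L + 1))).filter
            (fun g => ∀ l, 1 ≤ g l),
          ∏ l : Fin (L + 1), ((1 - γ) * α l.1) ^ (g l - 1)) := by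
  classical
  have hw0 : ∀ L : ℕ,
      (fun (i x : ℕ) => (x:ℝ) * (γ * α i) + (1 - (x:ℝ)) * (1 - α i)) L 0 = 1 - α L := by
    intro L; norm_num
  have hw1 : ∀ L : ℕ,
      (fun (i x : ℕ) => (x:ℝ) * (γ * α i) + (1 - (x:ℝ)) * (1 - α i)) L 1 = γ * α L := by
    intro L; norm_num
  have hv : (fun (i x : ℕ) => ((1 - γ) * α i) ^ (x - 1))
      = fun (i x : ℕ) => ((fun i => (1 - γ) * α i) i) ^ (x - 1) := rfl
  have key : ∀ L j : ℕ, pr j L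
      = Cf (fun (i x : ℕ) => (x:ℝ) * (γ * α i) + (1 - (x:ℝ)) * (1 - α i))
          (fun (i x : ℕ) => ((1 - γ) * α i) ^ (x - 1)) j L := by
    intro L
    induction L with
    | zero =>
      intro j
      cases j with
      | zero =>
        rw [hpr00, C_base' _ _ (fun i => (1 - γ) * α i) hv]
        norm_num
      | succ m =>
        rw [hprj0 m, C_base' _ _ (fun i => (1 - γ) * α i) hv]
    | succ L IHL =>
      intro j
      induction j with
      | zero =>
        rw [hpr0 L, IHL 0, C_step_zero' _ _ (fun i => (1 - γ) * α i) hv]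
        norm_num
      | succ m IHj =>
        rw [hprrec m L, IHj, IHL m, IHL (m+1),
          C_rec' _ _ (fun i => (1 - γ) * α i) hv]
        push_cast
        ring
  refine Finset.sum_congr rfl fun L hL => ?_
  rw [key L (k-1)]
  have hsum : α L * Cf (fun (i x : ℕ) => (x:ℝ) * (γ * α i) + (1 - (x:ℝ)) * (1 - α i))
      (fun (i x : ℕ) => ((1 - γ) * α i) ^ (x - 1)) (k-1) L
      = ∑ B ∈ Finset.range (min L (k-1) + 1),
          α L * SB (fun (i x : ℕ) => (x:ℝ) * (γ * α i) + (1 - (x:ℝ)) * (1 - α i)) L B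
            * SG (fun (i x : ℕ) => ((1 - γ) * α i) ^ (x - 1)) (L+1) ((k-1) - B + (L+1)) := by
    rw [Cf, Finset.mul_sum]
    rw [← Finset.sum_subset (Finset.range_subset_range.2 (by omega : min L (k-1) + 1 ≤ (k-1) + 1))]
    · exact Finset.sum_congr rfl fun B _ => by ring
    · intro B hB hnB
      rw [Finset.mem_range] at hB
      rw [Finset.mem_range] at hnB
      rw [SB_eq_zero _ (by omega : L < B)]
      ring
  rw [hsum]
  rfl
end

section
/- Let d > 0 be a real with 1 - f(l) < d for all l, and set β(l) = √((1-f(l))/d) ∈ [0,1). Let θ be a real with θ ≥ (1-γ)/γ. Then for all integers k ≥ 1 and T ≥ 1: w̄(k,T) ≤ (1 + θ⁻¹) · Σ_{L=0}^{T-1} (θ·p·d)^k · ∏_{l=0}^{L} ( 1 + (1+θ⁻¹)·β(l)/(1-β(l)) ). -/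
/-!
Put `M = θpd` and `b l = β l ^ 2 = (1 - f l) / d`. Since `γ α l ≤ p (1 - f l)` and
`1 - γ ≤ θ γ`, the horizontal and diagonal rates are at most `M b l` and `θ⁻¹ M b l`.
Hence the truncated column sums `S i = ∑_j pr j i / M ^ j` satisfy
`S (i+1) ≤ b (i+1) S (i+1) + θ⁻¹ b i S i + S i`, and since
`F x = 1 + (1 + θ⁻¹) x / (1 - x) = (1 + θ⁻¹ x) / (1 - x)` this closes up into
`S i ≤ ∏_{l<i} F (b l) / (1 - b i)`. Then
`α i pr (k-1) i ≤ (1 + θ⁻¹) M ^ k b i S i ≤ (1 + θ⁻¹) M ^ k ∏_{l≤i} F (b l)`,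
and finally `F (β²) ≤ F β`.
-/

open Finset

noncomputable def levelFactor (c x : ℝ) : ℝ := 1 + (1 + c) * (x / (1 - x))

noncomputable def columnBound (c : ℝ) (b : ℕ → ℝ) (i : ℕ) : ℝ :=
  (∏ l ∈ range i, levelFactor c (b l)) / (1 - b i)

section LevelFactor

variable {c x : ℝ}

lemma levelFactor_eq (hx : x ≠ 1) : levelFactor c x = (1 + c * x) / (1 - x) := by
  rw [levelFactor]
  field_simp [sub_ne_zero.mpr hx.symm]
  ring

lemma one_le_levelFactor (hc : 0 ≤ c) (hx0 : 0 ≤ x) (hx1 : x < 1) : 1 ≤ levelFactor c x := by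
  have : 0 ≤ (1 + c) * (x / (1 - x)) := by
    have : 0 < 1 - x := by linarith
    positivity
  rw [levelFactor]
  linarith

lemma div_one_sub_le_levelFactor (hc : 0 ≤ c) (hx0 : 0 ≤ x) (hx1 : x < 1) :
    x / (1 - x) ≤ levelFactor c x := by
  have : 0 ≤ x / (1 - x) := div_nonneg hx0 (by linarith)
  rw [levelFactor]
  nlinarith

lemma levelFactor_sq_le (hc : 0 ≤ c) (hx0 : 0 ≤ x) (hx1 : x < 1) :
    levelFactor c (x ^ 2) ≤ levelFactor c x := by
  have hx : 0 < 1 - x := by linarith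
  have : x ^ 2 / (1 - x ^ 2) ≤ x / (1 - x) := by
    rw [div_le_div_iff₀ (by nlinarith) hx]
    nlinarith
  unfold levelFactor
  gcongr

end LevelFactor

section ColumnBound

variable {c : ℝ} {b : ℕ → ℝ}

lemma one_le_prod_levelFactor (hc : 0 ≤ c) (hb0 : ∀ l, 0 ≤ b l) (hb1 : ∀ l, b l < 1) (i : ℕ) :
    1 ≤ ∏ l ∈ range i, levelFactor c (b l) :=
  one_le_prod fun l _ ↦ one_le_levelFactor hc (hb0 l) (hb1 l)

lemma columnBound_nonneg (hc : 0 ≤ c) (hb0 : ∀ l, 0 ≤ b l) (hb1 : ∀ l, b l < 1) (i : ℕ) :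
    0 ≤ columnBound c b i :=
  div_nonneg (zero_le_one.trans (one_le_prod_levelFactor hc hb0 hb1 i)) (by linarith [hb1 i])

lemma columnBound_succ (hb1 : ∀ l, b l < 1) (i : ℕ) :
    b (i + 1) * columnBound c b (i + 1) + c * b i * columnBound c b i + columnBound c b i =
      columnBound c b (i + 1) := by
  have h0 : 1 - b i ≠ 0 := by linarith [hb1 i]
  have h1 : 1 - b (i + 1) ≠ 0 := by linarith [hb1 (i + 1)]
  simp only [columnBound, prod_range_succ, levelFactor_eq (hb1 i).ne]
  field_simp
  ring

lemma mul_columnBound_le_prod (hc : 0 ≤ c) (hb0 : ∀ l, 0 ≤ b l) (hb1 : ∀ l, b l < 1) (i : ℕ) :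
    b i * columnBound c b i ≤ ∏ l ∈ range (i + 1), levelFactor c (b l) := by
  rw [columnBound, mul_div_left_comm, prod_range_succ]
  exact mul_le_mul_of_nonneg_left (div_one_sub_le_levelFactor hc (hb0 i) (hb1 i))
    (zero_le_one.trans (one_le_prod_levelFactor hc hb0 hb1 i))

end ColumnBound

section ColumnSums

variable {c : ℝ} {b : ℕ → ℝ} {q : ℕ → ℕ → ℝ}

lemma sum_range_succ_le_of_rec
    (h0 : ∀ i, q 0 (i + 1) ≤ q 0 i)
    (hrec : ∀ j i, q (j + 1) (i + 1) ≤ b (i + 1) * q j (i + 1) + c * b i * q j i + q (j + 1) i)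
    (J i : ℕ) :
    ∑ j ∈ range (J + 1), q j (i + 1) ≤
      b (i + 1) * ∑ j ∈ range J, q j (i + 1) + c * b i * ∑ j ∈ range J, q j i +
        ∑ j ∈ range (J + 1), q j i := by
  have hshift : ∑ j ∈ range J, q (j + 1) (i + 1) ≤
      ∑ j ∈ range J, (b (i + 1) * q j (i + 1) + c * b i * q j i + q (j + 1) i) :=
    sum_le_sum fun j _ ↦ hrec j i
  rw [sum_range_succ', sum_range_succ' (fun j ↦ q j i)]
  simp only [sum_add_distrib, ← mul_sum] at hshift
  linarith [h0 i]

theorem sum_range_le_columnBound (hc : 0 ≤ c) (hb0 : ∀ l, 0 ≤ b l) (hb1 : ∀ l, b l < 1)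
    (h00 : q 0 0 ≤ 1) (h0 : ∀ i, q 0 (i + 1) ≤ q 0 i) (hj0 : ∀ j, q (j + 1) 0 ≤ b 0 * q j 0)
    (hrec : ∀ j i, q (j + 1) (i + 1) ≤ b (i + 1) * q j (i + 1) + c * b i * q j i + q (j + 1) i)
    (J i : ℕ) : ∑ j ∈ range J, q j i ≤ columnBound c b i := by
  induction J generalizing i with
  | zero => simpa using columnBound_nonneg hc hb0 hb1 i
  | succ J ihJ =>
    induction i with
    | zero =>
      have hgeom : ∀ j, q j 0 ≤ b 0 ^ j := fun j ↦
        (le_geom (u := fun j ↦ q j 0) (hb0 0) j fun k _ ↦ hj0 k).trans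
          (mul_le_of_le_one_right (pow_nonneg (hb0 0) j) h00)
      calc ∑ j ∈ range (J + 1), q j 0 ≤ ∑ j ∈ range (J + 1), b 0 ^ j :=
            sum_le_sum fun j _ ↦ hgeom j
        _ ≤ b 0 ^ 0 / (1 - b 0) := by
          simpa only [range_eq_Ico] using geom_sum_Ico_le_of_lt_one (hb0 0) (hb1 0)
        _ = columnBound c b 0 := by simp [columnBound]
    | succ i ihi =>
      calc ∑ j ∈ range (J + 1), q j (i + 1)
          ≤ b (i + 1) * ∑ j ∈ range J, q j (i + 1) + c * b i * ∑ j ∈ range J, q j i +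
              ∑ j ∈ range (J + 1), q j i := sum_range_succ_le_of_rec h0 hrec J i
        _ ≤ b (i + 1) * columnBound c b (i + 1) + c * b i * columnBound c b i +
              columnBound c b i := by
          gcongr
          · exact hb0 _
          · exact ihJ _
          · exact mul_nonneg hc (hb0 i)
          · exact ihJ _
        _ = columnBound c b (i + 1) := columnBound_succ hb1 i

theorem sum_range_div_pow_le_columnBound {M : ℝ} {pr : ℕ → ℕ → ℝ} (hM : 0 < M) (hc : 0 ≤ c)
    (hb0 : ∀ l, 0 ≤ b l) (hb1 : ∀ l, b l < 1)
    (h00 : pr 0 0 ≤ 1) (h0 : ∀ i, pr 0 (i + 1) ≤ pr 0 i)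
    (hj0 : ∀ j, pr (j + 1) 0 ≤ M * b 0 * pr j 0)
    (hrec : ∀ j i, pr (j + 1) (i + 1) ≤
      M * b (i + 1) * pr j (i + 1) + M * (c * b i) * pr j i + pr (j + 1) i)
    (J i : ℕ) : ∑ j ∈ range J, pr j i / M ^ j ≤ columnBound c b i := by
  have hscale : ∀ {x y : ℝ} (j : ℕ), x ≤ M * y → x / M ^ (j + 1) ≤ y / M ^ j := fun j h ↦
    (div_le_div_of_nonneg_right h (by positivity)).trans_eq (by field_simp; ring)
  refine sum_range_le_columnBound (q := fun j i ↦ pr j i / M ^ j) hc hb0 hb1 (by simpa using h00)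
    (fun i ↦ by simpa using h0 i) (fun j ↦ ?_) (fun j i ↦ ?_) J i
  · exact (hscale j ((hj0 j).trans_eq (mul_assoc _ _ _))).trans_eq (mul_div_assoc _ _ _)
  · refine (hscale (y := b (i + 1) * pr j (i + 1) + c * b i * pr j i + pr (j + 1) i / M) j
      ((hrec j i).trans_eq ?_)).trans_eq ?_
    · field_simp
    · field_simp
      ring

end ColumnSums

noncomputable def stepRate (p h γ x : ℝ) : ℝ := p * x / (γ + (1 - γ) * (p + h) * x)

section StepRate

variable {p h γ x : ℝ}

lemma stepRate_nonneg (hp : 0 ≤ p) (hh : 0 ≤ h) (hγ0 : 0 ≤ γ) (hγ1 : γ ≤ 1) (hx : 0 ≤ x) :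
    0 ≤ stepRate p h γ x := by
  have : 0 ≤ 1 - γ := by linarith
  unfold stepRate
  positivity

lemma stepRate_le_one (hp : 0 ≤ p) (hh : 0 ≤ h) (hph : p + h ≤ 1) (hγ0 : 0 ≤ γ) (hγ1 : γ ≤ 1)
    (hx0 : 0 ≤ x) (hx1 : x ≤ 1) : stepRate p h γ x ≤ 1 := by
  have hpx : (p + h) * x ≤ 1 := by nlinarith
  refine div_le_one_of_le₀ ?_ (by positivity)
  nlinarith

lemma gamma_mul_stepRate_le (hp : 0 ≤ p) (hh : 0 ≤ h) (hγ0 : 0 < γ) (hγ1 : γ ≤ 1) (hx : 0 ≤ x) :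
    γ * stepRate p h γ x ≤ p * x := by
  have hden : γ ≤ γ + (1 - γ) * (p + h) * x := by
    have : 0 ≤ 1 - γ := by linarith
    nlinarith [mul_nonneg (mul_nonneg this (add_nonneg hp hh)) hx]
  rw [stepRate, mul_div_left_comm]
  exact mul_le_of_le_one_right (by positivity) (div_le_one_of_le₀ hden (hγ0.le.trans hden))

end StepRate

structure IsSelfLoopFreeChain (γ : ℝ) (α : ℕ → ℝ) (pr : ℕ → ℕ → ℝ) : Prop where
  zero_zero : pr 0 0 = 1
  zero_succ : ∀ i, pr 0 (i + 1) = (1 - α i) * pr 0 i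
  succ_zero : ∀ j, pr (j + 1) 0 = ((1 - γ) * α 0) ^ (j + 1)
  succ_succ : ∀ j i, pr (j + 1) (i + 1) =
    (1 - γ) * α (i + 1) * pr j (i + 1) + γ * α i * pr j i + (1 - α i) * pr (j + 1) i

namespace IsSelfLoopFreeChain

variable {γ M c : ℝ} {α b : ℕ → ℝ} {pr : ℕ → ℕ → ℝ}

lemma succ_zero_eq (H : IsSelfLoopFreeChain γ α pr) (j : ℕ) :
    pr (j + 1) 0 = (1 - γ) * α 0 * pr j 0 := by
  cases j with
  | zero => simp [H.succ_zero, H.zero_zero]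
  | succ j => rw [H.succ_zero, H.succ_zero, pow_succ', mul_comm]

lemma nonneg (H : IsSelfLoopFreeChain γ α pr) (hγ0 : 0 ≤ γ) (hγ1 : γ ≤ 1)
    (hα0 : ∀ l, 0 ≤ α l) (hα1 : ∀ l, α l ≤ 1) (j i : ℕ) : 0 ≤ pr j i := by
  have h1γ : 0 ≤ 1 - γ := by linarith
  have h1α : ∀ l, 0 ≤ 1 - α l := fun l ↦ by linarith [hα1 l]
  induction j generalizing i with
  | zero =>
    induction i with
    | zero => simp [H.zero_zero]
    | succ i ih => rw [H.zero_succ]; exact mul_nonneg (h1α i) ih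
  | succ j ihj =>
    induction i with
    | zero => rw [H.succ_zero_eq]; exact mul_nonneg (mul_nonneg h1γ (hα0 0)) (ihj 0)
    | succ i ihi =>
      rw [H.succ_succ]
      exact add_nonneg (add_nonneg (mul_nonneg (mul_nonneg h1γ (hα0 _)) (ihj _))
        (mul_nonneg (mul_nonneg hγ0 (hα0 i)) (ihj i))) (mul_nonneg (h1α i) ihi)

lemma le_pow_mul_columnBound (H : IsSelfLoopFreeChain γ α pr) (hγ0 : 0 ≤ γ) (hγ1 : γ ≤ 1)
    (hα0 : ∀ l, 0 ≤ α l) (hα1 : ∀ l, α l ≤ 1) (hM : 0 < M) (hc : 0 ≤ c)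
    (hb0 : ∀ l, 0 ≤ b l) (hb1 : ∀ l, b l < 1)
    (hhor : ∀ l, (1 - γ) * α l ≤ M * b l) (hdiag : ∀ l, γ * α l ≤ M * (c * b l)) (j i : ℕ) :
    pr j i ≤ M ^ j * columnBound c b i := by
  have hpr := H.nonneg hγ0 hγ1 hα0 hα1
  have hsum := sum_range_div_pow_le_columnBound (pr := pr) hM hc hb0 hb1 H.zero_zero.le
    (fun i ↦ by rw [H.zero_succ]; exact mul_le_of_le_one_left (hpr 0 i) (by linarith [hα0 i]))
    (fun j ↦ by rw [H.succ_zero_eq]; exact mul_le_mul_of_nonneg_right (hhor 0) (hpr j 0))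
    (fun j i ↦ by
      rw [H.succ_succ]
      gcongr ?_ + ?_ + ?_
      · exact mul_le_mul_of_nonneg_right (hhor _) (hpr _ _)
      · exact mul_le_mul_of_nonneg_right (hdiag _) (hpr _ _)
      · exact mul_le_of_le_one_left (hpr _ _) (by linarith [hα0 i]))
    (j + 1) i
  have hterm : pr j i / M ^ j ≤ ∑ j' ∈ range (j + 1), pr j' i / M ^ j' :=
    single_le_sum (f := fun j' ↦ pr j' i / M ^ j') (fun j' _ ↦ div_nonneg (hpr j' i) (pow_nonneg hM.le j'))
      (self_mem_range_succ j)
  rw [← div_le_iff₀' (by positivity)]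
  exact hterm.trans hsum

lemma mul_le_prod_levelFactor (H : IsSelfLoopFreeChain γ α pr) (hγ0 : 0 ≤ γ) (hγ1 : γ ≤ 1)
    (hα0 : ∀ l, 0 ≤ α l) (hα1 : ∀ l, α l ≤ 1) (hM : 0 < M) (hc : 0 ≤ c)
    (hb0 : ∀ l, 0 ≤ b l) (hb1 : ∀ l, b l < 1)
    (hhor : ∀ l, (1 - γ) * α l ≤ M * b l) (hdiag : ∀ l, γ * α l ≤ M * (c * b l)) (n i : ℕ) :
    α i * pr n i ≤ (1 + c) * (M ^ (n + 1) * ∏ l ∈ range (i + 1), levelFactor c (b l)) := by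
  have hα : α i ≤ (1 + c) * (M * b i) := by linarith [hhor i, hdiag i]
  calc α i * pr n i ≤ (1 + c) * (M * b i) * (M ^ n * columnBound c b i) :=
        mul_le_mul hα (H.le_pow_mul_columnBound hγ0 hγ1 hα0 hα1 hM hc hb0 hb1 hhor hdiag n i)
          (H.nonneg hγ0 hγ1 hα0 hα1 n i) (mul_nonneg (by linarith) (mul_nonneg hM.le (hb0 i)))
    _ = (1 + c) * (M ^ (n + 1) * (b i * columnBound c b i)) := by ring
    _ ≤ (1 + c) * (M ^ (n + 1) * ∏ l ∈ range (i + 1), levelFactor c (b l)) := by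
        gcongr
        exact mul_columnBound_le_prod hc hb0 hb1 i

end IsSelfLoopFreeChain

theorem selfloop_free_general_upper_bound_general
    (p h γ : ℝ) (hp : 0 < p) (hh : 0 ≤ h) (hph : p + h ≤ 1)
    (hγ0 : 0 < γ) (hγ1 : γ < 1)
    (f : ℕ → ℝ) (hf0 : ∀ l, 0 ≤ f l) (hf1 : ∀ l, f l ≤ 1)
    (α : ℕ → ℝ)
    (hα : ∀ l, α l = p * (1 - f l) / (γ + (1 - γ) * (p + h) * (1 - f l)))
    (pr : ℕ → ℕ → ℝ)
    (hpr00 : pr 0 0 = 1)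
    (hpr0 : ∀ i, pr 0 (i + 1) = (1 - α i) * pr 0 i)
    (hprj0 : ∀ j, pr (j + 1) 0 = ((1 - γ) * α 0) ^ (j + 1))
    (hprrec : ∀ j i, pr (j + 1) (i + 1) =
      (1 - γ) * α (i + 1) * pr j (i + 1) + γ * α i * pr j i + (1 - α i) * pr (j + 1) i)
    (d : ℝ) (hd : 0 < d) (hfd : ∀ l, 1 - f l < d)
    (β : ℕ → ℝ) (hβ : ∀ l, β l = Real.sqrt ((1 - f l) / d))
    (θ : ℝ) (hθ : (1 - γ) / γ ≤ θ)
    (k : ℕ) (hk : 1 ≤ k) (T : ℕ) :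
    ∑ i ∈ Finset.range T, α i * pr (k - 1) i ≤
      (1 + θ⁻¹) * ∑ L ∈ Finset.range T, (θ * p * d) ^ k *
        ∏ l ∈ Finset.range (L + 1), (1 + (1 + θ⁻¹) * (β l / (1 - β l))) := by
  obtain ⟨n, rfl⟩ : ∃ n, k = n + 1 := ⟨k - 1, by omega⟩
  have hθ0 : 0 < θ := (div_pos (by linarith) hγ0).trans_le hθ
  have hθγ : 1 - γ ≤ θ * γ := (div_le_iff₀ hγ0).mp hθ
  have hx0 : ∀ l, 0 ≤ 1 - f l := fun l ↦ by linarith [hf1 l]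
  have hx1 : ∀ l, 1 - f l ≤ 1 := fun l ↦ by linarith [hf0 l]
  have hβ0 : ∀ l, 0 ≤ β l := fun l ↦ (hβ l).symm ▸ Real.sqrt_nonneg _
  have hβ1 : ∀ l, β l < 1 := fun l ↦ by
    rw [hβ, Real.sqrt_lt' one_pos, one_pow, div_lt_one hd]; exact hfd l
  have hMβ : ∀ l, θ * p * d * β l ^ 2 = θ * (p * (1 - f l)) := fun l ↦ by
    rw [hβ, Real.sq_sqrt (div_nonneg (hx0 l) hd.le)]
    field_simp
  have hα0 : ∀ l, 0 ≤ α l := fun l ↦ (hα l).symm ▸ stepRate_nonneg hp.le hh hγ0.le hγ1.le (hx0 l)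
  have hα1 : ∀ l, α l ≤ 1 := fun l ↦
    (hα l).symm ▸ stepRate_le_one hp.le hh hph hγ0.le hγ1.le (hx0 l) (hx1 l)
  have hdiag : ∀ l, γ * α l ≤ p * (1 - f l) := fun l ↦
    (hα l).symm ▸ gamma_mul_stepRate_le hp.le hh hγ0 hγ1.le (hx0 l)
  have hc : 0 ≤ θ⁻¹ := inv_nonneg.mpr hθ0.le
  have hb1 : ∀ l, β l ^ 2 < 1 := fun l ↦ pow_lt_one₀ (hβ0 l) (hβ1 l) two_ne_zero
  have H : IsSelfLoopFreeChain γ α pr := ⟨hpr00, hpr0, hprj0, hprrec⟩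
  rw [Nat.add_sub_cancel, mul_sum]
  refine sum_le_sum fun i _ ↦ (H.mul_le_prod_levelFactor (M := θ * p * d) (b := fun l ↦ β l ^ 2)
    hγ0.le hγ1.le hα0 hα1 (by positivity) hc (fun l ↦ sq_nonneg _)
    hb1 (fun l ↦ ?_) (fun l ↦ ?_) n i).trans ?_
  · rw [hMβ]
    linarith [mul_le_mul_of_nonneg_right hθγ (hα0 l), mul_le_mul_of_nonneg_left (hdiag l) hθ0.le]
  · rw [mul_left_comm, hMβ, ← mul_assoc, inv_mul_cancel₀ hθ0.ne', one_mul]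
    exact hdiag l
  · gcongr with l
    · exact fun l _ ↦ zero_le_one.trans (one_le_levelFactor hc (sq_nonneg _) (hb1 l))
    · exact levelFactor_sq_le hc (hβ0 l) (hβ1 l)

/-- **Upper bound on `w̄` (Theorem 4, first statement).**
With `β l = √((1 - f l)/d) < 1` and `θ ≥ (1-γ)/γ`, the self-loop-free winning
probability `w̄(k,T) = ∑_{i<T} α i * pr (k-1) i` satisfies
`w̄(k,T) ≤ (1+θ⁻¹) * ∑_{L<T} (θpd)^k * ∏_{l=0}^{L} (1 + (1+θ⁻¹) β l/(1-β l))`. -/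
theorem selfloop_free_general_upper_bound
    (p h γ : ℝ) (hp : 0 < p) (hh : 0 ≤ h) (hph : p + h ≤ 1)
    (hγ0 : 0 < γ) (hγ1 : γ < 1)
    (f : ℕ → ℝ) (hf0 : ∀ l, 0 ≤ f l) (hf1 : ∀ l, f l ≤ 1)
    (α : ℕ → ℝ)
    (hα : ∀ l, α l = p * (1 - f l) / (γ + (1 - γ) * (p + h) * (1 - f l)))
    (pr : ℕ → ℕ → ℝ)
    (hpr00 : pr 0 0 = 1)
    (hpr0 : ∀ i, pr 0 (i + 1) = (1 - α i) * pr 0 i)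
    (hprj0 : ∀ j, pr (j + 1) 0 = ((1 - γ) * α 0) ^ (j + 1))
    (hprrec : ∀ j i, pr (j + 1) (i + 1) =
      (1 - γ) * α (i + 1) * pr j (i + 1) + γ * α i * pr j i + (1 - α i) * pr (j + 1) i)
    (d : ℝ) (hd : 0 < d) (hfd : ∀ l, 1 - f l < d)
    (β : ℕ → ℝ) (hβ : ∀ l, β l = Real.sqrt ((1 - f l) / d))
    (θ : ℝ) (hθ : (1 - γ) / γ ≤ θ)
    (k : ℕ) (hk : 1 ≤ k) (T : ℕ) (hT : 1 ≤ T) :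
    ∑ i ∈ Finset.range T, α i * pr (k - 1) i ≤
      (1 + θ⁻¹) * ∑ L ∈ Finset.range T, (θ * p * d) ^ k *
        ∏ l ∈ Finset.range (L + 1), (1 + (1 + θ⁻¹) * (β l / (1 - β l))) :=
  selfloop_free_general_upper_bound_general p h γ hp hh hph hγ0 hγ1 f hf0 hf1 α hα pr hpr00 hpr0
    hprj0 hprrec d hd hfd β hβ θ hθ k hk T
end

section
/- Let d > 0 and let β : [0,∞) → ℝ be a continuous nonincreasing function with 0 ≤ β(x) < 1 for all x ≥ 0 and d·β(l)² = 1 - f(l) for every natural number l. For an integer T ≥ 1 set c = ∫_0^{T-1} β(x)/(1-β(x)) dx + β(0)/(1-β(0)). If c ≤ k·(1-γ)/γ for an integer k ≥ 1, then w̄(k,T) ≤ (1-γ)⁻¹ · T · e^{c/(1-γ)} · [ (1-γ)·p·d/γ ]^k. -/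
/-!
Since `α l ≤ p (1 - f l)/γ = p d β(l)²/γ`, we have `(1-γ) α_l ≤ A b_l²` with `A = (1-γ)pd/γ` and
`b l = β l`. With `r = γ/(1-γ)`, the potential `E i = ∏_{l<i} (1 + r b_l²)/(1 - b_l²)` satisfies
`b_{i+1}² E_{i+1} + r b_i² E_i + E_i ≤ E_{i+1}` because `b` is nonincreasing, so `A^j E_i` is a
supersolution of the recursion of `pr` and induction gives `pr j i ≤ A^j E_i`. Each factor of `E`
is at most `exp ((1+r) b/(1-b))`, and as `x ↦ β x/(1-β x)` is nonincreasing, its values at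
`0, …, T-1` sum to at most its integral over `[0, T-1]` plus its value at `0`, which is `c`.
-/

open Finset

/-- `pr j i` obeys the recursion of the chain with horizontal, diagonal and vertical transition
probabilities `x l`, `y l`, `z l` at level `l`. -/
structure IsReachProb (x y z : ℕ → ℝ) (pr : ℕ → ℕ → ℝ) : Prop where
  zero_zero : pr 0 0 = 1
  zero_succ : ∀ i, pr 0 (i + 1) = z i * pr 0 i
  succ_zero : ∀ j, pr (j + 1) 0 = x 0 ^ (j + 1)
  succ_succ : ∀ j i,
    pr (j + 1) (i + 1) = x (i + 1) * pr j (i + 1) + y i * pr j i + z i * pr (j + 1) i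

theorem IsReachProb.le_pow_mul {x y z : ℕ → ℝ} {pr : ℕ → ℕ → ℝ} (hpr : IsReachProb x y z pr)
    (hx : ∀ l, 0 ≤ x l) (hy : ∀ l, 0 ≤ y l) (hz : ∀ l, 0 ≤ z l) {A : ℝ} {E : ℕ → ℝ}
    (hA : 0 ≤ A) (hxA : x 0 ≤ A) (hE0 : 1 ≤ E 0) (hzE : ∀ i, z i * E i ≤ E (i + 1))
    (hsuper : ∀ i, x (i + 1) * E (i + 1) + y i * E i + A * (z i * E i) ≤ A * E (i + 1)) :
    ∀ j i, pr j i ≤ A ^ j * E i := by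
  intro j
  induction j with
  | zero =>
    intro i
    induction i with
    | zero => simpa [hpr.zero_zero] using hE0
    | succ i ih =>
      rw [hpr.zero_succ, pow_zero, one_mul]
      exact (mul_le_mul_of_nonneg_left (by simpa using ih) (hz i)).trans (hzE i)
  | succ j ihj =>
    intro i
    induction i with
    | zero =>
      rw [hpr.succ_zero]
      calc x 0 ^ (j + 1) ≤ A ^ (j + 1) := pow_le_pow_left₀ (hx 0) hxA _
        _ ≤ A ^ (j + 1) * E 0 := le_mul_of_one_le_right (by positivity) hE0
    | succ i ihi =>
      rw [hpr.succ_succ]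
      calc x (i + 1) * pr j (i + 1) + y i * pr j i + z i * pr (j + 1) i
          ≤ x (i + 1) * (A ^ j * E (i + 1)) + y i * (A ^ j * E i) + z i * (A ^ (j + 1) * E i) := by
            gcongr ?_ + ?_ + ?_
            exacts [mul_le_mul_of_nonneg_left (ihj _) (hx _),
              mul_le_mul_of_nonneg_left (ihj _) (hy _), mul_le_mul_of_nonneg_left ihi (hz _)]
        _ = A ^ j * (x (i + 1) * E (i + 1) + y i * E i + A * (z i * E i)) := by ring
        _ ≤ A ^ j * (A * E (i + 1)) := by gcongr; exact hsuper i
        _ = A ^ (j + 1) * E (i + 1) := by ring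

section Potential

variable {r : ℝ} {b : ℕ → ℝ}

noncomputable def potentialFactor (r x : ℝ) : ℝ := (1 + r * x ^ 2) / (1 - x ^ 2)

theorem one_le_potentialFactor {x : ℝ} (hr : 0 ≤ r) (hx0 : 0 ≤ x) (hx1 : x < 1) :
    1 ≤ potentialFactor r x := by
  rw [potentialFactor, le_div_iff₀ (by nlinarith)]
  nlinarith [mul_nonneg hr (sq_nonneg x)]

theorem potentialFactor_le_exp {x : ℝ} (hr : 0 ≤ r) (hx0 : 0 ≤ x) (hx1 : x < 1) :
    potentialFactor r x ≤ Real.exp ((1 + r) * (x / (1 - x))) := by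
  have h1x : 0 < 1 - x := sub_pos.2 hx1
  refine le_trans ?_ (Real.add_one_le_exp _)
  rw [potentialFactor, div_le_iff₀ (by nlinarith), mul_div_assoc']
  rw [div_add_one h1x.ne', div_mul_eq_mul_div, le_div_iff₀ h1x]
  nlinarith [mul_nonneg hr (sq_nonneg x), mul_nonneg (add_nonneg zero_le_one hr) hx0]

noncomputable def chainPotential (r : ℝ) (b : ℕ → ℝ) (i : ℕ) : ℝ :=
  ∏ l ∈ range i, potentialFactor r (b l)

@[simp]
theorem chainPotential_zero : chainPotential r b 0 = 1 := prod_range_zero _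

theorem chainPotential_succ (i : ℕ) :
    chainPotential r b (i + 1) = chainPotential r b i * potentialFactor r (b i) :=
  prod_range_succ _ _

theorem chainPotential_mono (hr : 0 ≤ r) (hb0 : ∀ l, 0 ≤ b l) (hb1 : ∀ l, b l < 1) :
    Monotone (chainPotential r b) := by
  refine monotone_nat_of_le_succ fun i => ?_
  rw [chainPotential_succ]
  refine le_mul_of_one_le_right ?_ (one_le_potentialFactor hr (hb0 i) (hb1 i))
  exact prod_nonneg fun l _ => zero_le_one.trans (one_le_potentialFactor hr (hb0 l) (hb1 l))

theorem one_le_chainPotential (hr : 0 ≤ r) (hb0 : ∀ l, 0 ≤ b l) (hb1 : ∀ l, b l < 1) (i : ℕ) :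
    1 ≤ chainPotential r b i :=
  chainPotential_zero (r := r) (b := b) ▸ chainPotential_mono hr hb0 hb1 (Nat.zero_le i)

theorem chainPotential_supersolution (hr : 0 ≤ r) (hb0 : ∀ l, 0 ≤ b l) (hb1 : ∀ l, b l < 1)
    (hb : Antitone b) (i : ℕ) :
    b (i + 1) ^ 2 * chainPotential r b (i + 1) + r * b i ^ 2 * chainPotential r b i
      + chainPotential r b i ≤ chainPotential r b (i + 1) := by
  have hsq : 0 < 1 - b i ^ 2 := by nlinarith [hb0 i, hb1 i]
  have hstep : r * b i ^ 2 * chainPotential r b i + chainPotential r b i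
      = (1 - b i ^ 2) * chainPotential r b (i + 1) := by
    rw [chainPotential_succ, potentialFactor]
    field_simp
    ring
  have hmono : b (i + 1) ^ 2 ≤ b i ^ 2 := pow_le_pow_left₀ (hb0 _) (hb (Nat.le_succ i)) 2
  have hE := one_le_chainPotential hr hb0 hb1 (i + 1)
  nlinarith

theorem chainPotential_le_exp (hr : 0 ≤ r) (hb0 : ∀ l, 0 ≤ b l) (hb1 : ∀ l, b l < 1) (i : ℕ) :
    chainPotential r b i ≤ Real.exp ((1 + r) * ∑ l ∈ range i, b l / (1 - b l)) := by
  rw [mul_sum, Real.exp_sum]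
  exact prod_le_prod (fun l _ => zero_le_one.trans (one_le_potentialFactor hr (hb0 l) (hb1 l)))
    fun l _ => potentialFactor_le_exp hr (hb0 l) (hb1 l)

end Potential

theorem AntitoneOn.div_one_sub {β : ℝ → ℝ} {s : Set ℝ} (hβ : AntitoneOn β s)
    (hβ1 : ∀ x ∈ s, β x < 1) : AntitoneOn (fun x => β x / (1 - β x)) s := by
  intro x hx y hy hxy
  have hle := hβ hx hy hxy
  rw [div_le_div_iff₀ (sub_pos.2 (hβ1 y hy)) (sub_pos.2 (hβ1 x hx))]
  linarith

theorem AntitoneOn.sum_range_succ_le_integral_add {g : ℝ → ℝ} {n : ℕ}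
    (hg : AntitoneOn g (Set.Icc 0 n)) :
    ∑ l ∈ range (n + 1), g l ≤ (∫ x in (0 : ℝ)..n, g x) + g 0 := by
  have h := AntitoneOn.sum_le_integral (x₀ := 0) (a := n) (by simpa using hg)
  rw [sum_range_succ', Nat.cast_zero]
  simpa using h

section Rate

variable {p h γ u : ℝ}

theorem le_rate_denom (hγ1 : γ < 1) (hph : 0 ≤ p + h) (hu : 0 ≤ u) :
    γ ≤ γ + (1 - γ) * (p + h) * u := by
  have : 0 ≤ (1 - γ) * (p + h) * u := by have := sub_pos.2 hγ1; positivity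
  linarith

theorem rate_nonneg (hp : 0 ≤ p) (hh : 0 ≤ h) (hγ0 : 0 < γ) (hγ1 : γ < 1) (hu : 0 ≤ u) :
    0 ≤ p * u / (γ + (1 - γ) * (p + h) * u) :=
  div_nonneg (mul_nonneg hp hu) (hγ0.le.trans (le_rate_denom hγ1 (by positivity) hu))

theorem rate_le_one (hp : 0 ≤ p) (hh : 0 ≤ h) (hph : p + h ≤ 1) (hγ0 : 0 < γ) (hγ1 : γ < 1)
    (hu0 : 0 ≤ u) (hu1 : u ≤ 1) :
    p * u / (γ + (1 - γ) * (p + h) * u) ≤ 1 := by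
  refine div_le_one_of_le₀ ?_ (hγ0.le.trans (le_rate_denom hγ1 (by positivity) hu0))
  nlinarith [mul_nonneg hu0 hh, mul_le_one₀ hph hu0 hu1]

theorem rate_le_div (hp : 0 ≤ p) (hh : 0 ≤ h) (hγ0 : 0 < γ) (hγ1 : γ < 1) (hu : 0 ≤ u) :
    p * u / (γ + (1 - γ) * (p + h) * u) ≤ p * u / γ :=
  div_le_div_of_nonneg_left (mul_nonneg hp hu) hγ0 (le_rate_denom hγ1 (by positivity) hu)

end Rate

theorem IsReachProb.le_pow_mul_chainPotential {γ A : ℝ} {α b : ℕ → ℝ} {pr : ℕ → ℕ → ℝ}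
    (hpr : IsReachProb (fun l => (1 - γ) * α l) (fun l => γ * α l) (fun l => 1 - α l) pr)
    (hγ0 : 0 < γ) (hγ1 : γ < 1) (hα0 : ∀ l, 0 ≤ α l) (hα1 : ∀ l, α l ≤ 1) (hA : 0 ≤ A)
    (hαb : ∀ l, (1 - γ) * α l ≤ A * b l ^ 2)
    (hb0 : ∀ l, 0 ≤ b l) (hb1 : ∀ l, b l < 1) (hb : Antitone b) (j i : ℕ) :
    pr j i ≤ A ^ j * chainPotential (γ / (1 - γ)) b i := by
  have hγ' : 0 < 1 - γ := sub_pos.2 hγ1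
  have hr : 0 ≤ γ / (1 - γ) := by positivity
  set E := chainPotential (γ / (1 - γ)) b
  have hE : ∀ i, 0 ≤ E i := fun i => zero_le_one.trans (one_le_chainPotential hr hb0 hb1 i)
  have hb2 : ∀ l, b l ^ 2 ≤ 1 := fun l => pow_le_one₀ (hb0 l) (hb1 l).le
  have hdiag : ∀ l, γ * α l ≤ A * (γ / (1 - γ) * b l ^ 2) := fun l => by
    have := mul_le_mul_of_nonneg_left (hαb l) hr
    rwa [← mul_assoc, div_mul_cancel₀ _ hγ'.ne', mul_left_comm] at this
  refine hpr.le_pow_mul (fun l => by have := hα0 l; positivity)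
    (fun l => by have := hα0 l; positivity)
    (fun l => sub_nonneg.2 (hα1 l)) hA ((hαb 0).trans (mul_le_of_le_one_right hA (hb2 0)))
    (by simp [E]) (fun i => ?_) (fun i => ?_) j i
  · exact (mul_le_of_le_one_left (hE i) (by linarith [hα0 i])).trans
      (chainPotential_mono hr hb0 hb1 (Nat.le_succ i))
  · calc (1 - γ) * α (i + 1) * E (i + 1) + γ * α i * E i + A * ((1 - α i) * E i)
        ≤ A * b (i + 1) ^ 2 * E (i + 1) + A * (γ / (1 - γ) * b i ^ 2) * E i + A * (1 * E i) := by
          have := hE i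
          have := hE (i + 1)
          gcongr ?_ * _ + ?_ * _ + A * (?_ * _)
          exacts [hαb _, hdiag _, by linarith [hα0 i]]
      _ = A * (b (i + 1) ^ 2 * E (i + 1) + γ / (1 - γ) * b i ^ 2 * E i + E i) := by ring
      _ ≤ A * E (i + 1) := by gcongr; exact chainPotential_supersolution hr hb0 hb1 hb i

theorem chainPotential_le_exp_integral {r : ℝ} {β : ℝ → ℝ} (hr : 0 ≤ r)
    (hβ : AntitoneOn β (Set.Ici 0)) (hβ0 : ∀ x : ℝ, 0 ≤ x → 0 ≤ β x)
    (hβ1 : ∀ x : ℝ, 0 ≤ x → β x < 1) {i n : ℕ} (hi : i ≤ n + 1) :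
    chainPotential r (fun l => β l) i ≤
      Real.exp ((1 + r) * ((∫ x in (0 : ℝ)..n, β x / (1 - β x)) + β 0 / (1 - β 0))) := by
  have hb0 (l : ℕ) : 0 ≤ β l := hβ0 l l.cast_nonneg
  have hb1 (l : ℕ) : β l < 1 := hβ1 l l.cast_nonneg
  have hg : AntitoneOn (fun x => β x / (1 - β x)) (Set.Icc 0 n) :=
    ((hβ.div_one_sub hβ1).mono Set.Icc_subset_Ici_self)
  calc chainPotential r (fun l => β l) i ≤ chainPotential r (fun l => β l) (n + 1) :=
        chainPotential_mono hr hb0 hb1 hi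
    _ ≤ Real.exp ((1 + r) * ∑ l ∈ range (n + 1), β l / (1 - β l)) :=
        chainPotential_le_exp hr hb0 hb1 _
    _ ≤ _ := by
        gcongr
        exact hg.sum_range_succ_le_integral_add

theorem IsReachProb.sum_mul_le {γ A c : ℝ} {α : ℕ → ℝ} {β : ℝ → ℝ} {pr : ℕ → ℕ → ℝ} {T k : ℕ}
    (hpr : IsReachProb (fun l => (1 - γ) * α l) (fun l => γ * α l) (fun l => 1 - α l) pr)
    (hγ0 : 0 < γ) (hγ1 : γ < 1) (hα0 : ∀ l, 0 ≤ α l) (hα1 : ∀ l, α l ≤ 1) (hA : 0 ≤ A)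
    (hαβ : ∀ l : ℕ, (1 - γ) * α l ≤ A * β l ^ 2) (hβ : AntitoneOn β (Set.Ici 0))
    (hβ0 : ∀ x : ℝ, 0 ≤ x → 0 ≤ β x) (hβ1 : ∀ x : ℝ, 0 ≤ x → β x < 1)
    (hc : (∫ x in (0 : ℝ)..((T : ℝ) - 1), β x / (1 - β x)) + β 0 / (1 - β 0) ≤ c) (hk : 1 ≤ k) :
    ∑ i ∈ range T, α i * pr (k - 1) i ≤ (1 - γ)⁻¹ * T * Real.exp (c / (1 - γ)) * A ^ k := by
  have hγ' : 0 < 1 - γ := sub_pos.2 hγ1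
  have hb0 (l : ℕ) : 0 ≤ β l := hβ0 l l.cast_nonneg
  have hb1 (l : ℕ) : β l < 1 := hβ1 l l.cast_nonneg
  have hαA (l : ℕ) : α l ≤ A / (1 - γ) := by
    rw [le_div_iff₀' hγ']
    exact (hαβ l).trans (mul_le_of_le_one_right hA (pow_le_one₀ (hb0 l) (hb1 l).le))
  have hpr := hpr.le_pow_mul_chainPotential hγ0 hγ1 hα0 hα1 hA hαβ hb0 hb1
    (fun m n hmn => hβ (Set.mem_Ici.2 m.cast_nonneg) (Set.mem_Ici.2 n.cast_nonneg)
      (Nat.cast_le.2 hmn)) (k - 1)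
  have hterm (i : ℕ) (hi : i ∈ range T) :
      α i * pr (k - 1) i ≤ (1 - γ)⁻¹ * Real.exp (c / (1 - γ)) * A ^ k := by
    obtain ⟨n, rfl⟩ : ∃ n, T = n + 1 := ⟨T - 1, by have := mem_range.1 hi; omega⟩
    rw [Nat.cast_add_one, add_sub_cancel_right] at hc
    have hE := (chainPotential_le_exp_integral (div_nonneg hγ0.le hγ'.le) hβ hβ0 hβ1
      (mem_range.1 hi).le).trans (Real.exp_le_exp.2 (mul_le_mul_of_nonneg_left hc (by positivity)))
    rw [one_add_div hγ'.ne', sub_add_cancel, one_div_mul_eq_div] at hE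
    calc α i * pr (k - 1) i ≤ α i * (A ^ (k - 1) * Real.exp (c / (1 - γ))) :=
          mul_le_mul_of_nonneg_left
            ((hpr i).trans (mul_le_mul_of_nonneg_left hE (pow_nonneg hA _))) (hα0 i)
      _ ≤ A / (1 - γ) * (A ^ (k - 1) * Real.exp (c / (1 - γ))) :=
          mul_le_mul_of_nonneg_right (hαA i) (by positivity)
      _ = (1 - γ)⁻¹ * Real.exp (c / (1 - γ)) * A ^ k := by
          rw [← mul_pow_sub_one (Nat.one_le_iff_ne_zero.1 hk) A]; ring
  calc ∑ i ∈ range T, α i * pr (k - 1) i ≤ T • ((1 - γ)⁻¹ * Real.exp (c / (1 - γ)) * A ^ k) := by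
        simpa using sum_le_card_nsmul _ _ _ hterm
    _ = _ := by rw [nsmul_eq_mul]; ring

theorem selfloop_free_integral_upper_bound_general
    (p h γ : ℝ) (hp : 0 < p) (hh : 0 ≤ h) (hph : p + h ≤ 1)
    (hγ0 : 0 < γ) (hγ1 : γ < 1)
    (f : ℕ → ℝ) (hf0 : ∀ l, 0 ≤ f l) (hf1 : ∀ l, f l ≤ 1)
    (α : ℕ → ℝ)
    (hα : ∀ l, α l = p * (1 - f l) / (γ + (1 - γ) * (p + h) * (1 - f l)))
    (pr : ℕ → ℕ → ℝ)
    (hpr00 : pr 0 0 = 1)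
    (hpr0 : ∀ i, pr 0 (i + 1) = (1 - α i) * pr 0 i)
    (hprj0 : ∀ j, pr (j + 1) 0 = ((1 - γ) * α 0) ^ (j + 1))
    (hprrec : ∀ j i, pr (j + 1) (i + 1) =
      (1 - γ) * α (i + 1) * pr j (i + 1) + γ * α i * pr j i + (1 - α i) * pr (j + 1) i)
    (d : ℝ) (hd : 0 < d)
    (β : ℝ → ℝ)
    (hβmono : AntitoneOn β (Set.Ici (0 : ℝ)))
    (hβ0 : ∀ x : ℝ, 0 ≤ x → 0 ≤ β x)
    (hβ1 : ∀ x : ℝ, 0 ≤ x → β x < 1)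
    (hβf : ∀ l : ℕ, d * (β l) ^ 2 = 1 - f l)
    (T : ℕ)
    (c : ℝ)
    (hc : c = (∫ x in (0 : ℝ)..((T : ℝ) - 1), β x / (1 - β x)) + β 0 / (1 - β 0))
    (k : ℕ) (hk : 1 ≤ k) :
    ∑ i ∈ Finset.range T, α i * pr (k - 1) i ≤
      (1 - γ)⁻¹ * (T : ℝ) * Real.exp (c / (1 - γ)) * ((1 - γ) * p * d / γ) ^ k := by
  have hu0 (l : ℕ) : 0 ≤ 1 - f l := sub_nonneg.2 (hf1 l)
  have hα0 (l : ℕ) : 0 ≤ α l := hα l ▸ rate_nonneg hp.le hh hγ0 hγ1 (hu0 l)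
  have hα1 (l : ℕ) : α l ≤ 1 :=
    hα l ▸ rate_le_one hp.le hh hph hγ0 hγ1 (hu0 l) (by linarith [hf0 l])
  have hαβ (l : ℕ) : (1 - γ) * α l ≤ (1 - γ) * p * d / γ * β l ^ 2 := by
    calc (1 - γ) * α l ≤ (1 - γ) * (p * (1 - f l) / γ) :=
          mul_le_mul_of_nonneg_left (hα l ▸ rate_le_div hp.le hh hγ0 hγ1 (hu0 l)) (by linarith)
      _ = (1 - γ) * p * d / γ * β l ^ 2 := by rw [← hβf l]; ring
  exact IsReachProb.sum_mul_le ⟨hpr00, hpr0, hprj0, hprrec⟩ hγ0 hγ1 hα0 hα1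
    (by have := sub_pos.2 hγ1; positivity) hαβ hβmono hβ0 hβ1 hc.ge hk

/-- **Upper bound on `w̄` via the integral of the learning rate (Theorem 4, second statement).**
Let `β : [0,∞) → ℝ` be continuous nonincreasing with `0 ≤ β x < 1` and
`d·β(l)² = 1 - f l` on naturals, and set
`c = ∫_0^{T-1} β(x)/(1-β(x)) dx + β(0)/(1-β(0))`.  If `c ≤ k(1-γ)/γ` then
`w̄(k,T) ≤ (1-γ)⁻¹ · T · e^{c/(1-γ)} · ((1-γ)pd/γ)^k`. -/
theorem selfloop_free_integral_upper_bound
    (p h γ : ℝ) (hp : 0 < p) (hh : 0 ≤ h) (hph : p + h ≤ 1)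
    (hγ0 : 0 < γ) (hγ1 : γ < 1)
    (f : ℕ → ℝ) (hf0 : ∀ l, 0 ≤ f l) (hf1 : ∀ l, f l ≤ 1)
    (α : ℕ → ℝ)
    (hα : ∀ l, α l = p * (1 - f l) / (γ + (1 - γ) * (p + h) * (1 - f l)))
    (pr : ℕ → ℕ → ℝ)
    (hpr00 : pr 0 0 = 1)
    (hpr0 : ∀ i, pr 0 (i + 1) = (1 - α i) * pr 0 i)
    (hprj0 : ∀ j, pr (j + 1) 0 = ((1 - γ) * α 0) ^ (j + 1))
    (hprrec : ∀ j i, pr (j + 1) (i + 1) =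
      (1 - γ) * α (i + 1) * pr j (i + 1) + γ * α i * pr j i + (1 - α i) * pr (j + 1) i)
    (d : ℝ) (hd : 0 < d)
    (β : ℝ → ℝ)
    (hβcont : ContinuousOn β (Set.Ici (0 : ℝ)))
    (hβmono : AntitoneOn β (Set.Ici (0 : ℝ)))
    (hβ0 : ∀ x : ℝ, 0 ≤ x → 0 ≤ β x)
    (hβ1 : ∀ x : ℝ, 0 ≤ x → β x < 1)
    (hβf : ∀ l : ℕ, d * (β l) ^ 2 = 1 - f l)
    (T : ℕ) (hT : 1 ≤ T)
    (c : ℝ)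
    (hc : c = (∫ x in (0 : ℝ)..((T : ℝ) - 1), β x / (1 - β x)) + β 0 / (1 - β 0))
    (k : ℕ) (hk : 1 ≤ k)
    (hck : c ≤ (k : ℝ) * (1 - γ) / γ) :
    ∑ i ∈ Finset.range T, α i * pr (k - 1) i ≤
      (1 - γ)⁻¹ * (T : ℝ) * Real.exp (c / (1 - γ)) * ((1 - γ) * p * d / γ) ^ k :=
  selfloop_free_integral_upper_bound_general p h γ hp hh hph hγ0 hγ1 f hf0 hf1 α hα pr hpr00 hpr0
    hprj0 hprrec d hd β hβmono hβ0 hβ1 hβf T c hc k hk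
end

section
/- Let d > 0 be a real such that 1 - f(l) ≤ d/(l+2)² for all l ∈ ℕ. Then for all integers k ≥ 1 and T with 1 ≤ T ≤ e^{-1 + k(1-γ)/γ}: w̄(k,T) ≤ (e^{1/(1-γ)}/(1-γ)) · T^{1 + 1/(1-γ)} · [ (1-γ)·p·d/γ ]^k. -/
open Finset Real

/-! Normalise column `j` by `X ^ j` with `X = (1 - γ) c`, where `α l ≤ c / (l + 2)²`
(`c = p d / γ` here). The recurrence then shows that the normalised column sums
`S i = ∑ j, pr j i / X ^ j` satisfy `(1 - 1/(i+3)²) S (i+1) ≤ (1 + x/(i+2)²) S i` with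
`x = γ / (1 - γ)`, and `(1 - 1/4) S 0 ≤ 1` by a geometric series. Since
`∏ (1 - 1/(l+2)²) ≥ 1/2` telescopes and `∏ (1 + x/(l+2)²) ≤ exp (x ∑ 1/(l+2)²) ≤ exp x`,
every `S i` is at most `2 exp x ≤ exp (1 / (1 - γ))`, so `pr (k-1) i ≤ exp (1/(1-γ)) X ^ (k-1)`
uniformly in the level `i`. Summing `α i ≤ X / ((1 - γ) (i + 2)²)` over `i` costs one more
factor `X / (1 - γ)`, because `∑ 1/(i+2)² ≤ 1`. -/

theorem one_sub_mul_sum_range_le_one_add_mul {u v : ℕ → ℝ} {a b : ℝ}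
    (hu : ∀ j, 0 ≤ u j) (hv : ∀ j, 0 ≤ v j) (ha : 0 ≤ a) (hb : 0 ≤ b) (h0 : v 0 ≤ u 0)
    (hrec : ∀ j, v (j + 1) ≤ a * v j + b * u j + u (j + 1)) (n : ℕ) :
    (1 - a) * ∑ j ∈ range n, v j ≤ (1 + b) * ∑ j ∈ range n, u j := by
  cases n with
  | zero => simp
  | succ m =>
    have hstep : ∑ j ∈ range (m + 1), v j ≤
        a * ∑ j ∈ range m, v j + b * ∑ j ∈ range m, u j + ∑ j ∈ range (m + 1), u j := by
      calc ∑ j ∈ range (m + 1), v j = ∑ j ∈ range m, v (j + 1) + v 0 := sum_range_succ' _ _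
        _ ≤ ∑ j ∈ range m, (a * v j + b * u j + u (j + 1)) + u 0 :=
            add_le_add (sum_le_sum fun j _ => hrec j) h0
        _ = _ := by
            rw [sum_add_distrib, sum_add_distrib, ← mul_sum, ← mul_sum, sum_range_succ' u]
            ring
    have hv_mono : ∑ j ∈ range m, v j ≤ ∑ j ∈ range (m + 1), v j :=
      sum_le_sum_of_subset_of_nonneg (range_subset_range.2 m.le_succ) fun j _ _ => hv j
    have hu_mono : ∑ j ∈ range m, u j ≤ ∑ j ∈ range (m + 1), u j :=
      sum_le_sum_of_subset_of_nonneg (range_subset_range.2 m.le_succ) fun j _ _ => hu j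
    nlinarith [mul_le_mul_of_nonneg_left hv_mono ha, mul_le_mul_of_nonneg_left hu_mono hb]

theorem prod_one_sub_mul_sum_range_le_prod_one_add {q : ℕ → ℕ → ℝ} {a b : ℕ → ℝ}
    (hq : ∀ j i, 0 ≤ q j i) (ha0 : ∀ l, 0 ≤ a l) (ha1 : ∀ l, a l ≤ 1) (hb : ∀ l, 0 ≤ b l)
    (hcol : ∀ j, q j 0 ≤ a 0 ^ j) (hrow : ∀ i, q 0 (i + 1) ≤ q 0 i)
    (hrec : ∀ j i, q (j + 1) (i + 1) ≤ a (i + 1) * q j (i + 1) + b i * q j i + q (j + 1) i)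
    (i n : ℕ) :
    (∏ l ∈ range (i + 1), (1 - a l)) * ∑ j ∈ range n, q j i ≤ ∏ l ∈ range i, (1 + b l) := by
  induction i with
  | zero =>
    calc (∏ l ∈ range 1, (1 - a l)) * ∑ j ∈ range n, q j 0
        ≤ (1 - a 0) * ∑ j ∈ range n, a 0 ^ j := by
          rw [prod_range_one]
          exact mul_le_mul_of_nonneg_left (sum_le_sum fun j _ => hcol j) (by linarith [ha1 0])
      _ = 1 - a 0 ^ n := mul_neg_geom_sum _ _
      _ ≤ ∏ l ∈ range 0, (1 + b l) := by simpa using pow_nonneg (ha0 0) n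
  | succ i ih =>
    have hprod : 0 ≤ ∏ l ∈ range (i + 1), (1 - a l) :=
      prod_nonneg fun l _ => by linarith [ha1 l]
    have hcolumn := one_sub_mul_sum_range_le_one_add_mul (fun j => hq j i) (fun j => hq j (i + 1))
      (ha0 (i + 1)) (hb i) (hrow i) (fun j => hrec j i) n
    calc (∏ l ∈ range (i + 2), (1 - a l)) * ∑ j ∈ range n, q j (i + 1)
        = (∏ l ∈ range (i + 1), (1 - a l)) * ((1 - a (i + 1)) * ∑ j ∈ range n, q j (i + 1)) := by
          rw [prod_range_succ _ (i + 1), mul_assoc]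
      _ ≤ (∏ l ∈ range (i + 1), (1 - a l)) * ((1 + b i) * ∑ j ∈ range n, q j i) :=
          mul_le_mul_of_nonneg_left hcolumn hprod
      _ = (1 + b i) * ((∏ l ∈ range (i + 1), (1 - a l)) * ∑ j ∈ range n, q j i) := by ring
      _ ≤ (1 + b i) * ∏ l ∈ range i, (1 + b l) :=
          mul_le_mul_of_nonneg_left ih (by linarith [hb i])
      _ = ∏ l ∈ range (i + 1), (1 + b l) := by rw [prod_range_succ, mul_comm]

theorem half_le_prod_range_one_sub_inv_sq (n : ℕ) :
    1 / 2 ≤ ∏ l ∈ range n, (1 - 1 / ((l : ℝ) + 2) ^ 2) := by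
  suffices h : ∏ l ∈ range n, (1 - 1 / ((l : ℝ) + 2) ^ 2) = ((n : ℝ) + 2) / (2 * ((n : ℝ) + 1)) by
    rw [h, div_le_div_iff₀ (by norm_num) (by positivity)]
    linarith
  induction n with
  | zero => norm_num
  | succ n ih =>
    rw [prod_range_succ, ih]
    push_cast
    field_simp
    ring

theorem sum_range_inv_sq_add_two_le_one (n : ℕ) :
    ∑ l ∈ range n, 1 / ((l : ℝ) + 2) ^ 2 ≤ 1 := by
  have h := sum_Ioo_inv_sq_le (α := ℝ) 1 (n + 2)
  rw [← Finset.Ico_add_one_left_eq_Ioo, sum_Ico_eq_sum_range] at h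
  norm_num at h
  simpa [add_comm] using h

theorem prod_range_one_add_div_sq_le_exp {x : ℝ} (hx : 0 ≤ x) (n : ℕ) :
    ∏ l ∈ range n, (1 + x * (1 / ((l : ℝ) + 2) ^ 2)) ≤ exp x := by
  refine (prod_one_add_le_exp_sum _ fun l => by positivity).trans (exp_le_exp.2 ?_)
  rw [← mul_sum]
  exact mul_le_of_le_one_right hx (sum_range_inv_sq_add_two_le_one n)

-- `α l = advanceProb p h γ (1 - f l)`
noncomputable def advanceProb (p h γ u : ℝ) : ℝ := p * u / (γ + (1 - γ) * (p + h) * u)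

section advanceProb

variable {p h γ u : ℝ}

theorem advanceProb_nonneg (hp : 0 ≤ p) (hh : 0 ≤ h) (hγ0 : 0 ≤ γ) (hγ1 : γ ≤ 1) (hu : 0 ≤ u) :
    0 ≤ advanceProb p h γ u := by
  unfold advanceProb
  have : 0 ≤ 1 - γ := by linarith
  positivity

theorem advanceProb_le_one (hp : 0 ≤ p) (hh : 0 ≤ h) (hph : p + h ≤ 1) (hγ0 : 0 < γ)
    (hγ1 : γ ≤ 1) (hu0 : 0 ≤ u) (hu1 : u ≤ 1) : advanceProb p h γ u ≤ 1 := by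
  have h1γ : 0 ≤ 1 - γ := by linarith
  rw [advanceProb, div_le_one (by positivity)]
  have hpu : p * u ≤ 1 := mul_le_one₀ (by linarith) hu0 hu1
  nlinarith [mul_nonneg h1γ (mul_nonneg hh hu0), mul_nonneg h1γ hu0]

theorem advanceProb_le_div (hp : 0 ≤ p) (hh : 0 ≤ h) (hγ0 : 0 < γ) (hγ1 : γ ≤ 1) (hu : 0 ≤ u) :
    advanceProb p h γ u ≤ p * u / γ := by
  have h1γ : 0 ≤ 1 - γ := by linarith
  refine div_le_div_of_nonneg_left (by positivity) hγ0 ?_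
  simp only [le_add_iff_nonneg_right]
  positivity

end advanceProb

structure SelfloopFreeRecurrence (γ : ℝ) (α : ℕ → ℝ) (pr : ℕ → ℕ → ℝ) : Prop where
  zero_zero : pr 0 0 = 1
  zero_succ : ∀ i, pr 0 (i + 1) = (1 - α i) * pr 0 i
  succ_zero : ∀ j, pr (j + 1) 0 = ((1 - γ) * α 0) ^ (j + 1)
  succ_succ : ∀ j i, pr (j + 1) (i + 1) =
    (1 - γ) * α (i + 1) * pr j (i + 1) + γ * α i * pr j i + (1 - α i) * pr (j + 1) i

namespace SelfloopFreeRecurrence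

variable {γ : ℝ} {α : ℕ → ℝ} {pr : ℕ → ℕ → ℝ}

theorem zero_right (hpr : SelfloopFreeRecurrence γ α pr) (j : ℕ) :
    pr j 0 = ((1 - γ) * α 0) ^ j := by
  cases j with
  | zero => simp [hpr.zero_zero]
  | succ j => exact hpr.succ_zero j

theorem nonneg (hpr : SelfloopFreeRecurrence γ α pr) (hγ0 : 0 ≤ γ) (hγ1 : γ ≤ 1)
    (hα0 : ∀ l, 0 ≤ α l) (hα1 : ∀ l, α l ≤ 1) (j i : ℕ) : 0 ≤ pr j i := by
  have hα1' : ∀ l, 0 ≤ 1 - α l := fun l => sub_nonneg.2 (hα1 l)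
  induction j generalizing i with
  | zero =>
    induction i with
    | zero => simp [hpr.zero_zero]
    | succ i ih => rw [hpr.zero_succ]; exact mul_nonneg (hα1' i) ih
  | succ j ihj =>
    induction i with
    | zero => rw [hpr.zero_right]; exact pow_nonneg (mul_nonneg (by linarith) (hα0 0)) _
    | succ i ihi =>
      rw [hpr.succ_succ]
      have h1γ : 0 ≤ 1 - γ := by linarith
      exact add_nonneg (add_nonneg (mul_nonneg (mul_nonneg h1γ (hα0 _)) (ihj _))
        (mul_nonneg (mul_nonneg hγ0 (hα0 i)) (ihj i))) (mul_nonneg (hα1' i) ihi)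

theorem div_pow_succ_succ_le (hpr : SelfloopFreeRecurrence γ α pr) (hγ0 : 0 ≤ γ) (hγ1 : γ ≤ 1)
    (hα0 : ∀ l, 0 ≤ α l) (hα1 : ∀ l, α l ≤ 1) {X : ℝ} (hX : 0 < X) {a b : ℕ → ℝ}
    (ha : ∀ l, (1 - γ) * α l ≤ X * a l) (hb : ∀ l, γ * α l ≤ X * b l) (j i : ℕ) :
    pr (j + 1) (i + 1) / X ^ (j + 1) ≤
      a (i + 1) * (pr j (i + 1) / X ^ j) + b i * (pr j i / X ^ j) + pr (j + 1) i / X ^ (j + 1) := by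
  have h0 := hpr.nonneg hγ0 hγ1 hα0 hα1
  have hXj : 0 < X ^ j := pow_pos hX j
  have hsplit : a (i + 1) * (pr j (i + 1) / X ^ j) + b i * (pr j i / X ^ j)
      + pr (j + 1) i / X ^ (j + 1)
      = (X * a (i + 1) * pr j (i + 1) + X * b i * pr j i + pr (j + 1) i) / X ^ (j + 1) := by
    field_simp
    ring
  rw [hsplit, hpr.succ_succ]
  gcongr ?_ / _
  have := mul_le_mul_of_nonneg_right (ha (i + 1)) (h0 j (i + 1))
  have := mul_le_mul_of_nonneg_right (hb i) (h0 j i)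
  have := mul_nonneg (hα0 i) (h0 (j + 1) i)
  nlinarith

theorem sum_range_div_pow_le (hpr : SelfloopFreeRecurrence γ α pr) (hγ0 : 0 ≤ γ) (hγ1 : γ < 1)
    (hα0 : ∀ l, 0 ≤ α l) (hα1 : ∀ l, α l ≤ 1) {c : ℝ} (hc : 0 < c)
    (hαc : ∀ l, α l ≤ c / ((l : ℝ) + 2) ^ 2) (i n : ℕ) :
    ∑ j ∈ range n, pr j i / ((1 - γ) * c) ^ j ≤ 2 * exp (γ / (1 - γ)) := by
  have h1γ : 0 < 1 - γ := by linarith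
  set X := (1 - γ) * c with hXdef
  set x := γ / (1 - γ) with hxdef
  have hX : 0 < X := mul_pos h1γ hc
  have hx : 0 ≤ x := by positivity
  have hXa : ∀ l : ℕ, (1 - γ) * α l ≤ X * (1 / ((l : ℝ) + 2) ^ 2) := fun l => by
    calc (1 - γ) * α l ≤ (1 - γ) * (c / ((l : ℝ) + 2) ^ 2) :=
          mul_le_mul_of_nonneg_left (hαc l) h1γ.le
      _ = X * (1 / ((l : ℝ) + 2) ^ 2) := by ring
  have hXb : ∀ l : ℕ, γ * α l ≤ X * (x * (1 / ((l : ℝ) + 2) ^ 2)) := fun l => by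
    calc γ * α l ≤ γ * (c / ((l : ℝ) + 2) ^ 2) := mul_le_mul_of_nonneg_left (hαc l) hγ0
      _ = X * (x * (1 / ((l : ℝ) + 2) ^ 2)) := by rw [hXdef, hxdef]; field_simp
  have hpr0 := hpr.nonneg hγ0 hγ1.le hα0 hα1
  have hq : ∀ j i, 0 ≤ pr j i / X ^ j := fun j i => div_nonneg (hpr0 j i) (pow_pos hX j).le
  have hcol : ∀ j, pr j 0 / X ^ j ≤ (1 / (((0 : ℕ) : ℝ) + 2) ^ 2) ^ j := fun j => by
    rw [hpr.zero_right, ← div_pow]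
    refine pow_le_pow_left₀ (div_nonneg (mul_nonneg h1γ.le (hα0 0)) hX.le) ?_ j
    rw [div_le_iff₀' hX]
    exact hXa 0
  have hrow : ∀ i, pr 0 (i + 1) / X ^ 0 ≤ pr 0 i / X ^ 0 := fun i => by
    rw [pow_zero, div_one, div_one, hpr.zero_succ]
    nlinarith [hα0 i, hpr0 0 i]
  have ha1 : ∀ l : ℕ, 1 / ((l : ℝ) + 2) ^ 2 ≤ 1 := fun l => by
    rw [div_le_one (by positivity)]
    nlinarith [Nat.cast_nonneg (α := ℝ) l]
  have hbound := prod_one_sub_mul_sum_range_le_prod_one_add hq (fun l => by positivity) ha1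
    (fun l => mul_nonneg hx (by positivity)) hcol hrow
    (hpr.div_pow_succ_succ_le hγ0 hγ1.le hα0 hα1 hX hXa hXb) i n
  calc ∑ j ∈ range n, pr j i / X ^ j
      = 2 * (1 / 2 * ∑ j ∈ range n, pr j i / X ^ j) := by ring
    _ ≤ 2 * ((∏ l ∈ range (i + 1), (1 - 1 / ((l : ℝ) + 2) ^ 2)) *
          ∑ j ∈ range n, pr j i / X ^ j) := by
        gcongr
        · exact sum_nonneg fun j _ => hq j i
        · exact half_le_prod_range_one_sub_inv_sq (i + 1)
    _ ≤ 2 * exp x := by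
        gcongr
        exact hbound.trans (prod_range_one_add_div_sq_le_exp hx i)

theorem le_exp_mul_pow (hpr : SelfloopFreeRecurrence γ α pr) (hγ0 : 0 ≤ γ) (hγ1 : γ < 1)
    (hα0 : ∀ l, 0 ≤ α l) (hα1 : ∀ l, α l ≤ 1) {c : ℝ} (hc : 0 < c)
    (hαc : ∀ l, α l ≤ c / ((l : ℝ) + 2) ^ 2) (j i : ℕ) :
    pr j i ≤ exp (1 / (1 - γ)) * ((1 - γ) * c) ^ j := by
  have h1γ : 0 < 1 - γ := by linarith
  have hX : 0 < ((1 - γ) * c) ^ j := pow_pos (mul_pos h1γ hc) j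
  have hterm : pr j i / ((1 - γ) * c) ^ j ≤ 2 * exp (γ / (1 - γ)) :=
    (single_le_sum (fun j' _ => div_nonneg (hpr.nonneg hγ0 hγ1.le hα0 hα1 j' i)
      (pow_pos (mul_pos h1γ hc) j').le) (self_mem_range_succ j)).trans
      (hpr.sum_range_div_pow_le hγ0 hγ1 hα0 hα1 hc hαc i (j + 1))
  have hexp : 2 * exp (γ / (1 - γ)) ≤ exp (1 / (1 - γ)) := by
    rw [show 1 / (1 - γ) = 1 + γ / (1 - γ) by field_simp; ring, exp_add]
    gcongr
    linarith [add_one_le_exp (1 : ℝ)]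
  calc pr j i = pr j i / ((1 - γ) * c) ^ j * ((1 - γ) * c) ^ j := (div_mul_cancel₀ _ hX.ne').symm
    _ ≤ exp (1 / (1 - γ)) * ((1 - γ) * c) ^ j := by gcongr; exact hterm.trans hexp

theorem sum_range_mul_le (hpr : SelfloopFreeRecurrence γ α pr) (hγ0 : 0 ≤ γ) (hγ1 : γ < 1)
    (hα0 : ∀ l, 0 ≤ α l) (hα1 : ∀ l, α l ≤ 1) {c : ℝ} (hc : 0 < c)
    (hαc : ∀ l, α l ≤ c / ((l : ℝ) + 2) ^ 2) {k : ℕ} (hk : 1 ≤ k) (T : ℕ) :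
    ∑ i ∈ range T, α i * pr (k - 1) i ≤ exp (1 / (1 - γ)) / (1 - γ) * ((1 - γ) * c) ^ k := by
  obtain ⟨k, rfl⟩ := Nat.exists_eq_add_of_le' hk
  have h1γ : 0 < 1 - γ := by linarith
  set E := exp (1 / (1 - γ)) * ((1 - γ) * c) ^ k
  have hE : 0 ≤ E := by positivity
  calc ∑ i ∈ range T, α i * pr (k + 1 - 1) i
      ≤ ∑ i ∈ range T, c / ((i : ℝ) + 2) ^ 2 * E := by
        refine sum_le_sum fun i _ => mul_le_mul (hαc i) ?_ ?_ (by positivity)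
        · exact hpr.le_exp_mul_pow hγ0 hγ1 hα0 hα1 hc hαc _ _
        · exact hpr.nonneg hγ0 hγ1.le hα0 hα1 _ _
    _ = c * E * ∑ i ∈ range T, 1 / ((i : ℝ) + 2) ^ 2 := by
        rw [mul_sum]
        exact sum_congr rfl fun i _ => by ring
    _ ≤ c * E := mul_le_of_le_one_right (by positivity) (sum_range_inv_sq_add_two_le_one T)
    _ = exp (1 / (1 - γ)) / (1 - γ) * ((1 - γ) * c) ^ (k + 1) := by
        field_simp
        ring

end SelfloopFreeRecurrence

theorem selfloop_free_quadratic_learning_upper_bound_general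
    (p h γ : ℝ) (hp : 0 < p) (hh : 0 ≤ h) (hph : p + h ≤ 1)
    (hγ0 : 0 < γ) (hγ1 : γ < 1)
    (f : ℕ → ℝ) (hf0 : ∀ l, 0 ≤ f l) (hf1 : ∀ l, f l ≤ 1)
    (α : ℕ → ℝ)
    (hα : ∀ l, α l = p * (1 - f l) / (γ + (1 - γ) * (p + h) * (1 - f l)))
    (pr : ℕ → ℕ → ℝ)
    (hpr00 : pr 0 0 = 1)
    (hpr0 : ∀ i, pr 0 (i + 1) = (1 - α i) * pr 0 i)
    (hprj0 : ∀ j, pr (j + 1) 0 = ((1 - γ) * α 0) ^ (j + 1))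
    (hprrec : ∀ j i, pr (j + 1) (i + 1) =
      (1 - γ) * α (i + 1) * pr j (i + 1) + γ * α i * pr j i + (1 - α i) * pr (j + 1) i)
    (d : ℝ) (hd : 0 < d)
    (hfd : ∀ l : ℕ, 1 - f l ≤ d / ((l : ℝ) + 2) ^ 2)
    (k : ℕ) (hk : 1 ≤ k)
    (T : ℕ) (hT1 : 1 ≤ T) :
    ∑ i ∈ Finset.range T, α i * pr (k - 1) i ≤
      (Real.exp (1 / (1 - γ)) / (1 - γ)) * (T : ℝ) ^ (1 + 1 / (1 - γ))
        * ((1 - γ) * p * d / γ) ^ k := by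
  have h1γ : 0 < 1 - γ := by linarith
  have hu0 : ∀ l, 0 ≤ 1 - f l := fun l => sub_nonneg.2 (hf1 l)
  have hα0 : ∀ l, 0 ≤ α l := fun l => by
    rw [hα]; exact advanceProb_nonneg hp.le hh hγ0.le hγ1.le (hu0 l)
  have hα1 : ∀ l, α l ≤ 1 := fun l => by
    rw [hα]; exact advanceProb_le_one hp.le hh hph hγ0 hγ1.le (hu0 l) (by linarith [hf0 l])
  have hαc : ∀ l : ℕ, α l ≤ p * d / γ / ((l : ℝ) + 2) ^ 2 := fun l => by
    calc α l ≤ p * (1 - f l) / γ := by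
          rw [hα]; exact advanceProb_le_div hp.le hh hγ0 hγ1.le (hu0 l)
      _ ≤ p * (d / ((l : ℝ) + 2) ^ 2) / γ := by gcongr; exact hfd l
      _ = p * d / γ / ((l : ℝ) + 2) ^ 2 := by ring
  have hpr : SelfloopFreeRecurrence γ α pr := ⟨hpr00, hpr0, hprj0, hprrec⟩
  have hT : 1 ≤ (T : ℝ) ^ (1 + 1 / (1 - γ)) :=
    one_le_rpow (by exact_mod_cast hT1) (by positivity)
  calc ∑ i ∈ Finset.range T, α i * pr (k - 1) i
      ≤ exp (1 / (1 - γ)) / (1 - γ) * 1 * ((1 - γ) * p * d / γ) ^ k := by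
        rw [mul_one, show (1 - γ) * p * d / γ = (1 - γ) * (p * d / γ) by ring]
        exact hpr.sum_range_mul_le hγ0.le hγ1 hα0 hα1 (by positivity) hαc hk T
    _ ≤ _ := by gcongr

/-- **Upper bound for the learning rate `1 - f(l) ≤ d/(l+2)²` (Theorem 4, last statement).**
If `1 - f l ≤ d/(l+2)²` for all `l` and `1 ≤ T ≤ e^{-1 + k(1-γ)/γ}`, then
`w̄(k,T) ≤ (e^{1/(1-γ)}/(1-γ)) · T^{1+1/(1-γ)} · ((1-γ)pd/γ)^k`. -/
theorem selfloop_free_quadratic_learning_upper_bound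
    (p h γ : ℝ) (hp : 0 < p) (hh : 0 ≤ h) (hph : p + h ≤ 1)
    (hγ0 : 0 < γ) (hγ1 : γ < 1)
    (f : ℕ → ℝ) (hf0 : ∀ l, 0 ≤ f l) (hf1 : ∀ l, f l ≤ 1)
    (α : ℕ → ℝ)
    (hα : ∀ l, α l = p * (1 - f l) / (γ + (1 - γ) * (p + h) * (1 - f l)))
    (pr : ℕ → ℕ → ℝ)
    (hpr00 : pr 0 0 = 1)
    (hpr0 : ∀ i, pr 0 (i + 1) = (1 - α i) * pr 0 i)
    (hprj0 : ∀ j, pr (j + 1) 0 = ((1 - γ) * α 0) ^ (j + 1))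
    (hprrec : ∀ j i, pr (j + 1) (i + 1) =
      (1 - γ) * α (i + 1) * pr j (i + 1) + γ * α i * pr j i + (1 - α i) * pr (j + 1) i)
    (d : ℝ) (hd : 0 < d)
    (hfd : ∀ l : ℕ, 1 - f l ≤ d / ((l : ℝ) + 2) ^ 2)
    (k : ℕ) (hk : 1 ≤ k)
    (T : ℕ) (hT1 : 1 ≤ T)
    (hT2 : (T : ℝ) ≤ Real.exp (-1 + (k : ℝ) * (1 - γ) / γ)) :
    ∑ i ∈ Finset.range T, α i * pr (k - 1) i ≤
      (Real.exp (1 / (1 - γ)) / (1 - γ)) * (T : ℝ) ^ (1 + 1 / (1 - γ))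
        * ((1 - γ) * p * d / γ) ^ k :=
  selfloop_free_quadratic_learning_upper_bound_general p h γ hp hh hph hγ0 hγ1 f hf0 hf1 α hα pr
    hpr00 hpr0 hprj0 hprrec d hd hfd k hk T hT1
end

section
/- For all integers L ≥ 1 and k* ≥ L + 1: u(k*, L) ≥ 1 - L·x^⌊(k*-1)/L⌋, where x = (1-γ)p/(γ + (1-γ)(p+h)) = (1-γ)p/(1 - (1-γ)(1-(p+h))). -/
/-!
Let `overshoot k m = 1 - u(k, m+1)` be the probability that the chain is beyond column `k` when it
first reaches level `m+1`. It satisfies the same recurrence as `q`, equals `x^k (x+y)` on level `0`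
and decreases in `k`. To overshoot column `a(m+1) + i` at level `m+1`, the chain either overshoots
column `a(m+1)` one level lower, or makes `i` horizontal steps on the new level; hence by induction
on `m`, `overshoot (a(m+1)) m ≤ (m+1) x^a`, which for `m = L-1`, `a = ⌊(k*-1)/L⌋` is the claim.
-/

open Finset

structure IsVisitProb (x y z : ℝ) (q : ℕ → ℕ → ℝ) : Prop where
  zero_zero : q 0 0 = 1
  succ_zero : ∀ n, q (n + 1) 0 = x * q n 0
  zero_succ : ∀ m, q 0 (m + 1) = z * q 0 m
  succ_succ : ∀ n m, q (n + 1) (m + 1) = x * q n (m + 1) + y * q n m + z * q (n + 1) m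

def overshoot (y z : ℝ) (q : ℕ → ℕ → ℝ) (k m : ℕ) : ℝ :=
  1 - ((∑ n ∈ range k, q n m) * (y + z) + q k m * z)

namespace IsVisitProb

variable {x y z : ℝ} {q : ℕ → ℕ → ℝ}

theorem nonneg (hq : IsVisitProb x y z q) (hx : 0 ≤ x) (hy : 0 ≤ y) (hz : 0 ≤ z) (n m : ℕ) :
    0 ≤ q n m := by
  induction m generalizing n with
  | zero =>
    induction n with
    | zero => simp [hq.zero_zero]
    | succ n ih => rw [hq.succ_zero]; positivity
  | succ m ihm =>
    induction n with
    | zero => rw [hq.zero_succ]; exact mul_nonneg hz (ihm 0)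
    | succ n ihn =>
      rw [hq.succ_succ]
      have := ihm n
      have := ihm (n + 1)
      positivity

theorem eq_pow_of_level_zero (hq : IsVisitProb x y z q) (n : ℕ) : q n 0 = x ^ n := by
  induction n with
  | zero => simp [hq.zero_zero]
  | succ n ih => rw [hq.succ_zero, ih, pow_succ']

theorem sum_range_succ_succ (hq : IsVisitProb x y z q) (k m : ℕ) :
    ∑ n ∈ range (k + 1), q n (m + 1) =
      x * ∑ n ∈ range k, q n (m + 1) + y * ∑ n ∈ range k, q n m
        + z * ∑ n ∈ range (k + 1), q n m := by
  rw [sum_range_succ' (fun n => q n (m + 1)), sum_range_succ' (fun n => q n m)]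
  simp only [hq.succ_succ, hq.zero_succ, sum_add_distrib, ← mul_sum]
  ring

section overshoot

variable (hq : IsVisitProb x y z q) (hsum : x + y + z = 1)
include hq hsum

theorem overshoot_succ_succ (k m : ℕ) :
    overshoot y z q (k + 1) (m + 1) =
      x * overshoot y z q k (m + 1) + y * overshoot y z q k m
        + z * overshoot y z q (k + 1) m := by
  simp only [overshoot]
  rw [hq.sum_range_succ_succ, hq.succ_succ]
  linear_combination -hsum

theorem overshoot_level_zero (k : ℕ) : overshoot y z q k 0 = x ^ k * (x + y) := by
  have hgeom := geom_sum_mul x k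
  simp only [overshoot, hq.eq_pow_of_level_zero]
  linear_combination (-(∑ i ∈ range k, x ^ i) - x ^ k) * hsum + hgeom

end overshoot

section bounds

variable (hq : IsVisitProb x y z q) (hx : 0 ≤ x) (hy : 0 ≤ y) (hz : 0 ≤ z)
include hq hx hy hz

theorem overshoot_le_one (k m : ℕ) : overshoot y z q k m ≤ 1 := by
  have hS : 0 ≤ ∑ n ∈ range k, q n m := sum_nonneg fun n _ => hq.nonneg hx hy hz n m
  have := hq.nonneg hx hy hz k m
  simp only [overshoot, sub_le_self_iff]
  positivity

theorem overshoot_antitone (m : ℕ) : Antitone fun k => overshoot y z q k m := by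
  refine antitone_nat_of_succ_le fun k => ?_
  have := hq.nonneg hx hy hz k m
  have := hq.nonneg hx hy hz (k + 1) m
  simp only [overshoot, sum_range_succ]
  nlinarith

/-- A chain that overshoots column `k₀ + i` on level `m + 1` has either overshot column `k₀`
on level `m` or made `i` consecutive horizontal steps since then. -/
theorem overshoot_succ_le (hsum : x + y + z = 1) {m k₀ : ℕ} {B : ℝ} (hB : 0 ≤ B)
    (hlevel : ∀ k, k₀ ≤ k → overshoot y z q k m ≤ B) (i : ℕ) :
    overshoot y z q (k₀ + i) (m + 1) ≤ B + x ^ i := by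
  induction i with
  | zero => simpa using (hq.overshoot_le_one hx hy hz k₀ (m + 1)).trans (by linarith)
  | succ i ih =>
    rw [← add_assoc, hq.overshoot_succ_succ hsum]
    have h₁ := mul_le_mul_of_nonneg_left ih hx
    have h₂ := mul_le_mul_of_nonneg_left (hlevel (k₀ + i) (by omega)) hy
    have h₃ := mul_le_mul_of_nonneg_left (hlevel (k₀ + i + 1) (by omega)) hz
    linear_combination h₁ + h₂ + h₃ + B * hsum

theorem overshoot_le (hsum : x + y + z = 1) (a m k : ℕ) (hk : a * (m + 1) ≤ k) :
    overshoot y z q k m ≤ (m + 1) * x ^ a := by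
  have hx1 : x ≤ 1 := by linarith
  induction m generalizing k with
  | zero =>
    rw [hq.overshoot_level_zero hsum]
    calc x ^ k * (x + y) ≤ x ^ k * 1 := by gcongr; linarith
      _ ≤ x ^ a := by rw [mul_one]; exact pow_le_pow_of_le_one hx hx1 (by omega)
      _ = _ := by simp
  | succ m ih =>
    have hstep := hq.overshoot_succ_le hx hy hz hsum (by positivity) ih a
    calc overshoot y z q k (m + 1) ≤ overshoot y z q (a * (m + 1) + a) (m + 1) :=
          hq.overshoot_antitone hx hy hz (m + 1) (by linarith [Nat.mul_succ a (m + 1)])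
      _ ≤ _ := hstep
      _ = _ := by push_cast; ring

end bounds

end IsVisitProb

theorem delayed_learning_initial_phase_bound_general
    (p h γ : ℝ) (hp : 0 < p) (hh : 0 ≤ h) (hph : p + h ≤ 1)
    (hγ0 : 0 < γ) (hγ1 : γ < 1)
    (x y z : ℝ)
    (hx : x = (1 - γ) * p / (γ + (1 - γ) * (p + h)))
    (hy : y = γ * p / (γ + (1 - γ) * (p + h)))
    (hz : z = 1 - x - y)
    (q : ℕ → ℕ → ℝ)
    (hq00 : q 0 0 = 1)
    (hqn0 : ∀ n, q (n + 1) 0 = x * q n 0)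
    (hq0m : ∀ m, q 0 (m + 1) = z * q 0 m)
    (hqrec : ∀ n m, q (n + 1) (m + 1) = x * q n (m + 1) + y * q n m + z * q (n + 1) m)
    (L kstar : ℕ) (hL : 1 ≤ L) :
    1 - (L : ℝ) * x ^ ((kstar - 1) / L) ≤
      (∑ n ∈ Finset.range kstar, q n (L - 1)) * (y + z) + q kstar (L - 1) * z := by
  have hD : 0 < γ + (1 - γ) * (p + h) := by nlinarith
  have hx0 : 0 ≤ x := hx ▸ div_nonneg (by nlinarith) hD.le
  have hy0 : 0 ≤ y := hy ▸ div_nonneg (by nlinarith) hD.le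
  have hxy : x + y ≤ 1 := by
    rw [hx, hy, ← add_div, div_le_one hD]
    nlinarith
  have hL' : L - 1 + 1 = L := Nat.sub_add_cancel hL
  have hbound := IsVisitProb.overshoot_le ⟨hq00, hqn0, hq0m, hqrec⟩ hx0 hy0 (by linarith)
    (by linarith) ((kstar - 1) / L) (L - 1) kstar
    (by rw [hL']; exact (Nat.div_mul_le_self _ _).trans (Nat.sub_le _ _))
  rw [overshoot, ← Nat.cast_add_one, hL'] at hbound
  linarith

/-- **Delayed learning: containment of initial-phase progress (Theorem 5, lower bound on `u`).**
During the no-learning phase the conditional chain has constant transition probabilities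
`x` (horizontal), `y` (diagonal), `z` (vertical); `u(k*,L)` is the probability that the
attacker's progress is at most `k*` when level `L` is first reached.  Then
`u(k*,L) ≥ 1 - L·x^⌊(k*-1)/L⌋` for all integers `L ≥ 1` and `k* ≥ L+1`. -/
theorem delayed_learning_initial_phase_bound
    (p h γ : ℝ) (hp : 0 < p) (hh : 0 ≤ h) (hph : p + h ≤ 1)
    (hγ0 : 0 < γ) (hγ1 : γ < 1)
    (x y z : ℝ)
    (hx : x = (1 - γ) * p / (γ + (1 - γ) * (p + h)))
    (hy : y = γ * p / (γ + (1 - γ) * (p + h)))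
    (hz : z = 1 - x - y)
    (q : ℕ → ℕ → ℝ)
    (hq00 : q 0 0 = 1)
    (hqn0 : ∀ n, q (n + 1) 0 = x * q n 0)
    (hq0m : ∀ m, q 0 (m + 1) = z * q 0 m)
    (hqrec : ∀ n m, q (n + 1) (m + 1) = x * q n (m + 1) + y * q n m + z * q (n + 1) m)
    (L kstar : ℕ) (hL : 1 ≤ L) (hkstar : L + 1 ≤ kstar) :
    1 - (L : ℝ) * x ^ ((kstar - 1) / L) ≤
      (∑ n ∈ Finset.range kstar, q n (L - 1)) * (y + z) + q kstar (L - 1) * z :=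
  delayed_learning_initial_phase_bound_general p h γ hp hh hph hγ0 hγ1 x y z hx hy hz q hq00 hqn0
    hq0m hqrec L kstar hL
end
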